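/- arXiv:1112.0685 — 7 statements merged into one kernel-verified Lean document; each statement's English description precedes it below -/
import Mathlib

section
/- Let f be a sense-preserving K-quasiregular harmonic mapping on the unit disk D with f(D) ⊂ D. Then for all z ∈ D, Λ_f(z) = |f_z(z)| + |f_{z̄}(z)| ≤ K (1 - |f(z)|²)/(1 - |z|²). -/
open Metric Set Complex Filter

namespace SPQH

/-- real inner product on ℂ -/
noncomputable def dot (w v : ℂ) : ℝ := w.re * v.re + w.im * v.im

lemma normSq_eq_dot (w : ℂ) : Complex.normSq w = dot w w := by
  simp [dot, Complex.normSq_apply]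

lemma hasDerivAt_re {F : ℝ → ℂ} {F' : ℂ} {t : ℝ} (hF : HasDerivAt F F' t) :
    HasDerivAt (fun s => (F s).re) F'.re t :=
  (Complex.reCLM.hasFDerivAt.comp_hasDerivAt t hF :)

lemma hasDerivAt_im {F : ℝ → ℂ} {F' : ℂ} {t : ℝ} (hF : HasDerivAt F F' t) :
    HasDerivAt (fun s => (F s).im) F'.im t :=
  (Complex.imCLM.hasFDerivAt.comp_hasDerivAt t hF :)

lemma hasDerivAt_dot {F V : ℝ → ℂ} {F' V' : ℂ} {t : ℝ}
    (hF : HasDerivAt F F' t) (hV : HasDerivAt V V' t) :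
    HasDerivAt (fun s => dot (F s) (V s)) (dot F' (V t) + dot (F t) V') t := by
  have := ((hasDerivAt_re hF).mul (hasDerivAt_re hV)).add
    ((hasDerivAt_im hF).mul (hasDerivAt_im hV))
  exact this.congr_deriv (by simp only [dot]; ring)

lemma hasDerivAt_normSq' {F : ℝ → ℂ} {F' : ℂ} {t : ℝ} (hF : HasDerivAt F F' t) :
    HasDerivAt (fun s => Complex.normSq (F s)) (2 * dot (F t) F') t := by
  have := hasDerivAt_dot hF hF
  simp only [normSq_eq_dot]
  convert this using 1
  simp [dot]; ring

lemma hasDerivAt_conj {F : ℝ → ℂ} {F' : ℂ} {t : ℝ} (hF : HasDerivAt F F' t) :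
    HasDerivAt (fun s => (starRingEnd ℂ) (F s)) ((starRingEnd ℂ) F') t := by
  have := (Complex.conjCLE.toContinuousLinearMap.hasFDerivAt.comp_hasDerivAt t hF :)
  simpa [Function.comp_def] using this

lemma hasDerivAt_line (p e : ℂ) (t : ℝ) : HasDerivAt (fun s : ℝ => p + s • e) e t := by
  simpa using (hasDerivAt_id t).smul_const e |>.const_add p

lemma hasDerivAt_comp_line {u : ℂ → ℂ} {u' p e : ℂ} {t : ℝ}
    (hu : HasDerivAt u u' (p + t • e)) :
    HasDerivAt (fun s : ℝ => u (p + s • e)) (e * u') t := by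
  have := HasDerivAt.scomp (𝕜 := ℝ) (𝕜' := ℂ) t hu (hasDerivAt_line p e t)
  simpa [smul_eq_mul, Function.comp_def] using this

lemma continuousAt_dot {X Y : ℝ → ℂ} {t : ℝ} (hX : ContinuousAt X t)
    (hY : ContinuousAt Y t) : ContinuousAt (fun s => dot (X s) (Y s)) t := by
  have h1 : ContinuousAt (fun s => (X s).re * (Y s).re + (X s).im * (Y s).im) t :=
    ((Complex.continuous_re.continuousAt.comp hX).mul
      (Complex.continuous_re.continuousAt.comp hY)).add
    ((Complex.continuous_im.continuousAt.comp hX).mul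
      (Complex.continuous_im.continuousAt.comp hY))
  exact h1

lemma secondDeriv_nonpos_of_isLocalMax {φ ψ χ : ℝ → ℝ}
    (h1 : ∀ᶠ t in nhds (0:ℝ), HasDerivAt φ (ψ t) t)
    (h2 : ∀ᶠ t in nhds (0:ℝ), HasDerivAt ψ (χ t) t)
    (hχ : ContinuousAt χ 0)
    (hmax : IsLocalMax φ 0) : χ 0 ≤ 0 := by
  by_contra hc
  push_neg at hc
  have hev : ∀ᶠ t in nhds (0:ℝ), 0 < χ t := hχ (lt_mem_nhds hc)
  have hall := h1.and (h2.and (hev.and hmax))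
  rw [Metric.eventually_nhds_iff] at hall
  obtain ⟨ε, hε, hP⟩ := hall
  have hP' : ∀ t : ℝ, |t| < ε → HasDerivAt φ (ψ t) t ∧ HasDerivAt ψ (χ t) t ∧
      0 < χ t ∧ φ t ≤ φ 0 := by
    intro t ht
    have := hP (y := t) (by simpa [Real.dist_eq] using ht)
    exact ⟨this.1, this.2.1, this.2.2.1, this.2.2.2⟩
  set δ := ε/2 with hδ
  have hδpos : 0 < δ := by positivity
  have hmem : ∀ t ∈ Icc (0:ℝ) δ, |t| < ε := by
    intro t ht
    rw [abs_lt]; constructor <;> nlinarith [ht.1, ht.2]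
  have hψ0 : ψ 0 = 0 := by
    have := (hP' 0 (by simpa using hε)).1.deriv
    rw [← this]; exact hmax.deriv_eq_zero
  have hψmono : StrictMonoOn ψ (Icc 0 δ) := by
    apply strictMonoOn_of_deriv_pos (convex_Icc _ _)
    · intro t ht
      exact ((hP' t (hmem t ht)).2.1).continuousAt.continuousWithinAt
    · intro t ht
      rw [interior_Icc] at ht
      have h := hP' t (hmem t ⟨le_of_lt ht.1, le_of_lt ht.2⟩)
      rw [h.2.1.deriv]; exact h.2.2.1
  have hψpos : ∀ t ∈ Ioo (0:ℝ) δ, 0 < ψ t := by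
    intro t ht
    have := hψmono (left_mem_Icc.2 hδpos.le) ⟨ht.1.le, ht.2.le⟩ ht.1
    rwa [hψ0] at this
  have hφmono : StrictMonoOn φ (Icc 0 δ) := by
    apply strictMonoOn_of_deriv_pos (convex_Icc _ _)
    · intro t ht
      exact ((hP' t (hmem t ht)).1).continuousAt.continuousWithinAt
    · intro t ht
      rw [interior_Icc] at ht
      have h := hP' t (hmem t ⟨le_of_lt ht.1, le_of_lt ht.2⟩)
      rw [h.1.deriv]; exact hψpos t ht
  have hA := hφmono (left_mem_Icc.2 hδpos.le) (right_mem_Icc.2 hδpos.le) hδpos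
  have hB := (hP' δ (hmem δ (right_mem_Icc.2 hδpos.le))).2.2.2
  linarith

set_option maxHeartbeats 4000000 in
lemma core (k : ℝ) (hk0 : 0 ≤ k) (hk1 : k < 1) (h g : ℂ → ℂ)
    (hh : DifferentiableOn ℂ h (ball (0:ℂ) 1))
    (hg : DifferentiableOn ℂ g (ball (0:ℂ) 1))
    (hne : ∀ z ∈ ball (0:ℂ) 1, deriv h z ≠ 0)
    (hqr : ∀ z ∈ ball (0:ℂ) 1, ‖deriv g z‖ ≤ k * ‖deriv h z‖)
    (hmap : ∀ z ∈ ball (0:ℂ) 1, Complex.normSq (h z + (starRingEnd ℂ) (g z)) < 1) :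
    ∀ z₀ ∈ ball (0:ℂ) 1,
      (1 - k) * ‖deriv h z₀‖ * (1 - Complex.normSq z₀)
        ≤ 1 - Complex.normSq (h z₀ + (starRingEnd ℂ) (g z₀)) := by
  have Hh : AnalyticOnNhd ℂ h (ball 0 1) := hh.analyticOnNhd isOpen_ball
  have Hh1 : AnalyticOnNhd ℂ (deriv h) (ball 0 1) := Hh.deriv
  have Hh2 : AnalyticOnNhd ℂ (deriv (deriv h)) (ball 0 1) := Hh1.deriv
  have Hh3 : AnalyticOnNhd ℂ (deriv (deriv (deriv h))) (ball 0 1) := Hh2.deriv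
  have Hg : AnalyticOnNhd ℂ g (ball 0 1) := hg.analyticOnNhd isOpen_ball
  have Hg1 : AnalyticOnNhd ℂ (deriv g) (ball 0 1) := Hg.deriv
  have Hg2 : AnalyticOnNhd ℂ (deriv (deriv g)) (ball 0 1) := Hg1.deriv
  have Dh : ∀ z ∈ ball (0:ℂ) 1, HasDerivAt h (deriv h z) z :=
    fun z hz => (Hh z hz).differentiableAt.hasDerivAt
  have Dh1 : ∀ z ∈ ball (0:ℂ) 1, HasDerivAt (deriv h) (deriv (deriv h) z) z :=
    fun z hz => (Hh1 z hz).differentiableAt.hasDerivAt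
  have Dh2 : ∀ z ∈ ball (0:ℂ) 1, HasDerivAt (deriv (deriv h)) (deriv (deriv (deriv h)) z) z :=
    fun z hz => (Hh2 z hz).differentiableAt.hasDerivAt
  have Dg : ∀ z ∈ ball (0:ℂ) 1, HasDerivAt g (deriv g z) z :=
    fun z hz => (Hg z hz).differentiableAt.hasDerivAt
  have Dg1 : ∀ z ∈ ball (0:ℂ) 1, HasDerivAt (deriv g) (deriv (deriv g) z) z :=
    fun z hz => (Hg1 z hz).differentiableAt.hasDerivAt
  -- continuity facts
  have Cdh : ContinuousOn (deriv h) (ball (0:ℂ) 1) :=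
    fun z hz => ((Hh1 z hz).differentiableAt.continuousAt).continuousWithinAt
  have CF : ContinuousOn (fun z => h z + (starRingEnd ℂ) (g z)) (ball (0:ℂ) 1) :=
    hh.continuousOn.add (Complex.continuous_conj.comp_continuousOn hg.continuousOn)
  -- main comparison on disks of radius r
  have key : ∀ r : ℝ, 0 < r → r < 1 → ∀ z ∈ closedBall (0:ℂ) r,
      (1 - k) * ‖deriv h z‖ * (r^2 - Complex.normSq z)
        ≤ r * (1 - Complex.normSq (h z + (starRingEnd ℂ) (g z))) := by
    intro r hr0 hr1
    have hsub : closedBall (0:ℂ) r ⊆ ball 0 1 := closedBall_subset_ball hr1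
    have hsub' : ball (0:ℂ) r ⊆ ball 0 1 := ball_subset_ball hr1.le
    have hρpos : ∀ z ∈ closedBall (0:ℂ) r,
        0 < 1 - Complex.normSq (h z + (starRingEnd ℂ) (g z)) :=
      fun z hz => sub_pos.2 (hmap z (hsub hz))
    have hρ₀pos : ∀ z ∈ ball (0:ℂ) r, 0 < r^2 - Complex.normSq z := by
      intro z hz
      have h1 : ‖z‖ < r := mem_ball_zero_iff.mp hz
      have h2 : Complex.normSq z = ‖z‖ ^ 2 := (Complex.sq_norm z).symm
      nlinarith [norm_nonneg z]
    set Ψ : ℂ → ℝ := fun z => (1 - k) * ‖deriv h z‖ * (r^2 - Complex.normSq z) /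
        (1 - Complex.normSq (h z + (starRingEnd ℂ) (g z))) with hΨdef
    have hΨcont : ContinuousOn Ψ (closedBall (0:ℂ) r) := by
      apply ContinuousOn.div
      · exact ((continuousOn_const.mul
          ((continuous_norm.comp_continuousOn (Cdh.mono hsub)))).mul
          (continuousOn_const.sub (Complex.continuous_normSq.comp_continuousOn
            (continuousOn_id))))
      · exact continuousOn_const.sub
          (Complex.continuous_normSq.comp_continuousOn (CF.mono hsub))
      · exact fun z hz => (hρpos z hz).ne'
    obtain ⟨p, hpmem, hpmax⟩ := (isCompact_closedBall (0:ℂ) r).exists_isMaxOn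
      ⟨0, by simp [hr0.le]⟩ hΨcont
    have main : Ψ p ≤ r := by
      by_contra hcon
      push_neg at hcon
      have hΨppos : 0 < Ψ p := lt_trans hr0 hcon
      have hpball : p ∈ ball (0:ℂ) r := by
        rcases eq_or_lt_of_le (mem_closedBall_zero_iff.mp hpmem) with heq | hlt
        · exfalso
          have : r^2 - Complex.normSq p = 0 := by
            rw [← Complex.sq_norm, heq]; ring
          rw [hΨdef] at hΨppos
          simp only [this, mul_zero, zero_div] at hΨppos
          exact lt_irrefl 0 hΨppos
        · exact mem_ball_zero_iff.2 hlt
      have hp1 : p ∈ ball (0:ℂ) 1 := hsub' hpball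
      have hρp : 0 < 1 - Complex.normSq (h p + (starRingEnd ℂ) (g p)) := hρpos p hpmem
      have hρ₀p : 0 < r^2 - Complex.normSq p := hρ₀pos p hpball
      have hane : deriv h p ≠ 0 := hne p hp1
      have hDapos : 0 < Complex.normSq (deriv h p) := Complex.normSq_pos.2 hane
      have hLmax : IsLocalMax (fun z => Real.log (Complex.normSq (deriv h z)) / 2
          - Real.log (1 - Complex.normSq (h z + (starRingEnd ℂ) (g z)))
          + Real.log (r^2 - Complex.normSq z)) p := by
        have hid : ∀ w ∈ ball (0:ℂ) r, Real.log (Complex.normSq (deriv h w)) / 2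
            - Real.log (1 - Complex.normSq (h w + (starRingEnd ℂ) (g w)))
            + Real.log (r^2 - Complex.normSq w) = Real.log (Ψ w) - Real.log (1-k) := by
          intro w hw
          have h1 : (0:ℝ) < 1 - k := by linarith
          have h2 : 0 < ‖deriv h w‖ := norm_pos_iff.mpr (hne w (hsub' hw))
          have h3 := hρ₀pos w hw
          have h4 := hρpos w (ball_subset_closedBall hw)
          have h5 : Real.log (Complex.normSq (deriv h w))
              = 2 * Real.log (‖deriv h w‖) := by
            rw [← Complex.sq_norm, Real.log_pow]; push_cast; ring
          simp only [hΨdef]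
          rw [Real.log_div (by positivity) h4.ne', Real.log_mul (by positivity) h3.ne',
              Real.log_mul h1.ne' h2.ne', h5]
          ring
        filter_upwards [isOpen_ball.mem_nhds hpball] with z hz
        have hle : Ψ z ≤ Ψ p := hpmax (ball_subset_closedBall hz)
        have hΨzpos : 0 < Ψ z := by
          have h2 : 0 < ‖deriv h z‖ := norm_pos_iff.mpr (hne z (hsub' hz))
          have h3 := hρ₀pos z hz
          have h4 := hρpos z (ball_subset_closedBall hz)
          have h1 : (0:ℝ) < 1 - k := by linarith
          simp only [hΨdef]
          positivity
        have hlog : Real.log (Ψ z) ≤ Real.log (Ψ p) := Real.log_le_log hΨzpos hle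
        simp only [hid z hz, hid p hpball]
        linarith
      have dir : ∀ e : ℂ, e = 1 ∨ e = Complex.I →
          (2 * (dot (e * deriv (deriv h) p) (e * deriv (deriv h) p) + dot (deriv h p) (e * (e * deriv (deriv (deriv h)) p))) * Complex.normSq (deriv h p) - 2 * dot (deriv h p) (e * deriv (deriv h) p) * (2 * dot (deriv h p) (e * deriv (deriv h) p))) * ((1 - Complex.normSq (h p + (starRingEnd ℂ) (g p))) ^ 2 * (r ^ 2 - Complex.normSq p) ^ 2) - 2 * ((-(2 * (dot (e * deriv h p + (starRingEnd ℂ) (e * deriv g p)) (e * deriv h p + (starRingEnd ℂ) (e * deriv g p)) + dot (h p + (starRingEnd ℂ) (g p)) (e * (e * deriv (deriv h) p) + (starRingEnd ℂ) (e * (e * deriv (deriv g) p))))) * (1 - Complex.normSq (h p + (starRingEnd ℂ) (g p))) - -(2 * dot (h p + (starRingEnd ℂ) (g p)) (e * deriv h p + (starRingEnd ℂ) (e * deriv g p))) * -(2 * dot (h p + (starRingEnd ℂ) (g p)) (e * deriv h p + (starRingEnd ℂ) (e * deriv g p)))) * (Complex.normSq (deriv h p) ^ 2 * (r ^ 2 -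 Complex.normSq p) ^ 2)) + 2 * ((-(2 * (dot e e + dot p 0)) * (r ^ 2 - Complex.normSq p) - -(2 * dot p e) * -(2 * dot p e)) * (Complex.normSq (deriv h p) ^ 2 * (1 - Complex.normSq (h p + (starRingEnd ℂ) (g p))) ^ 2)) ≤ 0 := by
        intro e he
        have hpt : p + (0:ℝ) • e = p := by simp
        have cline : Continuous (fun s : ℝ => p + s • e) :=
          continuous_const.add (continuous_id.smul continuous_const)
        have hevt : ∀ᶠ t : ℝ in nhds 0, p + t • e ∈ ball (0:ℂ) r := by
          have h0 : p + (0:ℝ) • e ∈ ball (0:ℂ) r := by rw [hpt]; exact hpball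
          exact cline.continuousAt.eventually_mem (isOpen_ball.mem_nhds h0)
        have h1ev : ∀ᶠ t : ℝ in nhds 0, HasDerivAt (fun t : ℝ => Real.log (Complex.normSq (deriv h (p + t • e))) / 2 - Real.log (1 - Complex.normSq (h (p + t • e) + (starRingEnd ℂ) (g (p + t • e)))) + Real.log (r ^ 2 - Complex.normSq (p + t • e)))
            ((fun t : ℝ => 2 * dot (deriv h (p + t • e)) (e * deriv (deriv h) (p + t • e)) / Complex.normSq (deriv h (p + t • e)) / 2 - -(2 * dot (h (p + t • e) + (starRingEnd ℂ) (g (p + t • e))) (e * deriv h (p + t • e) + (starRingEnd ℂ) (e * deriv g (p + t • e)))) / (1 - Complex.normSq (h (p + t • e) + (starRingEnd ℂ) (g (p + t • e)))) + -(2 * dot (p + t • e) e) / (r ^ 2 - Complex.normSq (p + t • e))) t) t := by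
          filter_upwards [hevt] with t ht
          have hct1 : p + t • e ∈ ball (0:ℂ) 1 := hsub' ht
          have hane' : deriv h (p + t • e) ≠ 0 := hne _ hct1
          have hDne : Complex.normSq (deriv h (p + t • e)) ≠ 0 := (Complex.normSq_pos.2 hane').ne'
          have hρne : 1 - Complex.normSq (h (p + t • e) + (starRingEnd ℂ) (g (p + t • e))) ≠ 0 :=
            (hρpos _ (ball_subset_closedBall ht)).ne'
          have hρ₀ne : r ^ 2 - Complex.normSq (p + t • e) ≠ 0 := (hρ₀pos _ ht).ne'
          have h1c : HasDerivAt (fun s : ℝ => deriv h (p + s • e))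
              (e * deriv (deriv h) (p + t • e)) t := hasDerivAt_comp_line (Dh1 _ hct1)
          have hFc : HasDerivAt (fun s : ℝ => h (p + s • e) + (starRingEnd ℂ) (g (p + s • e)))
              (e * deriv h (p + t • e) + (starRingEnd ℂ) (e * deriv g (p + t • e))) t :=
            (hasDerivAt_comp_line (Dh _ hct1)).add
              (hasDerivAt_conj (hasDerivAt_comp_line (Dg _ hct1)))
          exact ((((hasDerivAt_normSq' h1c).log hDne).div_const 2).sub
            (((hasDerivAt_normSq' hFc).const_sub 1).log hρne)).add
            (((hasDerivAt_normSq' (hasDerivAt_line p e t)).const_sub (r ^ 2)).log hρ₀ne)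
        have h2ev : ∀ᶠ t : ℝ in nhds 0, HasDerivAt (fun t : ℝ => 2 * dot (deriv h (p + t • e)) (e * deriv (deriv h) (p + t • e)) / Complex.normSq (deriv h (p + t • e)) / 2 - -(2 * dot (h (p + t • e) + (starRingEnd ℂ) (g (p + t • e))) (e * deriv h (p + t • e) + (starRingEnd ℂ) (e * deriv g (p + t • e)))) / (1 - Complex.normSq (h (p + t • e) + (starRingEnd ℂ) (g (p + t • e)))) + -(2 * dot (p + t • e) e) / (r ^ 2 - Complex.normSq (p + t • e)))
            ((fun t : ℝ => (2 * (dot (e * deriv (deriv h) (p + t • e)) (e * deriv (deriv h) (p + t • e)) + dot (deriv h (p + t • e)) (e * (e * deriv (deriv (deriv h)) (p + t • e)))) * Complex.normSq (deriv h (p + t • e)) - 2 * dot (deriv h (p + t • e)) (e * deriv (deriv h) (p + t • e)) * (2 * dot (deriv h (p + t • e)) (e * deriv (deriv h) (p + t • e)))) / Complex.normSq (deriv h (p + t • e)) ^ 2 / 2 - (-(2 * (dot (e * deriv h (p + t • e) + (starRingEnd ℂ) (e * deriv g (p + t • e))) (e * deriv h (p + t • e) + (starRingEnd ℂ) (e *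 deriv g (p + t • e))) + dot (h (p + t • e) + (starRingEnd ℂ) (g (p + t • e))) (e * (e * deriv (deriv h) (p + t • e)) + (starRingEnd ℂ) (e * (e * deriv (deriv g) (p + t • e)))))) * (1 - Complex.normSq (h (p + t • e) + (starRingEnd ℂ) (g (p + t • e)))) - -(2 * dot (h (p + t • e) + (starRingEnd ℂ) (g (p + t • e))) (e * deriv h (p + t • e) + (starRingEnd ℂ) (e * deriv g (p + t • e)))) * -(2 * dot (h (p + t • e) + (starRingEnd ℂ) (g (p + t • e))) (e * deriv h (p + t • e) + (starRingEnd ℂ) (e * deriv g (p + t • e))))) / (1 - Complex.normSq (h (p + t • e) + (starRingEnd ℂ) (g (p + t • e)))) ^ 2 + (-(2 * (dot e e + dot (p + t • e) 0)) * (r ^ 2 - Complex.normSq (p + t • e)) - -(2 * dot (p + t • e) e) * -(2 * dot (p + t • e) e)) / (r ^ 2 - Complex.normSq (p + t • e)) ^ 2) t) t := by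
          filter_upwards [hevt] with t ht
          have hct1 : p + t • e ∈ ball (0:ℂ) 1 := hsub' ht
          have hane' : deriv h (p + t • e) ≠ 0 := hne _ hct1
          have hDne : Complex.normSq (deriv h (p + t • e)) ≠ 0 := (Complex.normSq_pos.2 hane').ne'
          have hρne : 1 - Complex.normSq (h (p + t • e) + (starRingEnd ℂ) (g (p + t • e))) ≠ 0 :=
            (hρpos _ (ball_subset_closedBall ht)).ne'
          have hρ₀ne : r ^ 2 - Complex.normSq (p + t • e) ≠ 0 := (hρ₀pos _ ht).ne'
          have h1c : HasDerivAt (fun s : ℝ => deriv h (p + s • e))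
              (e * deriv (deriv h) (p + t • e)) t := hasDerivAt_comp_line (Dh1 _ hct1)
          have hFc : HasDerivAt (fun s : ℝ => h (p + s • e) + (starRingEnd ℂ) (g (p + s • e)))
              (e * deriv h (p + t • e) + (starRingEnd ℂ) (e * deriv g (p + t • e))) t :=
            (hasDerivAt_comp_line (Dh _ hct1)).add
              (hasDerivAt_conj (hasDerivAt_comp_line (Dg _ hct1)))
          have hV : HasDerivAt (fun s : ℝ => e * deriv (deriv h) (p + s • e))
              (e * (e * deriv (deriv (deriv h)) (p + t • e))) t :=
            (hasDerivAt_comp_line (Dh2 _ hct1)).const_mul e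
          have hNum : HasDerivAt (fun s : ℝ => 2 * dot (deriv h (p + s • e)) (e * deriv (deriv h) (p + s • e)))
              (2 * (dot (e * deriv (deriv h) (p + t • e)) (e * deriv (deriv h) (p + t • e)) +
                dot (deriv h (p + t • e)) (e * (e * deriv (deriv (deriv h)) (p + t • e))))) t :=
            (hasDerivAt_dot h1c hV).const_mul 2
          have hq1 := (hNum.div (hasDerivAt_normSq' h1c) hDne).div_const 2
          have hFdf : HasDerivAt (fun s : ℝ => e * deriv h (p + s • e) + (starRingEnd ℂ) (e * deriv g (p + s • e)))
              (e * (e * deriv (deriv h) (p + t • e)) + (starRingEnd ℂ) (e * (e * deriv (deriv g) (p + t • e)))) t :=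
            ((hasDerivAt_comp_line (Dh1 _ hct1)).const_mul e).add
              (hasDerivAt_conj ((hasDerivAt_comp_line (Dg1 _ hct1)).const_mul e))
          have hNum2 := ((hasDerivAt_dot hFc hFdf).const_mul 2).neg
          have hq2 := hNum2.div ((hasDerivAt_normSq' hFc).const_sub 1) hρne
          have hNum3 := ((hasDerivAt_dot (hasDerivAt_line p e t) (hasDerivAt_const t e)).const_mul 2).neg
          have hq3 := hNum3.div ((hasDerivAt_normSq' (hasDerivAt_line p e t)).const_sub (r ^ 2)) hρ₀ne
          exact (hq1.sub hq2).add hq3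
        have mkCA : ∀ u : ℂ → ℂ, ContinuousAt u p → ContinuousAt (fun s : ℝ => u (p + s • e)) 0 := by
          intro u hu
          exact ContinuousAt.comp (by rwa [hpt]) cline.continuousAt
        have CAh1 : ContinuousAt (fun s : ℝ => deriv h (p + s • e)) 0 :=
          mkCA _ (Hh1 p hp1).differentiableAt.continuousAt
        have CAh2 : ContinuousAt (fun s : ℝ => deriv (deriv h) (p + s • e)) 0 :=
          mkCA _ (Hh2 p hp1).differentiableAt.continuousAt
        have CAh3 : ContinuousAt (fun s : ℝ => deriv (deriv (deriv h)) (p + s • e)) 0 :=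
          mkCA _ (Hh3 p hp1).differentiableAt.continuousAt
        have CAg1 : ContinuousAt (fun s : ℝ => deriv g (p + s • e)) 0 :=
          mkCA _ (Hg1 p hp1).differentiableAt.continuousAt
        have CAg2 : ContinuousAt (fun s : ℝ => deriv (deriv g) (p + s • e)) 0 :=
          mkCA _ (Hg2 p hp1).differentiableAt.continuousAt
        have CAF : ContinuousAt (fun s : ℝ => h (p + s • e) + (starRingEnd ℂ) (g (p + s • e))) 0 :=
          mkCA (fun z => h z + (starRingEnd ℂ) (g z))
            ((Hh p hp1).differentiableAt.continuousAt.add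
              (Complex.continuous_conj.continuousAt.comp (Hg p hp1).differentiableAt.continuousAt))
        have CAc : ContinuousAt (fun s : ℝ => p + s • e) 0 := cline.continuousAt
        have CAFd : ContinuousAt (fun s : ℝ => e * deriv h (p + s • e) + (starRingEnd ℂ) (e * deriv g (p + s • e))) 0 :=
          (continuousAt_const.mul CAh1).add
            (Complex.continuous_conj.continuousAt.comp (continuousAt_const.mul CAg1))
        have CAFdd : ContinuousAt (fun s : ℝ => e * (e * deriv (deriv h) (p + s • e)) + (starRingEnd ℂ) (e * (e * deriv (deriv g) (p + s • e)))) 0 :=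
          (continuousAt_const.mul (continuousAt_const.mul CAh2)).add
            (Complex.continuous_conj.continuousAt.comp (continuousAt_const.mul (continuousAt_const.mul CAg2)))
        have CAD : ContinuousAt (fun s : ℝ => Complex.normSq (deriv h (p + s • e))) 0 :=
          Complex.continuous_normSq.continuousAt.comp CAh1
        have CAρ : ContinuousAt (fun s : ℝ => 1 - Complex.normSq (h (p + s • e) + (starRingEnd ℂ) (g (p + s • e)))) 0 :=
          continuousAt_const.sub (Complex.continuous_normSq.continuousAt.comp CAF)
        have CAρ₀ : ContinuousAt (fun s : ℝ => r ^ 2 - Complex.normSq (p + s • e)) 0 :=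
          continuousAt_const.sub (Complex.continuous_normSq.continuousAt.comp CAc)
        have hDne0 : (fun s : ℝ => Complex.normSq (deriv h (p + s • e)) ^ 2) 0 ≠ 0 := by
          simp only [hpt]; positivity
        have hρne0 : (fun s : ℝ => (1 - Complex.normSq (h (p + s • e) + (starRingEnd ℂ) (g (p + s • e)))) ^ 2) 0 ≠ 0 := by
          simp only [hpt]; positivity
        have hρ₀ne0 : (fun s : ℝ => (r ^ 2 - Complex.normSq (p + s • e)) ^ 2) 0 ≠ 0 := by
          simp only [hpt]; positivity
        have hχc : ContinuousAt (fun t : ℝ => (2 * (dot (e * deriv (deriv h) (p + t • e)) (e * deriv (deriv h) (p + t • e)) + dot (deriv h (p + t • e)) (e * (e * deriv (deriv (deriv h)) (p + t • e)))) * Complex.normSq (deriv h (p + t • e)) - 2 * dot (deriv h (p + t • e)) (e * deriv (deriv h) (p + t • e)) * (2 * dot (deriv h (p + t • e)) (e * deriv (deriv h) (p + t • e)))) / Complex.normSq (deriv h (p + t • e)) ^ 2 / 2 - (-(2 * (dot (e * deriv h (p + t • e) + (starRingEnd ℂ) (e * deriv g (p + t • e))) (e * deriv h (p + t • e) + (starRingEnd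 ℂ) (e * deriv g (p + t • e))) + dot (h (p + t • e) + (starRingEnd ℂ) (g (p + t • e))) (e * (e * deriv (deriv h) (p + t • e)) + (starRingEnd ℂ) (e * (e * deriv (deriv g) (p + t • e)))))) * (1 - Complex.normSq (h (p + t • e) + (starRingEnd ℂ) (g (p + t • e)))) - -(2 * dot (h (p + t • e) + (starRingEnd ℂ) (g (p + t • e))) (e * deriv h (p + t • e) + (starRingEnd ℂ) (e * deriv g (p + t • e)))) * -(2 * dot (h (p + t • e) + (starRingEnd ℂ) (g (p + t • e))) (e * deriv h (p + t • e) + (starRingEnd ℂ) (e * deriv g (p + t • e))))) / (1 - Complex.normSq (h (p + t • e) + (starRingEnd ℂ) (g (p + t • e)))) ^ 2 + (-(2 * (dot e e + dot (p + t • e) 0)) * (r ^ 2 - Complex.normSq (p + t • e)) - -(2 * dot (p + t • e) e) * -(2 * dot (p + t • e) e)) / (r ^ 2 - Complex.normSq (p + t • e)) ^ 2) 0 := by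
          refine ContinuousAt.add (ContinuousAt.sub (ContinuousAt.div_const (ContinuousAt.div ?_ (CAD.pow 2) hDne0) 2) (ContinuousAt.div ?_ (CAρ.pow 2) hρne0)) (ContinuousAt.div ?_ (CAρ₀.pow 2) hρ₀ne0)
          · exact ((continuousAt_const.mul ((continuousAt_dot (continuousAt_const.mul CAh2) (continuousAt_const.mul CAh2)).add (continuousAt_dot CAh1 (continuousAt_const.mul (continuousAt_const.mul CAh3))))).mul CAD).sub ((continuousAt_const.mul (continuousAt_dot CAh1 (continuousAt_const.mul CAh2))).mul (continuousAt_const.mul (continuousAt_dot CAh1 (continuousAt_const.mul CAh2))))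
          · exact (((continuousAt_const.mul ((continuousAt_dot CAFd CAFd).add (continuousAt_dot CAF CAFdd))).neg).mul CAρ).sub (((continuousAt_const.mul (continuousAt_dot CAF CAFd)).neg).mul ((continuousAt_const.mul (continuousAt_dot CAF CAFd)).neg))
          · exact (((continuousAt_const.mul ((continuousAt_dot continuousAt_const continuousAt_const).add (continuousAt_dot CAc continuousAt_const))).neg).mul CAρ₀).sub (((continuousAt_const.mul (continuousAt_dot CAc continuousAt_const)).neg).mul ((continuousAt_const.mul (continuousAt_dot CAc continuousAt_const)).neg))
        have hmax0 : IsLocalMax (fun t : ℝ => Real.log (Complex.normSq (deriv h (p + t • e))) / 2 - Real.log (1 - Complex.normSq (h (p + t • e) + (starRingEnd ℂ) (g (p + t • e)))) + Real.log (r ^ 2 - Complex.normSq (p + t • e))) 0 := by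
          have hc0 : Filter.Tendsto (fun s : ℝ => p + s • e) (nhds 0) (nhds p) := by
            have h1 : Filter.Tendsto (fun s : ℝ => p + s • e) (nhds 0)
                (nhds (p + (0:ℝ) • e)) := cline.continuousAt
            rwa [hpt] at h1
          have hev2 := hc0.eventually hLmax
          filter_upwards [hev2] with t ht
          simpa [hpt] using ht
        have hsd := secondDeriv_nonpos_of_isLocalMax h1ev h2ev hχc hmax0
        simp only [hpt] at hsd
        have hM : (0:ℝ) ≤ 2 * Complex.normSq (deriv h p) ^ 2 * (1 - Complex.normSq (h p + (starRingEnd ℂ) (g p))) ^ 2 * (r ^ 2 - Complex.normSq p) ^ 2 := by positivity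
        have hprod := mul_le_mul_of_nonneg_right hsd hM
        rw [zero_mul] at hprod
        refine le_trans (le_of_eq ?_) hprod
        field_simp
      have d1 := dir 1 (Or.inl rfl)
      have dI := dir Complex.I (Or.inr rfl)
      simp only [one_mul] at d1
      have R1 : dot (Complex.I * deriv (deriv h) p) (Complex.I * deriv (deriv h) p) = Complex.normSq (deriv (deriv h) p) := by
        simp [dot, Complex.normSq_apply, Complex.add_re, Complex.add_im, Complex.mul_re, Complex.mul_im, Complex.conj_re, Complex.conj_im, Complex.I_re, Complex.I_im, Complex.one_re, Complex.one_im, Complex.zero_re, Complex.zero_im]; ring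
      have R2 : dot (deriv (deriv h) p) (deriv (deriv h) p) = Complex.normSq (deriv (deriv h) p) := by
        simp [dot, Complex.normSq_apply, Complex.add_re, Complex.add_im, Complex.mul_re, Complex.mul_im, Complex.conj_re, Complex.conj_im, Complex.I_re, Complex.I_im, Complex.one_re, Complex.one_im, Complex.zero_re, Complex.zero_im]
      have R3 : dot (deriv h p) (Complex.I * (Complex.I * deriv (deriv (deriv h)) p)) = -(dot (deriv h p) (deriv (deriv (deriv h)) p)) := by
        simp [dot, Complex.normSq_apply, Complex.add_re, Complex.add_im, Complex.mul_re, Complex.mul_im, Complex.conj_re, Complex.conj_im, Complex.I_re, Complex.I_im, Complex.one_re, Complex.one_im, Complex.zero_re, Complex.zero_im]; ring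
      have R6 : dot (h p + (starRingEnd ℂ) (g p)) (Complex.I * (Complex.I * deriv (deriv h) p) + (starRingEnd ℂ) (Complex.I * (Complex.I * deriv (deriv g) p)))
          = -(dot (h p + (starRingEnd ℂ) (g p)) (deriv (deriv h) p + (starRingEnd ℂ) (deriv (deriv g) p))) := by
        simp [dot, Complex.normSq_apply, Complex.add_re, Complex.add_im, Complex.mul_re, Complex.mul_im, Complex.conj_re, Complex.conj_im, Complex.I_re, Complex.I_im, Complex.one_re, Complex.one_im, Complex.zero_re, Complex.zero_im]; ring
      have R8 : dot (1:ℂ) 1 = 1 := by simp [dot, Complex.normSq_apply, Complex.add_re, Complex.add_im, Complex.mul_re, Complex.mul_im, Complex.conj_re, Complex.conj_im, Complex.I_re, Complex.I_im, Complex.one_re, Complex.one_im, Complex.zero_re, Complex.zero_im]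
      have R9 : dot Complex.I Complex.I = 1 := by simp [dot, Complex.normSq_apply, Complex.add_re, Complex.add_im, Complex.mul_re, Complex.mul_im, Complex.conj_re, Complex.conj_im, Complex.I_re, Complex.I_im, Complex.one_re, Complex.one_im, Complex.zero_re, Complex.zero_im]
      have R10 : dot p 0 = 0 := by simp [dot, Complex.normSq_apply, Complex.add_re, Complex.add_im, Complex.mul_re, Complex.mul_im, Complex.conj_re, Complex.conj_im, Complex.I_re, Complex.I_im, Complex.one_re, Complex.one_im, Complex.zero_re, Complex.zero_im]
      rw [R2, R8, R10] at d1
      rw [R1, R3, R6, R9, R10] at dI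
      have I4 : (dot (deriv h p) (deriv (deriv h) p))^2 + (dot (deriv h p) (Complex.I * deriv (deriv h) p))^2
          = Complex.normSq (deriv h p) * Complex.normSq (deriv (deriv h) p) := by simp [dot, Complex.normSq_apply, Complex.add_re, Complex.add_im, Complex.mul_re, Complex.mul_im, Complex.conj_re, Complex.conj_im, Complex.I_re, Complex.I_im, Complex.one_re, Complex.one_im, Complex.zero_re, Complex.zero_im]; ring
      have I5 : dot (deriv h p + (starRingEnd ℂ) (deriv g p)) (deriv h p + (starRingEnd ℂ) (deriv g p)) + dot (Complex.I * deriv h p + (starRingEnd ℂ) (Complex.I * deriv g p)) (Complex.I * deriv h p + (starRingEnd ℂ) (Complex.I * deriv g p))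
          = 2 * (Complex.normSq (deriv h p) + Complex.normSq (deriv g p)) := by simp [dot, Complex.normSq_apply, Complex.add_re, Complex.add_im, Complex.mul_re, Complex.mul_im, Complex.conj_re, Complex.conj_im, Complex.I_re, Complex.I_im, Complex.one_re, Complex.one_im, Complex.zero_re, Complex.zero_im]; ring
      have I7 : (dot (h p + (starRingEnd ℂ) (g p)) (deriv h p + (starRingEnd ℂ) (deriv g p)))^2 + (dot (h p + (starRingEnd ℂ) (g p)) (Complex.I * deriv h p + (starRingEnd ℂ) (Complex.I * deriv g p)))^2 = Complex.normSq ((starRingEnd ℂ) (h p + (starRingEnd ℂ) (g p)) * deriv h p + (h p + (starRingEnd ℂ) (g p)) * deriv g p) := by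
        simp [dot, Complex.normSq_apply, Complex.add_re, Complex.add_im, Complex.mul_re, Complex.mul_im, Complex.conj_re, Complex.conj_im, Complex.I_re, Complex.I_im, Complex.one_re, Complex.one_im, Complex.zero_re, Complex.zero_im]; ring
      have I11 : (dot p 1)^2 + (dot p Complex.I)^2 = Complex.normSq p := by
        simp only [dot, Complex.normSq_apply, Complex.I_re, Complex.I_im, Complex.one_re,
          Complex.one_im]; ring
      simp only [hΨdef] at hcon
      set Da := Complex.normSq (deriv h p) with hDa0
      set Db := Complex.normSq (deriv g p) with hDb0
      set n2 := Complex.normSq (deriv (deriv h) p) with hn20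
      set np := Complex.normSq p with hnp0
      set m := Complex.normSq (h p + (starRingEnd ℂ) (g p)) with hm0
      set W := Complex.normSq ((starRingEnd ℂ) (h p + (starRingEnd ℂ) (g p)) * deriv h p + (h p + (starRingEnd ℂ) (g p)) * deriv g p) with hW0
      set Q := dot (deriv h p) (deriv (deriv (deriv h)) p) with hQ0
      set R1v := dot (deriv h p) (deriv (deriv h) p) with hR1v
      set RIv := dot (deriv h p) (Complex.I * deriv (deriv h) p) with hRIv
      set N1 := dot (deriv h p + (starRingEnd ℂ) (deriv g p)) (deriv h p + (starRingEnd ℂ) (deriv g p)) with hN1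
      set NI := dot (Complex.I * deriv h p + (starRingEnd ℂ) (Complex.I * deriv g p)) (Complex.I * deriv h p + (starRingEnd ℂ) (Complex.I * deriv g p)) with hNI
      set M1 := dot (h p + (starRingEnd ℂ) (g p)) (deriv (deriv h) p + (starRingEnd ℂ) (deriv (deriv g) p)) with hM1
      set X1 := dot (h p + (starRingEnd ℂ) (g p)) (deriv h p + (starRingEnd ℂ) (deriv g p)) with hX1
      set XI := dot (h p + (starRingEnd ℂ) (g p)) (Complex.I * deriv h p + (starRingEnd ℂ) (Complex.I * deriv g p)) with hXI
      set Y1 := dot p 1 with hY1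
      set YI := dot p Complex.I with hYI
      have goal1 : (((Da + Db) * (1 - m) + W) * (r^2 - np)^2) * Da^2
          ≤ (r^2 * (1 - m)^2) * Da^2 := by
        have I4m : (R1v^2 + RIv^2) * ((1-m)^2*(r^2-np)^2)
            = (Da*n2) * ((1-m)^2*(r^2-np)^2) := by rw [I4]
        have I5m : (N1 + NI) * ((1-m)*Da^2*(r^2-np)^2)
            = (2*(Da+Db)) * ((1-m)*Da^2*(r^2-np)^2) := by rw [I5]
        have I7m : (X1^2 + XI^2) * (Da^2*(r^2-np)^2) = W * (Da^2*(r^2-np)^2) := by rw [I7]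
        have I11m : (Y1^2 + YI^2) * (Da^2*(1-m)^2) = np * (Da^2*(1-m)^2) := by rw [I11]
        linarith only [d1, dI, I4m, I5m, I7m, I11m]
      have hstep : ((Da + Db) * (1 - m) + W) * (r^2 - np)^2 ≤ r^2 * (1 - m)^2 :=
        (mul_le_mul_iff_left₀ (pow_pos hDapos 2)).mp goal1
      have eDa : Da = ‖deriv h p‖^2 := by rw [hDa0]; exact Complex.normSq_eq_norm_sq _
      have eDb : Db = ‖deriv g p‖^2 := by rw [hDb0]; exact Complex.normSq_eq_norm_sq _
      have em : m = ‖h p + (starRingEnd ℂ) (g p)‖^2 := by rw [hm0]; exact Complex.normSq_eq_norm_sq _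
      have enp : np = ‖p‖^2 := by rw [hnp0]; exact Complex.normSq_eq_norm_sq _
      have eW : W = ‖(starRingEnd ℂ) (h p + (starRingEnd ℂ) (g p)) * deriv h p + (h p + (starRingEnd ℂ) (g p)) * deriv g p‖^2 := by rw [hW0]; exact Complex.normSq_eq_norm_sq _
      have hBk : ‖deriv g p‖ ≤ k * ‖deriv h p‖ := hqr p hp1
      have hA0 : (0:ℝ) ≤ ‖deriv h p‖ := norm_nonneg _
      have hB0 : (0:ℝ) ≤ ‖deriv g p‖ := norm_nonneg _
      have hsF0 : (0:ℝ) ≤ ‖h p + (starRingEnd ℂ) (g p)‖ := norm_nonneg _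
      have hkA : k * ‖deriv h p‖ ≤ ‖deriv h p‖ := mul_le_of_le_one_left hA0 hk1.le
      have hBA : ‖deriv g p‖ ≤ ‖deriv h p‖ := le_trans hBk hkA
      have habs : ‖h p + (starRingEnd ℂ) (g p)‖ * ‖deriv h p‖ - ‖h p + (starRingEnd ℂ) (g p)‖ * ‖deriv g p‖
          ≤ ‖(starRingEnd ℂ) (h p + (starRingEnd ℂ) (g p)) * deriv h p + (h p + (starRingEnd ℂ) (g p)) * deriv g p‖ := by
        have t1 : ‖(starRingEnd ℂ) (h p + (starRingEnd ℂ) (g p)) * deriv h p‖ = ‖h p + (starRingEnd ℂ) (g p)‖ * ‖deriv h p‖ := by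
          rw [norm_mul, Complex.norm_conj]
        have t2 : ‖(h p + (starRingEnd ℂ) (g p)) * deriv g p‖ = ‖h p + (starRingEnd ℂ) (g p)‖ * ‖deriv g p‖ := by
          rw [norm_mul]
        have h3 : ‖(starRingEnd ℂ) (h p + (starRingEnd ℂ) (g p)) * deriv h p‖
            ≤ ‖(starRingEnd ℂ) (h p + (starRingEnd ℂ) (g p)) * deriv h p + (h p + (starRingEnd ℂ) (g p)) * deriv g p‖ + ‖(h p + (starRingEnd ℂ) (g p)) * deriv g p‖ := by
          have h4 := norm_add_le ((starRingEnd ℂ) (h p + (starRingEnd ℂ) (g p)) * deriv h p + (h p + (starRingEnd ℂ) (g p)) * deriv g p) (-((h p + (starRingEnd ℂ) (g p)) * deriv g p))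
          simpa using h4
        rw [t1, t2] at h3
        linarith only [h3]
      have hWb : (‖h p + (starRingEnd ℂ) (g p)‖ * ‖deriv h p‖ - ‖h p + (starRingEnd ℂ) (g p)‖ * ‖deriv g p‖)^2
          ≤ ‖(starRingEnd ℂ) (h p + (starRingEnd ℂ) (g p)) * deriv h p + (h p + (starRingEnd ℂ) (g p)) * deriv g p‖^2 := by
        have h0 : (0:ℝ) ≤ ‖h p + (starRingEnd ℂ) (g p)‖ * ‖deriv h p‖
            - ‖h p + (starRingEnd ℂ) (g p)‖ * ‖deriv g p‖ := by
          have h5 := mul_nonneg hsF0 (sub_nonneg.2 hBA)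
          nlinarith only [h5]
        exact pow_le_pow_left₀ h0 habs 2
      have hm1 : m ≤ 1 := by linarith only [hρp]
      have h1k : (0:ℝ) ≤ 1 - k := by linarith only [hk1]
      have h6 : (0:ℝ) ≤ (1 - k) * ‖deriv h p‖ := mul_nonneg h1k hA0
      have hlow : (1 - k)^2 * Da ≤ (Da + Db) * (1 - m) + W := by
        nlinarith only [hWb, eDa, eDb, em, eW, hBk, hA0, hB0, hsF0, hm1, hBA, hk0, hk1,
          mul_nonneg (mul_nonneg hA0 hB0) (by linarith only [hm1, em] : (0:ℝ) ≤ 1 - ‖h p + (starRingEnd ℂ) (g p)‖^2),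
          mul_nonneg (by linarith only [hBk] : (0:ℝ) ≤ k * ‖deriv h p‖ - ‖deriv g p‖)
            (by linarith only [hBA, h6] : (0:ℝ) ≤ ‖deriv h p‖ - ‖deriv g p‖
              + (1 - k) * ‖deriv h p‖)]
      have hsq2 : ((1 - k)^2 * Da) * (r^2 - np)^2 ≤ r^2 * (1 - m)^2 :=
        le_trans (mul_le_mul_of_nonneg_right hlow (sq_nonneg _)) hstep
      have hcon2 : r * (1 - m) < (1 - k) * ‖deriv h p‖ * (r^2 - np) :=
        (lt_div_iff₀ hρp).mp hcon
      have hfin : (1 - k) * ‖deriv h p‖ * (r^2 - np) ≤ r * (1 - m) := by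
        by_contra hlt
        push_neg at hlt
        have hY : (0:ℝ) ≤ r * (1 - m) := (mul_pos hr0 hρp).le
        have hx2 : (r * (1 - m))^2 < ((1 - k) * ‖deriv h p‖ * (r^2 - np))^2 :=
          pow_lt_pow_left₀ hlt hY (by norm_num)
        rw [eDa] at hsq2
        nlinarith only [hx2, hsq2]
      linarith only [hcon2, hfin]
    intro z hz
    have h1 : Ψ z ≤ r := le_trans (hpmax hz) main
    have h2 := hρpos z hz
    rw [hΨdef] at h1
    calc (1 - k) * ‖deriv h z‖ * (r^2 - Complex.normSq z)
        = (1 - k) * ‖deriv h z‖ * (r^2 - Complex.normSq z) /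
            (1 - Complex.normSq (h z + (starRingEnd ℂ) (g z))) *
            (1 - Complex.normSq (h z + (starRingEnd ℂ) (g z))) := by
          field_simp
      _ ≤ r * (1 - Complex.normSq (h z + (starRingEnd ℂ) (g z))) := by
          apply mul_le_mul_of_nonneg_right h1 h2.le
  -- pass to the limit r → 1
  intro z₀ hz₀
  have haz : ‖z₀‖ < 1 := mem_ball_zero_iff.mp hz₀
  have hcont : Continuous (fun r : ℝ => r * (1 - Complex.normSq (h z₀ + (starRingEnd ℂ) (g z₀)))
      - (1 - k) * ‖deriv h z₀‖ * (r^2 - Complex.normSq z₀)) :=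
    (continuous_id.mul continuous_const).sub
      (continuous_const.mul ((continuous_pow 2).sub continuous_const))
  have hlim : Tendsto (fun r : ℝ => r * (1 - Complex.normSq (h z₀ + (starRingEnd ℂ) (g z₀)))
      - (1 - k) * ‖deriv h z₀‖ * (r^2 - Complex.normSq z₀))
      (nhdsWithin 1 (Iio 1)) (nhds ((1:ℝ) * (1 - Complex.normSq (h z₀ + (starRingEnd ℂ) (g z₀)))
      - (1 - k) * ‖deriv h z₀‖ * ((1:ℝ)^2 - Complex.normSq z₀))) :=
    (hcont.tendsto 1).mono_left nhdsWithin_le_nhds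
  have hev : ∀ᶠ r in nhdsWithin (1:ℝ) (Iio 1),
      0 ≤ r * (1 - Complex.normSq (h z₀ + (starRingEnd ℂ) (g z₀)))
      - (1 - k) * ‖deriv h z₀‖ * (r^2 - Complex.normSq z₀) := by
    filter_upwards [Ioo_mem_nhdsLT_of_mem (⟨haz, le_refl 1⟩ : (1:ℝ) ∈ Ioc (‖z₀‖) 1)]
      with r hr
    have h0r : 0 < r := lt_of_le_of_lt (norm_nonneg z₀) hr.1
    have := key r h0r hr.2 z₀ (mem_closedBall_zero_iff.2 hr.1.le)
    linarith
  have hfin := ge_of_tendsto hlim hev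
  nlinarith [hfin]

end SPQH

/-- Schwarz–Pick type lemma for sense-preserving `K`-quasiregular harmonic
mappings of the unit disk into itself. Here `f = h + conj g` with `h, g`
holomorphic, so `f_z = h'` and `f_{z̄} = conj (g')`. -/
theorem schwarz_pick_quasiregular_harmonic
    (K : ℝ) (hK : 1 ≤ K) (f h g : ℂ → ℂ)
    (hh : DifferentiableOn ℂ h (ball (0:ℂ) 1))
    (hg : DifferentiableOn ℂ g (ball (0:ℂ) 1))
    (hf : ∀ z ∈ ball (0:ℂ) 1, f z = h z + (starRingEnd ℂ) (g z))
    (hsense : ∀ z ∈ ball (0:ℂ) 1, ‖deriv g z‖ < ‖deriv h z‖)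
    (hqr : ∀ z ∈ ball (0:ℂ) 1,
      ‖deriv g z‖ / ‖deriv h z‖ ≤ (K - 1) / (K + 1))
    (hmap : ∀ z ∈ ball (0:ℂ) 1, ‖f z‖ < 1) :
    ∀ z ∈ ball (0:ℂ) 1,
      ‖deriv h z‖ + ‖deriv g z‖
        ≤ K * (1 - (‖f z‖)^2) / (1 - (‖z‖)^2) := by
  intro z hz
  have hK1 : (0:ℝ) < K + 1 := by linarith
  set k := (K - 1) / (K + 1) with hkdef
  have hk0 : 0 ≤ k := div_nonneg (by linarith) hK1.le
  have hk1 : k < 1 := by rw [hkdef, div_lt_one hK1]; linarith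
  have hne : ∀ w ∈ ball (0:ℂ) 1, deriv h w ≠ 0 := by
    intro w hw h0
    have h2 := hsense w hw
    rw [h0, norm_zero] at h2
    exact (norm_nonneg _).not_gt h2
  have hqr' : ∀ w ∈ ball (0:ℂ) 1, ‖deriv g w‖ ≤ k * ‖deriv h w‖ := by
    intro w hw
    have hpos : 0 < ‖deriv h w‖ :=
      lt_of_le_of_lt (norm_nonneg _) (hsense w hw)
    have h3 := hqr w hw
    rwa [div_le_iff₀ hpos] at h3
  have hmap' : ∀ w ∈ ball (0:ℂ) 1,
      Complex.normSq (h w + (starRingEnd ℂ) (g w)) < 1 := by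
    intro w hw
    have h1 := hmap w hw
    rw [hf w hw] at h1
    rw [← Complex.sq_norm]
    nlinarith [norm_nonneg (h w + (starRingEnd ℂ) (g w))]
  have hcore := SPQH.core k hk0 hk1 h g hh hg hne hqr' hmap' z hz
  rw [← hf z hz] at hcore
  have hz1 : ‖z‖ < 1 := mem_ball_zero_iff.mp hz
  have hden : (0:ℝ) < 1 - ‖z‖^2 := by nlinarith [norm_nonneg z]
  rw [le_div_iff₀ hden]
  have hq := hqr' z hz
  have hkK : (1 + k) = K * (1 - k) := by
    rw [hkdef]; field_simp; ring
  have e1 : Complex.normSq z = ‖z‖^2 := Complex.normSq_eq_norm_sq z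
  have e2 : Complex.normSq (f z) = ‖f z‖^2 := Complex.normSq_eq_norm_sq _
  rw [e1, e2] at hcore
  calc (‖deriv h z‖ + ‖deriv g z‖) * (1 - ‖z‖^2)
      ≤ ((1 + k) * ‖deriv h z‖) * (1 - ‖z‖^2) := by
        apply mul_le_mul_of_nonneg_right _ hden.le
        linarith [hq]
    _ = K * ((1 - k) * ‖deriv h z‖ * (1 - ‖z‖^2)) := by
        rw [hkK]; ring
    _ ≤ K * (1 - ‖f z‖^2) := by
        apply mul_le_mul_of_nonneg_left hcore (by linarith : (0:ℝ) ≤ K)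
end

section
/- Let ρ(z) = (4/(K+1)²) λ(f(z)) |f_z(z)|², where λ(w) = 4/(1-|w|²)² is the hyperbolic metric density on the unit disk and f is a sense-preserving K-quasiregular harmonic map of D into D. Then the Gaussian curvature K_ρ(z) = -(1/(2ρ(z))) Δ log ρ(z) satisfies K_ρ(z) ≤ -1 for all z ∈ D. -/
open Metric Set

/-- The Laplacian of a function `u : ℂ → ℝ`, as the sum of the second directional
derivatives in the directions `1` and `I`. -/
noncomputable def laplacian (u : ℂ → ℝ) (z : ℂ) : ℝ :=
  fderiv ℝ (fun w => fderiv ℝ u w 1) z 1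
    + fderiv ℝ (fun w => fderiv ℝ u w Complex.I) z Complex.I

noncomputable def wirt (a b : ℂ) : ℂ →L[ℝ] ℂ :=
  a • (ContinuousLinearMap.id ℝ ℂ) + b • (Complex.conjCLE : ℂ →L[ℝ] ℂ)

@[simp] lemma wirt_apply (a b v : ℂ) : wirt a b v = a * v + b * (starRingEnd ℂ) v := by
  simp [wirt, Complex.conjCLE_apply, smul_eq_mul]

noncomputable def rlin (a : ℂ) : ℂ →L[ℝ] ℝ := Complex.reCLM.comp (wirt a 0)

@[simp] lemma rlin_apply (a v : ℂ) : rlin a v = (a * v).re := by simp [rlin]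

lemma HasDerivAt.wirt' {F : ℂ → ℂ} {a w : ℂ} (hf : HasDerivAt F a w) :
    HasFDerivAt F (wirt a 0) w := by
  have h := (hf.hasFDerivAt.restrictScalars ℝ)
  refine h.congr_fderiv ?_
  ext v
  simp [mul_comm]

lemma hasFDerivAt_conj_comp {F : ℂ → ℂ} {a b w : ℂ} (hf : HasFDerivAt F (wirt a b) w) :
    HasFDerivAt (fun z => (starRingEnd ℂ) (F z))
      (wirt ((starRingEnd ℂ) b) ((starRingEnd ℂ) a)) w := by
  have h := ((Complex.conjCLE : ℂ →L[ℝ] ℂ).hasFDerivAt (x := F w)).comp w hf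
  refine h.congr_fderiv ?_
  ext v
  simp [Complex.conjCLE_apply, map_add, map_mul]
  ring

lemma wirt_add_wirt (a b c d : ℂ) : wirt a b + wirt c d = wirt (a + c) (b + d) := by
  ext v; simp; ring

lemma HasFDerivAt.wirtAdd {F G : ℂ → ℂ} {a b c d w : ℂ}
    (hF : HasFDerivAt F (wirt a b) w) (hG : HasFDerivAt G (wirt c d) w) :
    HasFDerivAt (fun z => F z + G z) (wirt (a + c) (b + d)) w := by
  exact (hF.add hG).congr_fderiv (wirt_add_wirt a b c d)

lemma HasFDerivAt.wirtMul {F G : ℂ → ℂ} {a b c d w : ℂ}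
    (hF : HasFDerivAt F (wirt a b) w) (hG : HasFDerivAt G (wirt c d) w) :
    HasFDerivAt (fun z => F z * G z)
      (wirt (a * G w + F w * c) (b * G w + F w * d)) w := by
  have h := hF.mul hG
  refine h.congr_fderiv ?_
  ext v
  simp [smul_eq_mul]
  ring

lemma hasFDerivAt_const_wirt {c w : ℂ} : HasFDerivAt (fun _ : ℂ => c) (wirt 0 0) w := by
  have h : HasFDerivAt (fun _ : ℂ => c) (0 : ℂ →L[ℝ] ℂ) w := hasFDerivAt_const c w
  convert h using 1
  ext v; simp

lemma hasFDerivAt_re_comp {F : ℂ → ℂ} {a b w : ℂ} (hf : HasFDerivAt F (wirt a b) w) :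
    HasFDerivAt (fun z => (F z).re) (rlin (a + (starRingEnd ℂ) b)) w := by
  have h := (Complex.reCLM.hasFDerivAt (x := F w)).comp w hf
  refine h.congr_fderiv ?_
  ext v
  simp [Complex.add_re, Complex.mul_re]
  ring

lemma hasFDerivAt_ofReal_comp {u : ℂ → ℝ} {a : ℂ} {w : ℂ} (hu : HasFDerivAt u (rlin a) w) :
    HasFDerivAt (fun z => ((u z : ℝ) : ℂ)) (wirt (a / 2) ((starRingEnd ℂ) a / 2)) w := by
  have h := (Complex.ofRealCLM.hasFDerivAt (x := u w)).comp w hu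
  refine h.congr_fderiv ?_
  ext v
  have key : a / 2 * v + (starRingEnd ℂ) a / 2 * (starRingEnd ℂ) v = ((((a * v).re : ℝ)) : ℂ) := by
    rw [Complex.re_eq_add_conj, map_mul]
    ring
  simpa using key.symm

lemma rlin_smul (r : ℝ) (a : ℂ) : r • rlin a = rlin ((r : ℂ) * a) := by
  ext v
  simp [Complex.mul_re]
  ring

lemma rlin_add (a b : ℂ) : rlin a + rlin b = rlin (a + b) := by
  ext v; simp [Complex.add_re]; ring

lemma rlin_neg (a : ℂ) : -rlin a = rlin (-a) := by
  ext v; simp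

lemma laplacian_congr {u v : ℂ → ℝ} {z : ℂ} (h : u =ᶠ[nhds z] v) :
    laplacian u z = laplacian v z := by
  unfold laplacian
  have h1 : (fun w => fderiv ℝ u w 1) =ᶠ[nhds z] (fun w => fderiv ℝ v w 1) := by
    filter_upwards [h.fderiv (𝕜 := ℝ)] with w hw
    rw [hw]
  have h2 : (fun w => fderiv ℝ u w Complex.I) =ᶠ[nhds z]
      (fun w => fderiv ℝ v w Complex.I) := by
    filter_upwards [h.fderiv (𝕜 := ℝ)] with w hw
    rw [hw]
  rw [h1.fderiv_eq, h2.fderiv_eq]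

lemma laplacian_of_wirt {u : ℂ → ℝ} {γ : ℂ → ℂ} {a b : ℂ} {z : ℂ}
    (h1 : ∀ᶠ w in nhds z, HasFDerivAt u (rlin (γ w)) w)
    (h2 : HasFDerivAt γ (wirt a b) z) :
    laplacian u z = 2 * b.re := by
  have e1 : (fun w => fderiv ℝ u w 1) =ᶠ[nhds z] (fun w => (γ w * 1).re) := by
    filter_upwards [h1] with w hw
    rw [hw.fderiv]; simp
  have e2 : (fun w => fderiv ℝ u w Complex.I) =ᶠ[nhds z]
      (fun w => (γ w * Complex.I).re) := by
    filter_upwards [h1] with w hw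
    rw [hw.fderiv]; simp
  have d1 : HasFDerivAt (fun w => (γ w * 1).re)
      (rlin ((a * 1 + γ z * 0) + (starRingEnd ℂ) (b * 1 + γ z * 0))) z :=
    hasFDerivAt_re_comp (h2.wirtMul hasFDerivAt_const_wirt)
  have d2 : HasFDerivAt (fun w => (γ w * Complex.I).re)
      (rlin ((a * Complex.I + γ z * 0) + (starRingEnd ℂ) (b * Complex.I + γ z * 0))) z :=
    hasFDerivAt_re_comp (h2.wirtMul hasFDerivAt_const_wirt)
  unfold laplacian
  rw [e1.fderiv_eq, e2.fderiv_eq, d1.fderiv, d2.fderiv]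
  simp [Complex.mul_re, Complex.add_re, Complex.add_im]
  ring

open Complex in
lemma key_laplacian {s : Set ℂ} (hs : IsOpen s) {h g : ℂ → ℂ} (c₀ : ℝ)
    (hh : DifferentiableOn ℂ h s) (hg : DifferentiableOn ℂ g s)
    (hlt : ∀ w ∈ s, Complex.normSq (h w + (starRingEnd ℂ) (g w)) < 1)
    (hne : ∀ w ∈ s, deriv h w ≠ 0)
    {z : ℂ} (hz : z ∈ s) :
    laplacian (fun w => c₀ +
        (-2) * Real.log (1 - Complex.normSq (h w + (starRingEnd ℂ) (g w)))
        + Real.log (Complex.normSq (deriv h w))) z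
    = 8 * (Complex.normSq (deriv h z) + Complex.normSq (deriv g z)) /
        (1 - Complex.normSq (h z + (starRingEnd ℂ) (g z)))
      + 8 * Complex.normSq ((starRingEnd ℂ) (h z + (starRingEnd ℂ) (g z)) * deriv h z
          + (h z + (starRingEnd ℂ) (g z)) * deriv g z) /
        (1 - Complex.normSq (h z + (starRingEnd ℂ) (g z)))^2 := by
  have hanh := hh.analyticOnNhd hs
  have hang := hg.analyticOnNhd hs
  have hH : ∀ w ∈ s, HasDerivAt h (deriv h w) w :=
    fun w hw => ((hanh w hw).differentiableAt).hasDerivAt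
  have hG : ∀ w ∈ s, HasDerivAt g (deriv g w) w :=
    fun w hw => ((hang w hw).differentiableAt).hasDerivAt
  have hH2 : ∀ w ∈ s, HasDerivAt (deriv h) (deriv (deriv h) w) w :=
    fun w hw => ((hanh.deriv w hw).differentiableAt).hasDerivAt
  have hG2 : ∀ w ∈ s, HasDerivAt (deriv g) (deriv (deriv g) w) w :=
    fun w hw => ((hang.deriv w hw).differentiableAt).hasDerivAt
  have hH3 : HasDerivAt (deriv (deriv h)) (deriv (deriv (deriv h)) z) z :=
    ((hanh.deriv.deriv z hz).differentiableAt).hasDerivAt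
  set f₀ : ℂ → ℂ := fun w => h w + (starRingEnd ℂ) (g w) with hf₀def
  set φ : ℂ → ℝ := fun w => Complex.normSq (f₀ w) with hφdef
  set δ : ℂ → ℂ := fun w =>
    2 * ((starRingEnd ℂ) (f₀ w) * deriv h w + f₀ w * deriv g w) with hδdef
  have hφlt : ∀ w ∈ s, φ w < 1 := hlt
  have hφpos : ∀ w ∈ s, 0 < 1 - φ w := fun w hw => by linarith [hφlt w hw]
  -- first order facts
  have hf₀' : ∀ w ∈ s, HasFDerivAt f₀ (wirt (deriv h w) ((starRingEnd ℂ) (deriv g w))) w := by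
    intro w hw
    have := (hH w hw).wirt'.wirtAdd (hasFDerivAt_conj_comp (hG w hw).wirt')
    simpa using this
  have hcf₀' : ∀ w ∈ s, HasFDerivAt (fun x => (starRingEnd ℂ) (f₀ x))
      (wirt (deriv g w) ((starRingEnd ℂ) (deriv h w))) w := by
    intro w hw
    have := hasFDerivAt_conj_comp (hf₀' w hw)
    simpa using this
  have hφ' : ∀ w ∈ s, HasFDerivAt φ (rlin (δ w)) w := by
    intro w hw
    have hP := (hcf₀' w hw).wirtMul (hf₀' w hw)
    have hre := hasFDerivAt_re_comp hP
    have hfun : (fun x => ((starRingEnd ℂ) (f₀ x) * f₀ x).re) = φ := by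
      funext x
      simp only [hφdef]
      rw [mul_comm, Complex.mul_conj, Complex.ofReal_re]
    rw [hfun] at hre
    convert hre using 2
    simp only [map_add, map_mul, Complex.conj_conj, hδdef]
    ring
  have hψ' : ∀ w ∈ s, HasFDerivAt (fun x => Real.log (Complex.normSq (deriv h x)))
      (rlin (2 * deriv (deriv h) w / deriv h w)) w := by
    intro w hw
    have h1 := hasFDerivAt_conj_comp (hH2 w hw).wirt'
    have h2 := h1.wirtMul (hH2 w hw).wirt'
    have h3 := hasFDerivAt_re_comp h2
    have hfun : (fun x => ((starRingEnd ℂ) (deriv h x) * deriv h x).re)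
        = fun x => Complex.normSq (deriv h x) := by
      funext x
      rw [mul_comm, Complex.mul_conj, Complex.ofReal_re]
    rw [hfun] at h3
    have hns : Complex.normSq (deriv h w) ≠ 0 :=
      (Complex.normSq_pos.mpr (hne w hw)).ne'
    have h4 := h3.log hns
    rw [rlin_smul] at h4
    refine h4.congr_fderiv ?_
    congr 1
    have hcast : ((Complex.normSq (deriv h w) : ℝ) : ℂ) = deriv h w * (starRingEnd ℂ) (deriv h w) :=
      (Complex.mul_conj _).symm
    rw [Complex.ofReal_inv, hcast]
    have hcne : (starRingEnd ℂ) (deriv h w) ≠ 0 := by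
      simpa using hne w hw
    field_simp [hne w hw]
    simp [map_mul]
    ring
  -- the full first derivative
  set γ : ℂ → ℂ := fun w => 2 * deriv (deriv h) w / deriv h w
      + ((2 * (1 - φ w)⁻¹ : ℝ) : ℂ) * δ w with hγdef
  have hu' : ∀ w ∈ s, HasFDerivAt (fun x => c₀ +
      (-2) * Real.log (1 - φ x) + Real.log (Complex.normSq (deriv h x)))
      (rlin (γ w)) w := by
    intro w hw
    have hsub : HasFDerivAt (fun x => 1 - φ x) (-(rlin (δ w))) w :=
      (hφ' w hw).const_sub 1
    have hlog := hsub.log (hφpos w hw).ne'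
    have hC := hlog.const_mul (-2 : ℝ)
    have htot := (hC.const_add c₀).add (hψ' w hw)
    rw [rlin_neg, rlin_smul, rlin_smul, rlin_add] at htot
    refine htot.congr_fderiv ?_
    congr 1
    simp only [hγdef]
    push_cast
    ring
  -- second order at z
  have hsubz : HasFDerivAt (fun x => 1 - φ x) (-(rlin (δ z))) z :=
    (hφ' z hz).const_sub 1
  have hrinv : HasFDerivAt (fun w => 2 * (1 - φ w)⁻¹)
      (rlin (((2 * ((1 - φ z)^2)⁻¹ : ℝ) : ℂ) * δ z)) z := by
    have h0 := hasDerivAt_inv (hφpos z hz).ne'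
    have h1 := h0.comp_hasFDerivAt z hsubz
    have h2 := h1.const_mul (2 : ℝ)
    rw [rlin_neg, rlin_smul, rlin_smul] at h2
    refine h2.congr_fderiv ?_
    congr 1
    push_cast
    ring
  have t2 := hasFDerivAt_ofReal_comp hrinv
  have t1 : HasFDerivAt (fun w => 2 * deriv (deriv h) w / deriv h w)
      (wirt ((2 * deriv (deriv (deriv h)) z * deriv h z
        - 2 * deriv (deriv h) z * deriv (deriv h) z) / (deriv h z)^2) 0) z :=
    ((hH3.const_mul 2).div (hH2 z hz) (hne z hz)).wirt'
  have t3 : HasFDerivAt δ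
      (wirt (0 * ((starRingEnd ℂ) (f₀ z) * deriv h z + f₀ z * deriv g z)
          + 2 * ((deriv g z * deriv h z + (starRingEnd ℂ) (f₀ z) * deriv (deriv h) z)
            + (deriv h z * deriv g z + f₀ z * deriv (deriv g) z)))
        (0 * ((starRingEnd ℂ) (f₀ z) * deriv h z + f₀ z * deriv g z)
          + 2 * (((starRingEnd ℂ) (deriv h z) * deriv h z + (starRingEnd ℂ) (f₀ z) * 0)
            + ((starRingEnd ℂ) (deriv g z) * deriv g z + f₀ z * 0)))) z := by
    have hm1 := (hcf₀' z hz).wirtMul (hH2 z hz).wirt'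
    have hm2 := (hf₀' z hz).wirtMul (hG2 z hz).wirt'
    exact hasFDerivAt_const_wirt.wirtMul (hm1.wirtAdd hm2)
  have htotal := t1.wirtAdd (t2.wirtMul t3)
  have h1ev : ∀ᶠ w in nhds z, HasFDerivAt (fun x => c₀ +
      (-2) * Real.log (1 - φ x) + Real.log (Complex.normSq (deriv h x)))
      (rlin (γ w)) w := by
    filter_upwards [hs.mem_nhds hz] with w hw using hu' w hw
  have hlap := laplacian_of_wirt h1ev htotal
  rw [hlap]
  simp only [zero_add, zero_mul, mul_zero, add_zero, map_mul, Complex.conj_ofReal]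
  have hc1 : ((2 * ((1 - φ z) ^ 2)⁻¹ : ℝ) : ℂ) * (starRingEnd ℂ) (δ z) / 2 * δ z
      = ((2 * ((1 - φ z) ^ 2)⁻¹ / 2 * Complex.normSq (δ z) : ℝ) : ℂ) := by
    have hmc := Complex.mul_conj (δ z)
    push_cast
    linear_combination (((2:ℂ) * (((1:ℂ) - (φ z : ℂ)) ^ 2)⁻¹) / 2) * hmc
  have hc2 : ((2 * (1 - φ z)⁻¹ : ℝ) : ℂ) *
      (2 * ((starRingEnd ℂ) (deriv h z) * deriv h z + (starRingEnd ℂ) (deriv g z) * deriv g z))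
      = ((2 * (1 - φ z)⁻¹ * (2 * (Complex.normSq (deriv h z) + Complex.normSq (deriv g z))) : ℝ) : ℂ) := by
    have h1 := Complex.mul_conj (deriv h z)
    have h2 := Complex.mul_conj (deriv g z)
    push_cast
    linear_combination ((2:ℂ) * ((1:ℂ) - (φ z : ℂ))⁻¹ * 2) * h1
      + ((2:ℂ) * ((1:ℂ) - (φ z : ℂ))⁻¹ * 2) * h2
  rw [hc1, hc2, ← Complex.ofReal_add, Complex.ofReal_re]
  have hδn : Complex.normSq (δ z) = 4 * Complex.normSq ((starRingEnd ℂ) (f₀ z) * deriv h z + f₀ z * deriv g z) := by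
    simp only [hδdef]
    rw [Complex.normSq_mul]
    norm_num
  rw [hδn]
  have hpos := hφpos z hz
  simp only [hφdef, hf₀def] at hpos ⊢
  field_simp
  ring

/-- For a sense-preserving `K`-quasiregular harmonic map `f = h + conj g` of the unit
disk into itself, the metric density `ρ = (4/(K+1)²) λ(f) |f_z|²` (with `λ` the
hyperbolic density) has Gaussian curvature `K_ρ = -(1/(2ρ)) Δ log ρ ≤ -1`. -/
theorem gaussian_curvature_le_neg_one
    (K : ℝ) (hK : 1 ≤ K) (f h g : ℂ → ℂ) (ρ : ℂ → ℝ)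
    (hh : DifferentiableOn ℂ h (ball (0:ℂ) 1))
    (hg : DifferentiableOn ℂ g (ball (0:ℂ) 1))
    (hf : ∀ z ∈ ball (0:ℂ) 1, f z = h z + (starRingEnd ℂ) (g z))
    (hmap : ∀ z ∈ ball (0:ℂ) 1, ‖f z‖ < 1)
    (hsense : ∀ z ∈ ball (0:ℂ) 1, ‖deriv g z‖ < ‖deriv h z‖)
    (hqr : ∀ z ∈ ball (0:ℂ) 1,
      ‖deriv g z‖ / ‖deriv h z‖ ≤ (K - 1) / (K + 1))
    (hρ : ∀ z ∈ ball (0:ℂ) 1,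
      ρ z = (4 / (K + 1)^2) * (4 / (1 - (‖f z‖)^2)^2)
              * (‖deriv h z‖)^2) :
    ∀ z ∈ ball (0:ℂ) 1,
      -(1 / (2 * ρ z)) * laplacian (fun w => Real.log (ρ w)) z ≤ -1 := by
  intro z hz
  have hKpos : (0:ℝ) < K + 1 := by linarith
  have hHne : ∀ w ∈ ball (0:ℂ) 1, deriv h w ≠ 0 := by
    intro w hw h0
    have h1 := hsense w hw
    rw [h0] at h1
    simp only [norm_zero] at h1
    exact (norm_nonneg _).not_gt h1
  have hlt : ∀ w ∈ ball (0:ℂ) 1,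
      Complex.normSq (h w + (starRingEnd ℂ) (g w)) < 1 := by
    intro w hw
    have h1 := hmap w hw
    rw [hf w hw] at h1
    rw [← Complex.sq_norm]
    nlinarith [norm_nonneg (h w + (starRingEnd ℂ) (g w))]
  have hφpos : ∀ w ∈ ball (0:ℂ) 1,
      0 < 1 - Complex.normSq (h w + (starRingEnd ℂ) (g w)) :=
    fun w hw => by linarith [hlt w hw]
  -- identify log ρ with the smooth model near z
  have hev : (fun w => Real.log (ρ w)) =ᶠ[nhds z] (fun w => Real.log (4 / (K+1)^2 * 4) +
      (-2) * Real.log (1 - Complex.normSq (h w + (starRingEnd ℂ) (g w)))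
      + Real.log (Complex.normSq (deriv h w))) := by
    filter_upwards [isOpen_ball.mem_nhds hz] with w hw
    have h1 : 0 < 1 - Complex.normSq (h w + (starRingEnd ℂ) (g w)) := hφpos w hw
    have h2 : 0 < Complex.normSq (deriv h w) := Complex.normSq_pos.mpr (hHne w hw)
    have hc : (0:ℝ) < 4 / (K+1)^2 := by positivity
    rw [hρ w hw, hf w hw, Complex.sq_norm, Complex.sq_norm]
    have hX2 : (4 : ℝ) / (1 - Complex.normSq (h w + (starRingEnd ℂ) (g w)))^2 ≠ 0 :=
      div_ne_zero (by norm_num) (pow_ne_zero 2 h1.ne')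
    rw [Real.log_mul (mul_ne_zero hc.ne' hX2) h2.ne',
      Real.log_mul hc.ne' hX2,
      Real.log_div (by norm_num) (pow_ne_zero 2 h1.ne'),
      Real.log_pow,
      Real.log_mul hc.ne' (by norm_num)]
    push_cast
    ring
  rw [laplacian_congr hev,
    key_laplacian isOpen_ball (Real.log (4 / (K+1)^2 * 4)) hh hg hlt hHne hz]
  -- notation
  set x := ‖deriv h z‖ with hxdef
  set y := ‖deriv g z‖ with hydef
  set F := h z + (starRingEnd ℂ) (g z) with hFdef
  set Sa := ‖(starRingEnd ℂ) F * deriv h z + F * deriv g z‖ with hSadef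
  have hx0 : 0 < x := by
    have := hsense z hz
    have h0 := norm_nonneg (deriv g z)
    linarith
  have hy0 : 0 ≤ y := norm_nonneg _
  have hyx : y < x := hsense z hz
  have hk : y * (K+1) ≤ (K-1) * x := by
    have h1 := hqr z hz
    rw [div_le_div_iff₀ hx0 hKpos] at h1
    exact h1
  have ht0 : 0 ≤ Complex.normSq F := Complex.normSq_nonneg _
  have ht1 : Complex.normSq F < 1 := hlt z hz
  have h1t : 0 < 1 - Complex.normSq F := hφpos z hz
  -- lower bound for Sa
  have htri : ‖F‖ * (x - y) ≤ Sa := by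
    have e1 : ‖(starRingEnd ℂ) F * deriv h z‖ = ‖F‖ * x := by
      rw [norm_mul, Complex.norm_conj]
    have e2 : ‖F * deriv g z‖ = ‖F‖ * y := by
      rw [norm_mul]
    have h2 := norm_sub_norm_le ((starRingEnd ℂ) F * deriv h z) (-(F * deriv g z))
    rw [sub_neg_eq_add, norm_neg] at h2
    rw [e1, e2] at h2
    rw [hSadef]
    nlinarith [h2]
  have hS' : Complex.normSq F * (x - y)^2 ≤ Sa^2 := by
    have hnn : 0 ≤ ‖F‖ * (x - y) := by
      apply mul_nonneg (norm_nonneg _)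
      linarith
    have := mul_le_mul htri htri hnn (le_trans hnn htri)
    have hF2 : Complex.normSq F = ‖F‖ ^ 2 := (Complex.sq_norm F).symm
    nlinarith [this]
  -- rewrite the target in terms of x, y, Sa
  rw [hρ z hz, hf z hz, ← hFdef, ← hxdef]
  have hnsa : Complex.normSq (deriv h z) = x^2 := by rw [hxdef, Complex.sq_norm]
  have hnsb : Complex.normSq (deriv g z) = y^2 := by rw [hydef, Complex.sq_norm]
  have hnsS : Complex.normSq ((starRingEnd ℂ) F * deriv h z + F * deriv g z) = Sa^2 := by
    rw [hSadef, Complex.sq_norm]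
  rw [hnsa, hnsb, hnsS, Complex.sq_norm]
  -- final inequality
  set t := Complex.normSq F with htdef
  have hRpos : 0 < 4 / (K + 1)^2 * (4 / (1 - t)^2) * x^2 :=
    mul_pos (mul_pos (by positivity) (div_pos (by norm_num) (pow_pos h1t 2)))
      (pow_pos hx0 2)
  have hcore : 32 * x^2 ≤ (8*(x^2+y^2)*(1-t) + 8*Sa^2) * (K+1)^2 := by
    have e1 : 2*x ≤ (K+1)*(x-y) := by nlinarith [hk]
    have e2 : (2*x)*(2*x) ≤ ((K+1)*(x-y))*((K+1)*(x-y)) :=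
      mul_le_mul e1 e1 (by positivity) (le_trans (by positivity) e1)
    nlinarith [hS', mul_nonneg (mul_nonneg (sub_nonneg.mpr ht1.le) hx0.le) hy0,
      sq_nonneg (K+1), mul_nonneg (sq_nonneg (K+1)) (sub_nonneg.mpr hS'),
      mul_nonneg (sq_nonneg (K+1))
        (mul_nonneg (mul_nonneg (sub_nonneg.mpr ht1.le) hx0.le) hy0)]
  have hfinal : 2 * (4 / (K + 1)^2 * (4 / (1 - t)^2) * x^2)
      ≤ 8*(x^2+y^2)/(1-t) + 8*Sa^2/(1-t)^2 := by
    have step1 : 2 * (4 / (K + 1)^2 * (4 / (1 - t)^2) * x^2)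
        = 32*x^2/((K+1)^2*(1-t)^2) := by
      field_simp
      ring
    have step2 : 8*(x^2+y^2)/(1-t) + 8*Sa^2/(1-t)^2
        = (8*(x^2+y^2)*(1-t) + 8*Sa^2)/(1-t)^2 := by
      field_simp
    rw [step1, step2, div_le_div_iff₀
      (mul_pos (pow_pos hKpos 2) (pow_pos h1t 2)) (pow_pos h1t 2)]
    calc 32*x^2*(1-t)^2 ≤ ((8*(x^2+y^2)*(1-t) + 8*Sa^2) * (K+1)^2)*(1-t)^2 :=
        mul_le_mul_of_nonneg_right hcore (by positivity)
      _ = (8*(x^2+y^2)*(1-t) + 8*Sa^2)*((K+1)^2*(1-t)^2) := by ring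
  have hgoal : 1 ≤ 1 / (2 * (4 / (K + 1)^2 * (4 / (1 - t)^2) * x^2))
      * (8*(x^2+y^2)/(1-t) + 8*Sa^2/(1-t)^2) := by
    rw [one_div_mul_eq_div]
    rw [le_div_iff₀ (by linarith [hRpos])]
    linarith [hfinal]
  linarith [hgoal]
end

section
/- The function W₂(r) = (1 + (1-r)²)/(r(1-r)²) on (0,1) attains its minimum at r₂ = 1 - (1+√2)^{1/3} + (1+√2)^{-1/3}, and the minimum value m₂ = W₂(r₂) satisfies 9.4 < m₂ < 9.5. -/
open Set

lemma W2_min_aux (s : ℝ) (hs3 : s ^ 3 = 2 - 3 * s) :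
    (1 - s) ∈ Ioo (0 : ℝ) 1 ∧
      (∀ r ∈ Ioo (0 : ℝ) 1,
        (1 + (1 - (1 - s)) ^ 2) / ((1 - s) * (1 - (1 - s)) ^ 2)
          ≤ (1 + (1 - r) ^ 2) / (r * (1 - r) ^ 2)) ∧
      9.4 < (1 + (1 - (1 - s)) ^ 2) / ((1 - s) * (1 - (1 - s)) ^ 2) ∧
      (1 + (1 - (1 - s)) ^ 2) / ((1 - s) * (1 - (1 - s)) ^ 2) < 9.5 := by
  have hslo : (0.596 : ℝ) < s := by nlinarith [sq_nonneg (s + 0.298), sq_nonneg s]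
  have hshi : s < (0.5961 : ℝ) := by nlinarith [sq_nonneg (s + 0.29805), sq_nonneg s]
  have hspos : 0 < s := by linarith
  have hs1 : s < 1 := by linarith
  have hden : 0 < 2 - 3 * s := by linarith
  have h1 : (1 : ℝ) - (1 - s) = s := by ring
  have hval : (1 + (1 - (1 - s)) ^ 2) / ((1 - s) * (1 - (1 - s)) ^ 2)
      = 2 / (2 - 3 * s) := by
    rw [h1, div_eq_div_iff (mul_pos (show (0:ℝ) < 1 - s by linarith) (pow_pos hspos 2)).ne' hden.ne']
    nlinarith [hs3]
  rw [hval]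
  refine ⟨⟨by linarith, by linarith⟩, ?_, ?_, ?_⟩
  · intro r hr
    obtain ⟨hr0, hr1⟩ := hr
    have hx0 : 0 < 1 - r := by linarith
    rw [div_le_div_iff₀ hden (mul_pos hr0 (pow_pos hx0 2))]
    nlinarith [mul_nonneg (sq_nonneg ((1 - r) - s))
      (by positivity : (0:ℝ) ≤ 2 * (1 - r) + s), hs3]
  · rw [lt_div_iff₀ hden]; nlinarith
  · rw [div_lt_iff₀ hden]; nlinarith

/-- The function `W₂(r) = (1+(1-r)²)/(r(1-r)²)` on `(0,1)` attains its minimum at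
`r₂ = 1 - (1+√2)^{1/3} + (1+√2)^{-1/3}`, and the minimum value `m₂` satisfies
`9.4 < m₂ < 9.5`. -/
theorem W2_min :
    let W₂ : ℝ → ℝ := fun r => (1 + (1 - r) ^ 2) / (r * (1 - r) ^ 2)
    let r₂ : ℝ := 1 - (1 + Real.sqrt 2) ^ ((1 : ℝ) / 3)
        + ((1 + Real.sqrt 2) ^ ((1 : ℝ) / 3))⁻¹
    r₂ ∈ Ioo (0 : ℝ) 1 ∧ (∀ r ∈ Ioo (0 : ℝ) 1, W₂ r₂ ≤ W₂ r) ∧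
      9.4 < W₂ r₂ ∧ W₂ r₂ < 9.5 := by
  intro W₂ r₂
  have hW : ∀ r : ℝ, W₂ r = (1 + (1 - r) ^ 2) / (r * (1 - r) ^ 2) := fun r => rfl
  have hsq : Real.sqrt 2 ^ 2 = 2 := Real.sq_sqrt (by norm_num)
  have hsq1 : (1:ℝ) < Real.sqrt 2 := by nlinarith [Real.sqrt_nonneg 2]
  set t : ℝ := (1 + Real.sqrt 2) ^ ((1 : ℝ) / 3) with ht
  have htpos : 0 < t := Real.rpow_pos_of_pos (by linarith) _
  have htne : t ≠ 0 := ne_of_gt htpos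
  have ht3 : t ^ 3 = 1 + Real.sqrt 2 := by
    rw [ht, ← Real.rpow_natCast ((1 + Real.sqrt 2) ^ ((1:ℝ)/3)) 3,
      ← Real.rpow_mul (by linarith)]
    norm_num
  have hinv : (1 + Real.sqrt 2)⁻¹ = Real.sqrt 2 - 1 :=
    inv_eq_of_mul_eq_one_right (by linear_combination hsq)
  have hs3 : (t - t⁻¹) ^ 3 = 2 - 3 * (t - t⁻¹) := by
    have key : (t - t⁻¹) ^ 3 + 3 * (t - t⁻¹) = t ^ 3 - (t ^ 3)⁻¹ := by
      field_simp; ring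
    rw [ht3, hinv] at key
    linarith
  have hr2 : r₂ = 1 - (t - t⁻¹) := by
    show 1 - t + t⁻¹ = 1 - (t - t⁻¹); ring
  obtain ⟨h1, h2, h3, h4⟩ := W2_min_aux (t - t⁻¹) hs3
  refine ⟨by rw [hr2]; exact h1, ?_, ?_, ?_⟩
  · intro r hr
    rw [hW, hW, hr2]
    exact h2 r hr
  · rw [hW, hr2]; exact h3
  · rw [hW, hr2]; exact h4
end

section
/- Let G ⊂ ℂ^n be a domain, ω a majorant, and f ∈ H_k(G) (pluriharmonic with |∇f̄(z)·θ| ≤ k|∇f(z)·θ̄| for all unit θ, 0 < k < 1). Suppose there is C > 0 such that ||f(z)| - |f(w)|| ≤ C ω(|z-w|) for all z ∈ G and w ∈ ∂G (i.e., |f| ∈ Λ_ω(G, ∂G) and f extends continuously to the boundary). Then for every z ∈ G and unit vector θ, |∇f(z)·θ̄| + |∇f̄(z)·θ| ≤ 10CK · ω(d_G(z))/d_G(z), where K = (1+k)/(1-k) and d_G(z) is the distance from z to ∂G. -/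
open Metric Set

lemma mob_lt (M' : ℝ) (w w0 : ℂ) (hw : w.re < M') (hw0 : w0.re < M') :
    ‖w - w0‖ < ‖w - (((2*M' : ℝ) : ℂ) - (starRingEnd ℂ) w0)‖ := by
  apply lt_of_pow_lt_pow_left₀ 2 (norm_nonneg _)
  rw [Complex.sq_norm, Complex.sq_norm, Complex.normSq_apply, Complex.normSq_apply]
  simp only [Complex.sub_re, Complex.sub_im, Complex.conj_re, Complex.conj_im,
    Complex.ofReal_re, Complex.ofReal_im]
  nlinarith [mul_pos (sub_pos.mpr hw) (sub_pos.mpr hw0)]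

/-- Borel–Carathéodory type derivative estimate. -/
lemma borel_caratheodory (d M' : ℝ) (hd : 0 < d) (Φ : ℂ → ℂ) (D : ℂ)
    (hdiff : DifferentiableOn ℂ Φ (ball 0 d))
    (hD : HasDerivAt Φ D 0)
    (hre : ∀ ζ ∈ ball (0:ℂ) d, (Φ ζ).re < M') :
    ‖D‖ ≤ 2 * (M' - (Φ 0).re) / d := by
  set β : ℂ := ((2*M' : ℝ) : ℂ) - (starRingEnd ℂ) (Φ 0) with hβdef
  have h0mem : (0:ℂ) ∈ ball (0:ℂ) d := mem_ball_self hd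
  have hΦ0 : (Φ 0).re < M' := hre 0 h0mem
  have hlt : ∀ ζ ∈ ball (0:ℂ) d,
      ‖Φ ζ - Φ 0‖ < ‖Φ ζ - β‖ := fun ζ hζ =>
    mob_lt M' (Φ ζ) (Φ 0) (hre ζ hζ) hΦ0
  have hne : ∀ ζ ∈ ball (0:ℂ) d, Φ ζ - β ≠ 0 := by
    intro ζ hζ hzero
    have := hlt ζ hζ
    rw [hzero] at this
    simp at this
    exact absurd this (not_lt.mpr (norm_nonneg _))
  set F : ℂ → ℂ := fun ζ => (Φ ζ - Φ 0) / (Φ ζ - β) with hFdef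
  have hF0 : F 0 = 0 := by simp [hFdef]
  have hFdiff : DifferentiableOn ℂ F (ball 0 d) :=
    (hdiff.sub_const _).div (hdiff.sub_const _) hne
  have hmaps : MapsTo F (ball (0:ℂ) d) (ball (F 0) 1) := by
    intro ζ hζ
    rw [mem_ball, hF0, dist_zero_right]
    show ‖F ζ‖ < 1
    rw [hFdef]
    simp only [norm_div]
    have hpos : 0 < ‖Φ ζ - β‖ :=
      lt_of_le_of_lt (norm_nonneg _) (hlt ζ hζ)
    rw [div_lt_one hpos]
    exact hlt ζ hζ
  have hschwarz : ‖deriv F 0‖ ≤ 1 / d :=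
    Complex.norm_deriv_le_div_of_mapsTo_ball hFdiff (hmaps.mono_right ball_subset_closedBall) hd
  have hne0 : Φ 0 - β ≠ 0 := hne 0 h0mem
  have hFD : HasDerivAt F ((D * (Φ 0 - β) - (Φ 0 - Φ 0) * D) / (Φ 0 - β)^2) 0 :=
    (hD.sub_const _).div (hD.sub_const _) hne0
  have hderiv : deriv F 0 = D / (Φ 0 - β) := by
    rw [hFD.deriv]
    field_simp
    ring
  rw [hderiv] at hschwarz
  have hβval : Φ 0 - β = ((2*(Φ 0).re - 2*M' : ℝ) : ℂ) := by
    rw [hβdef]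
    rw [Complex.ext_iff]
    constructor <;> simp <;> ring
  have habsβ : ‖Φ 0 - β‖ = 2 * (M' - (Φ 0).re) := by
    rw [hβval, Complex.norm_real, Real.norm_eq_abs, abs_of_neg (by linarith)]
    ring
  rw [show ‖D / (Φ 0 - β)‖ = ‖D‖ / ‖Φ 0 - β‖ by
    simp [norm_div]] at hschwarz
  rw [habsβ] at hschwarz
  have h2 : 0 < 2 * (M' - (Φ 0).re) := by linarith
  rw [div_le_div_iff₀ h2 hd] at hschwarz
  rw [le_div_iff₀ hd]
  linarith


set_option maxHeartbeats 1000000 in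
/-- Gradient estimate: if `f = h + conj g ∈ H_k(G)` extends continuously to `∂G` and
`|f| ∈ Λ_ω(G, ∂G)`, then `|∇f(z)·θ̄| + |∇f̄(z)·θ| ≤ 10CK ω(d_G(z))/d_G(z)` with
`K = (1+k)/(1-k)`, where `d_G(z) = dist(z, ∂G)`.  Here `∇f(z)·θ̄ = (fderiv h z) θ` and
`|∇f̄(z)·θ| = ‖(fderiv g z) θ‖`. -/
theorem gradient_estimate_Hk
    (n : ℕ) (hn : 1 ≤ n) (k C : ℝ) (hk0 : 0 < k) (hk1 : k < 1) (hC : 0 < C)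
    (G : Set (EuclideanSpace ℂ (Fin n))) (hGopen : IsOpen G) (hGconn : IsConnected G)
    (hGproper : Gᶜ.Nonempty)
    (ω : ℝ → ℝ) (hωcont : ContinuousOn ω (Ici 0)) (hωmono : MonotoneOn ω (Ici 0))
    (hω0 : ω 0 = 0) (hωdec : ∀ s t : ℝ, 0 < s → s ≤ t → ω t / t ≤ ω s / s)
    (f h g : EuclideanSpace ℂ (Fin n) → ℂ)
    (hfc : ContinuousOn f (closure G))
    (hh : DifferentiableOn ℂ h G) (hg : DifferentiableOn ℂ g G)
    (hf : ∀ z ∈ G, f z = h z + (starRingEnd ℂ) (g z))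
    (hHk : ∀ z ∈ G, ∀ θ : EuclideanSpace ℂ (Fin n), ‖θ‖ = 1 →
      ‖fderiv ℂ g z θ‖ ≤ k * ‖fderiv ℂ h z θ‖)
    (hbd : ∀ z ∈ G, ∀ w ∈ frontier G,
      |‖f z‖ - ‖f w‖| ≤ C * ω ‖z - w‖) :
    ∀ z ∈ G, ∀ θ : EuclideanSpace ℂ (Fin n), ‖θ‖ = 1 →
      ‖fderiv ℂ h z θ‖ + ‖fderiv ℂ g z θ‖
        ≤ 10 * C * ((1 + k) / (1 - k)) * ω (infDist z Gᶜ) / infDist z Gᶜ := by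
  intro z hz θ hθ
  set d := infDist z Gᶜ with hd_def
  have hGc : IsClosed Gᶜ := hGopen.isClosed_compl
  have hd : 0 < d := by
    rw [hd_def]
    exact (hGc.notMem_iff_infDist_pos hGproper).mp (by simpa using hz)
  have hball : ball z d ⊆ G := by
    intro x hx
    by_contra hxG
    have h1 : d ≤ dist z x := infDist_le_dist_of_mem (hxG : x ∈ Gᶜ)
    rw [mem_ball, dist_comm] at hx
    linarith
  obtain ⟨w, hwGc, hwd⟩ := hGc.exists_infDist_eq_dist hGproper z
  have hzw : ‖z - w‖ = d := by rw [← dist_eq_norm, hd_def, hwd]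
  -- w is in the frontier of G
  have hwcl : w ∈ closure G := by
    rw [Metric.mem_closure_iff]
    intro ε hε
    set t : ℝ := min 1 (ε / (2 * d)) with htdef
    have ht0 : 0 < t := lt_min one_pos (by positivity)
    have ht1 : t ≤ 1 := min_le_left _ _
    refine ⟨z + ((1 - t : ℝ)) • (w - z), hball ?_, ?_⟩
    · rw [mem_ball, dist_eq_norm]
      have : z + ((1 - t : ℝ)) • (w - z) - z = ((1 - t : ℝ)) • (w - z) := by abel
      rw [this, norm_smul]
      have hwz : ‖w - z‖ = d := by rw [norm_sub_rev]; exact hzw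
      rw [hwz, Real.norm_eq_abs, _root_.abs_of_nonneg (by linarith)]
      nlinarith [mul_pos ht0 hd]
    · rw [dist_eq_norm]
      have : w - (z + ((1 - t : ℝ)) • (w - z)) = (t : ℝ) • (w - z) := by
        rw [sub_smul, one_smul]; abel
      rw [this, norm_smul]
      have hwz : ‖w - z‖ = d := by rw [norm_sub_rev]; exact hzw
      rw [hwz, Real.norm_eq_abs, _root_.abs_of_nonneg ht0.le]
      have ht2 : t ≤ ε / (2 * d) := min_le_right _ _
      have : t * d ≤ (ε / (2 * d)) * d := by nlinarith
      have h2 : (ε / (2 * d)) * d = ε / 2 := by field_simp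
      linarith
  have hwfront : w ∈ frontier G := by
    rw [frontier_eq_closure_inter_closure]
    exact ⟨hwcl, subset_closure hwGc⟩
  -- elementary facts about ω
  have hωd0 : 0 ≤ ω d := by
    have := hωmono (mem_Ici.mpr (le_refl (0:ℝ))) (mem_Ici.mpr hd.le) hd.le
    linarith [hω0]
  have hω2d : ω (2 * d) ≤ 2 * ω d := by
    have h1 := hωdec d (2 * d) hd (by linarith)
    rw [div_le_div_iff₀ (by linarith) hd] at h1
    nlinarith
  -- points on the slice are in G
  have hLmem : ∀ ζ ∈ ball (0:ℂ) d, z + ζ • θ ∈ G := by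
    intro ζ hζ
    apply hball
    rw [mem_ball, dist_eq_norm]
    have : z + ζ • θ - z = ζ • θ := by abel
    rw [this, norm_smul, hθ, mul_one]
    simpa [dist_eq_norm] using hζ
  -- sup bound on the ball
  set M : ℝ := ‖f z‖ + 3 * (C * ω d) with hMdef
  have supf : ∀ ζ ∈ ball (0:ℂ) d, ‖f (z + ζ • θ)‖ ≤ M := by
    intro ζ hζ
    have hLG := hLmem ζ hζ
    have h1 := hbd _ hLG w hwfront
    have h2 := hbd z hz w hwfront
    rw [hzw] at h2
    have hn1 : ‖z + ζ • θ - w‖ ≤ 2 * d := by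
      have heq : z + ζ • θ - w = ζ • θ + (z - w) := by abel
      rw [heq]
      have := norm_add_le (ζ • θ) (z - w)
      rw [norm_smul, hθ, mul_one, hzw] at this
      have hζd : ‖ζ‖ ≤ d := by
        rw [mem_ball, dist_eq_norm, sub_zero] at hζ; linarith
      linarith
    have hω1 : ω ‖z + ζ • θ - w‖ ≤ 2 * ω d :=
      le_trans (hωmono (mem_Ici.mpr (norm_nonneg _)) (mem_Ici.mpr (by positivity)) hn1) hω2d
    have h1' := (abs_sub_le_iff.mp h1).1
    have h2' := (abs_sub_le_iff.mp h2).2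
    have hC1 : C * ω ‖z + ζ • θ - w‖ ≤ C * (2 * ω d) :=
      mul_le_mul_of_nonneg_left hω1 hC.le
    rw [hMdef]; linarith
  -- choice of rotation α
  obtain ⟨α, hα1, hαf⟩ : ∃ α : ℂ, ‖α‖ = 1 ∧
      (starRingEnd ℂ) α * f z = ((‖f z‖ : ℝ) : ℂ) := by
    by_cases h0 : f z = 0
    · exact ⟨1, by simp, by simp [h0]⟩
    · refine ⟨f z / ‖f z‖, by simp [map_div₀, h0], ?_⟩
      have habs : ‖f z‖ ≠ 0 := by simpa using h0
      have hcast : ((‖f z‖ : ℝ) : ℂ) ≠ 0 := by exact_mod_cast habs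
      rw [map_div₀, Complex.conj_ofReal, div_mul_eq_mul_div, mul_comm, Complex.mul_conj,
        Complex.normSq_eq_norm_sq]
      rw [div_eq_iff hcast]
      push_cast
      ring
  -- derivatives along the slice
  have hL : ∀ ζ : ℂ, HasDerivAt (fun ζ : ℂ => z + ζ • θ) θ ζ := by
    intro ζ
    have h1 : HasDerivAt (fun ζ : ℂ => ζ • θ) ((1:ℂ) • θ) ζ := (hasDerivAt_id ζ).smul_const θ
    simpa using h1.const_add z
  have hslice : ∀ (u : EuclideanSpace ℂ (Fin n) → ℂ), DifferentiableOn ℂ u G →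
      ∀ ζ ∈ ball (0:ℂ) d,
      HasDerivAt (fun ζ : ℂ => u (z + ζ • θ)) (fderiv ℂ u (z + ζ • θ) θ) ζ := by
    intro u hu ζ hζ
    have hmem := hLmem ζ hζ
    have hud : DifferentiableAt ℂ u (z + ζ • θ) :=
      hu.differentiableAt (hGopen.mem_nhds hmem)
    exact hud.hasFDerivAt.comp_hasDerivAt ζ (hL ζ)
  set Φ : ℂ → ℂ := fun ζ =>
    (starRingEnd ℂ) α * h (z + ζ • θ) + α * g (z + ζ • θ) with hΦdef
  have hΦderiv : ∀ ζ ∈ ball (0:ℂ) d, HasDerivAt Φ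
      ((starRingEnd ℂ) α * fderiv ℂ h (z + ζ • θ) θ + α * fderiv ℂ g (z + ζ • θ) θ) ζ := by
    intro ζ hζ
    exact ((hslice h hh ζ hζ).const_mul _).add ((hslice g hg ζ hζ).const_mul _)
  have hΦdiffOn : DifferentiableOn ℂ Φ (ball 0 d) := fun ζ hζ =>
    ((hΦderiv ζ hζ).differentiableAt).differentiableWithinAt
  have hL0 : z + (0:ℂ) • θ = z := by simp
  set a : ℂ := fderiv ℂ h z θ with hadef
  set b : ℂ := fderiv ℂ g z θ with hbdef
  set D : ℂ := (starRingEnd ℂ) α * a + α * b with hDdef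
  have hD0 : HasDerivAt Φ D 0 := by
    have := hΦderiv 0 (mem_ball_self hd)
    rwa [hL0] at this
  -- real part identities
  have hΦre : ∀ ζ ∈ ball (0:ℂ) d, (Φ ζ).re = ((starRingEnd ℂ) α * f (z + ζ • θ)).re := by
    intro ζ hζ
    rw [hf _ (hLmem ζ hζ), hΦdef]
    simp only [mul_add, Complex.add_re]
    congr 1
    rw [← map_mul]
    exact (Complex.conj_re _).symm
  -- real part bounds
  have hre : ∀ ζ ∈ ball (0:ℂ) d, (Φ ζ).re ≤ M := by
    intro ζ hζ
    rw [hΦre ζ hζ]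
    calc ((starRingEnd ℂ) α * f (z + ζ • θ)).re
        ≤ ‖(starRingEnd ℂ) α * f (z + ζ • θ)‖ := Complex.re_le_norm _
      _ = ‖f (z + ζ • θ)‖ := by
          rw [norm_mul, Complex.norm_conj, hα1, one_mul]
      _ ≤ M := supf ζ hζ
  have hΦ0re : (Φ 0).re = ‖f z‖ := by
    rw [hΦre 0 (mem_ball_self hd), hL0, hαf, Complex.ofReal_re]
  -- Borel–Caratheodory with margin ε, then ε → 0
  have hDle : ‖D‖ ≤ 2 * (3 * (C * ω d)) / d := by
    have hstep : ∀ ε : ℝ, 0 < ε → ‖D‖ ≤ 2 * (3 * (C * ω d)) / d + 2 * ε / d := by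
      intro ε hε
      have hB := borel_caratheodory d (M + ε) hd Φ D hΦdiffOn hD0
        (fun ζ hζ => lt_of_le_of_lt (hre ζ hζ) (by linarith))
      rw [hΦ0re, hMdef] at hB
      calc ‖D‖
          ≤ 2 * (‖f z‖ + 3 * (C * ω d) + ε - ‖f z‖) / d := hB
        _ = 2 * (3 * (C * ω d)) / d + 2 * ε / d := by field_simp; ring
    apply le_of_forall_pos_le_add
    intro δ hδ
    have h1 := hstep (δ * d / 2) (by positivity)
    have h2 : 2 * (δ * d / 2) / d = δ := by field_simp
    linarith
  -- relate D to the two gradients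
  have hA : ‖a‖ ≤ ‖D‖ + ‖b‖ := by
    have h1 : (starRingEnd ℂ) α * a = D - α * b := by rw [hDdef]; ring
    have h2 : ‖a‖ = ‖(starRingEnd ℂ) α * a‖ := by
      rw [norm_mul, RCLike.norm_conj, hα1, one_mul]
    have h3 : ‖α * b‖ = ‖b‖ := by rw [norm_mul, hα1, one_mul]
    rw [h2, h1]
    calc ‖D - α * b‖ ≤ ‖D‖ + ‖α * b‖ := norm_sub_le _ _
      _ = ‖D‖ + ‖b‖ := by rw [h3]
  have hB : ‖b‖ ≤ k * ‖a‖ := hHk z hz θ hθ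
  -- final algebra
  have hk1' : 0 < 1 - k := by linarith
  have h4 : (1 - k) * ‖a‖ ≤ 2 * (3 * (C * ω d)) / d := by linarith
  rw [le_div_iff₀ hd] at h4
  show ‖a‖ + ‖b‖ ≤ 10 * C * ((1 + k) / (1 - k)) * ω d / d
  have hrw : 10 * C * ((1 + k) / (1 - k)) * ω d / d
      = 10 * C * (1 + k) * ω d / ((1 - k) * d) := by
    field_simp
  rw [hrw, le_div_iff₀ (by positivity : (0:ℝ) < (1 - k) * d)]
  nlinarith [norm_nonneg a, norm_nonneg b, mul_nonneg (mul_nonneg hC.le hωd0) hk0.le,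
    mul_nonneg hC.le hωd0, mul_le_mul_of_nonneg_left h4 (by linarith : (0:ℝ) ≤ 1 + k),
    mul_le_mul_of_nonneg_right hB (by positivity : (0:ℝ) ≤ (1 - k) * d)]
end

section
/- Let ω be a majorant satisfying ∫₀^δ ω(t)/t dt ≤ C₀ω(δ) for 0 < δ < δ₀, let G ⊂ ℂ^n be a proper subdomain, and f ∈ H_k(G). Then f ∈ Λ_{ω,inf}(G) if and only if |f| ∈ Λ_{ω,inf}(G). -/
open Metric Set

/-- The weighted length `∫_γ ω(d_G(ζ))/d_G(ζ) ds(ζ)` of a curve `γ : [0,1] → G`. -/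
noncomputable def curveOmegaIntegral {n : ℕ} (ω : ℝ → ℝ)
    (G : Set (EuclideanSpace ℂ (Fin n))) (γ : ℝ → EuclideanSpace ℂ (Fin n)) : ℝ :=
  ∫ t in (0:ℝ)..1, ω (infDist (γ t) Gᶜ) / infDist (γ t) Gᶜ * ‖deriv γ t‖

/-- `d_{ω,G}(z₁,z₂)`: the infimum of the weighted lengths over rectifiable
(Lipschitz) curves in `G` joining `z₁` and `z₂`. -/
noncomputable def dOmega {n : ℕ} (ω : ℝ → ℝ) (G : Set (EuclideanSpace ℂ (Fin n)))
    (z₁ z₂ : EuclideanSpace ℂ (Fin n)) : ℝ :=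
  sInf { I : ℝ | ∃ γ : ℝ → EuclideanSpace ℂ (Fin n),
    (∃ L : NNReal, LipschitzWith L γ) ∧ γ 0 = z₁ ∧ γ 1 = z₂ ∧
    (∀ t ∈ Icc (0:ℝ) 1, γ t ∈ G) ∧ I = curveOmegaIntegral ω G γ }

open MeasureTheory Filter

section Helpers

variable {n : ℕ}

lemma mem_of_dist_lt_infDist {G : Set (EuclideanSpace ℂ (Fin n))}
    {z w : EuclideanSpace ℂ (Fin n)} (h : dist w z < infDist z Gᶜ) : w ∈ G := by
  by_contra hw
  have : infDist z Gᶜ ≤ dist z w := infDist_le_dist_of_mem hw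
  rw [dist_comm] at this; linarith

lemma infDist_pos_of_mem {G : Set (EuclideanSpace ℂ (Fin n))} (hGopen : IsOpen G)
    (hGproper : Gᶜ.Nonempty) {z : EuclideanSpace ℂ (Fin n)} (hz : z ∈ G) :
    0 < infDist z Gᶜ :=
  (hGopen.isClosed_compl.notMem_iff_infDist_pos hGproper).1 (by simpa using hz)

lemma omega_nonneg {ω : ℝ → ℝ} (hωmono : MonotoneOn ω (Ici 0)) (hω0 : ω 0 = 0)
    {t : ℝ} (ht : 0 ≤ t) : 0 ≤ ω t := by
  have := hωmono (show (0:ℝ) ∈ Ici 0 by simp) ht ht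
  rwa [hω0] at this

lemma integrand_nonneg {ω : ℝ → ℝ} (hωmono : MonotoneOn ω (Ici 0)) (hω0 : ω 0 = 0)
    (G : Set (EuclideanSpace ℂ (Fin n))) (x : EuclideanSpace ℂ (Fin n)) :
    0 ≤ ω (infDist x Gᶜ) / infDist x Gᶜ := by
  rcases eq_or_lt_of_le (infDist_nonneg (s := Gᶜ) (x := x)) with h | h
  · rw [← h, hω0]; simp
  · exact div_nonneg (omega_nonneg hωmono hω0 h.le) h.le

lemma curveOmegaIntegral_nonneg {ω : ℝ → ℝ} (hωmono : MonotoneOn ω (Ici 0)) (hω0 : ω 0 = 0)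
    (G : Set (EuclideanSpace ℂ (Fin n))) (γ : ℝ → EuclideanSpace ℂ (Fin n)) :
    0 ≤ curveOmegaIntegral ω G γ :=
  intervalIntegral.integral_nonneg zero_le_one
    (fun t _ => mul_nonneg (integrand_nonneg hωmono hω0 G _) (norm_nonneg _))

lemma dOmega_nonneg {ω : ℝ → ℝ} (hωmono : MonotoneOn ω (Ici 0)) (hω0 : ω 0 = 0)
    (G : Set (EuclideanSpace ℂ (Fin n))) (z₁ z₂ : EuclideanSpace ℂ (Fin n)) :
    0 ≤ dOmega ω G z₁ z₂ := by
  apply Real.sInf_nonneg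
  rintro I ⟨γ, -, -, -, -, rfl⟩
  exact curveOmegaIntegral_nonneg hωmono hω0 G γ

lemma dOmega_bddBelow {ω : ℝ → ℝ} (hωmono : MonotoneOn ω (Ici 0)) (hω0 : ω 0 = 0)
    (G : Set (EuclideanSpace ℂ (Fin n))) (z₁ z₂ : EuclideanSpace ℂ (Fin n)) :
    BddBelow { I : ℝ | ∃ γ : ℝ → EuclideanSpace ℂ (Fin n),
      (∃ L : NNReal, LipschitzWith L γ) ∧ γ 0 = z₁ ∧ γ 1 = z₂ ∧
      (∀ t ∈ Icc (0:ℝ) 1, γ t ∈ G) ∧ I = curveOmegaIntegral ω G γ } := by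
  refine ⟨0, ?_⟩
  rintro I ⟨γ, -, -, -, -, rfl⟩
  exact curveOmegaIntegral_nonneg hωmono hω0 G γ

/-- The straight segment from `z` to `w`, as a curve `ℝ → E`. -/
noncomputable def seg {E : Type*} [NormedAddCommGroup E] [NormedSpace ℝ E]
    (z w : E) : ℝ → E := fun t => z + t • (w - z)

lemma seg_lipschitz {E : Type*} [NormedAddCommGroup E] [NormedSpace ℝ E] (z w : E) :
    LipschitzWith ‖w - z‖₊ (seg z w) := by
  apply LipschitzWith.of_dist_le_mul
  intro s t
  have : seg z w s - seg z w t = (s - t) • (w - z) := by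
    simp only [seg, sub_smul]; abel
  rw [dist_eq_norm, this, norm_smul, dist_eq_norm]
  simp [Real.norm_eq_abs, mul_comm]

lemma seg_deriv {E : Type*} [NormedAddCommGroup E] [NormedSpace ℝ E] (z w : E) (t : ℝ) :
    deriv (seg z w) t = w - z := by
  have : HasDerivAt (seg z w) (w - z) t := by
    have h1 : HasDerivAt (fun s : ℝ => s • (w - z)) ((1:ℝ) • (w - z)) t :=
      (hasDerivAt_id t).smul_const (w - z)
    have h2 := h1.const_add z
    rw [one_smul] at h2
    exact h2
  exact this.deriv

lemma seg_dist (z w : EuclideanSpace ℂ (Fin n)) {t : ℝ} (ht : t ∈ Icc (0:ℝ) 1) :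
    dist (seg z w t) z ≤ ‖w - z‖ := by
  have : seg z w t - z = t • (w - z) := by simp [seg]
  rw [dist_eq_norm, this, norm_smul, Real.norm_eq_abs, abs_of_nonneg ht.1]
  nlinarith [norm_nonneg (w - z), ht.2]

lemma dOmega_segment_le {G : Set (EuclideanSpace ℂ (Fin n))} {ω : ℝ → ℝ}
    (hωcont : ContinuousOn ω (Ici 0)) (hωmono : MonotoneOn ω (Ici 0)) (hω0 : ω 0 = 0)
    (hωdec : ∀ s t : ℝ, 0 < s → s ≤ t → ω t / t ≤ ω s / s)
    {z w : EuclideanSpace ℂ (Fin n)} (hd : 0 < infDist z Gᶜ)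
    (hw : ‖w - z‖ ≤ infDist z Gᶜ / 2) :
    dOmega ω G z w ≤ 2 * ω (infDist z Gᶜ) / infDist z Gᶜ * ‖w - z‖ := by
  set d := infDist z Gᶜ with hdd
  -- the segment stays in G and its distance to the boundary is ≥ d/2
  have hmem : ∀ t ∈ Icc (0:ℝ) 1, seg z w t ∈ G := fun t ht =>
    mem_of_dist_lt_infDist (lt_of_le_of_lt (seg_dist z w ht) (by linarith))
  have hdist2 : ∀ t ∈ Icc (0:ℝ) 1, d / 2 ≤ infDist (seg z w t) Gᶜ := by
    intro t ht
    have h1 : d ≤ infDist (seg z w t) Gᶜ + dist z (seg z w t) :=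
      infDist_le_infDist_add_dist
    have h2 : dist z (seg z w t) ≤ ‖w - z‖ := by
      rw [dist_comm]; exact seg_dist z w ht
    linarith
  -- pointwise bound for the weight along the segment
  have hptw : ∀ t ∈ Icc (0:ℝ) 1,
      ω (infDist (seg z w t) Gᶜ) / infDist (seg z w t) Gᶜ ≤ 2 * ω d / d := by
    intro t ht
    have h1 := hωdec (d/2) (infDist (seg z w t) Gᶜ) (by linarith) (hdist2 t ht)
    have h2 : ω (d/2) ≤ ω d := hωmono (by simp; linarith) (by simp; linarith) (by linarith)
    have h3 : ω (d/2) / (d/2) ≤ ω d / (d/2) := by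
      apply div_le_div_of_nonneg_right h2 (by linarith) |>.trans_eq rfl
    calc ω (infDist (seg z w t) Gᶜ) / infDist (seg z w t) Gᶜ
        ≤ ω (d/2) / (d/2) := h1
      _ ≤ ω d / (d/2) := h3
      _ = 2 * ω d / d := by field_simp
  -- the curve integral of the segment
  have hcont : ContinuousOn
      (fun t => ω (infDist (seg z w t) Gᶜ) / infDist (seg z w t) Gᶜ * ‖deriv (seg z w) t‖)
      (Icc (0:ℝ) 1) := by
    have hγ : Continuous (seg z w) := by
      have := (seg_lipschitz z w).continuous; exact this
    have hdd' : ContinuousOn (fun t => infDist (seg z w t) Gᶜ) (Icc (0:ℝ) 1) :=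
      ((continuous_infDist_pt Gᶜ).comp hγ).continuousOn
    have hnum : ContinuousOn (fun t => ω (infDist (seg z w t) Gᶜ)) (Icc (0:ℝ) 1) :=
      hωcont.comp hdd' (fun t _ => infDist_nonneg)
    have hdiv : ContinuousOn (fun t => ω (infDist (seg z w t) Gᶜ) / infDist (seg z w t) Gᶜ)
        (Icc (0:ℝ) 1) :=
      hnum.div hdd' (fun t ht => by have := hdist2 t ht; linarith)
    simp only [seg_deriv]
    exact hdiv.mul continuousOn_const
  have hint : IntervalIntegrable
      (fun t => ω (infDist (seg z w t) Gᶜ) / infDist (seg z w t) Gᶜ * ‖deriv (seg z w) t‖)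
      volume 0 1 := by
    simp only [seg_deriv]
    apply ContinuousOn.intervalIntegrable
    rw [uIcc_of_le zero_le_one]
    simpa only [seg_deriv] using hcont
  have hIle : curveOmegaIntegral ω G (seg z w) ≤ 2 * ω d / d * ‖w - z‖ := by
    rw [curveOmegaIntegral]
    have : (2 * ω d / d * ‖w - z‖ : ℝ) = ∫ _ in (0:ℝ)..1, 2 * ω d / d * ‖w - z‖ := by simp
    rw [this]
    apply intervalIntegral.integral_mono_on zero_le_one hint intervalIntegrable_const
    intro t ht
    rw [seg_deriv]
    have h0 : 0 ≤ ‖w - z‖ := norm_nonneg _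
    exact mul_le_mul_of_nonneg_right (hptw t ht) h0
  refine le_trans (csInf_le (dOmega_bddBelow hωmono hω0 G z w) ?_) hIle
  exact ⟨seg z w, ⟨_, seg_lipschitz z w⟩, by simp [seg], by simp [seg], hmem, rfl⟩

/-- Step A: the pointwise gradient estimate from the Lipschitz bound on `|f|`. -/
lemma grad_estimate {G : Set (EuclideanSpace ℂ (Fin n))} (hGopen : IsOpen G)
    (hGproper : Gᶜ.Nonempty) {ω : ℝ → ℝ}
    (hωcont : ContinuousOn ω (Ici 0)) (hωmono : MonotoneOn ω (Ici 0)) (hω0 : ω 0 = 0)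
    (hωdec : ∀ s t : ℝ, 0 < s → s ≤ t → ω t / t ≤ ω s / s)
    {k : ℝ} (hk1 : k < 1)
    {f h g : EuclideanSpace ℂ (Fin n) → ℂ}
    (hh : DifferentiableOn ℂ h G) (hg : DifferentiableOn ℂ g G)
    (hf : ∀ z ∈ G, f z = h z + (starRingEnd ℂ) (g z))
    {C : ℝ} (hC0 : 0 < C)
    (hC : ∀ z₁ ∈ G, ∀ z₂ ∈ G, |‖f z₁‖ - ‖f z₂‖| ≤ C * dOmega ω G z₁ z₂)
    {z : EuclideanSpace ℂ (Fin n)} (hz : z ∈ G)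
    {θ : EuclideanSpace ℂ (Fin n)} (hθ : ‖θ‖ = 1)
    (hkθ : ‖fderiv ℂ g z θ‖ ≤ k * ‖fderiv ℂ h z θ‖) :
    (1 - k) * ‖fderiv ℂ h z θ‖ ≤
      C * (2 * ω (infDist z Gᶜ) / infDist z Gᶜ) := by
  classical
  set d := infDist z Gᶜ with hdd
  have hd : 0 < d := by
    have : z ∉ Gᶜ := by simpa using hz
    exact (hGopen.isClosed_compl.notMem_iff_infDist_pos hGproper).1 this
  have hK0 : 0 ≤ C * (2 * ω d / d) := by
    have hω : 0 ≤ ω d := omega_nonneg hωmono hω0 hd.le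
    positivity
  set A := fderiv ℂ h z θ with hA
  set B := fderiv ℂ g z θ with hB
  -- the unit number λ with (λ * f z).re = ‖f z‖
  set lam : ℂ := if f z = 0 then 1 else (starRingEnd ℂ) (f z) / (‖f z‖ : ℂ) with hlam
  have hlam1 : ‖lam‖ = 1 := by
    rw [hlam]
    split_ifs with h0
    · simp
    · rw [norm_div]
      simp [h0, norm_ne_zero_iff.2 h0, div_self]
  have hlamre : (lam * f z).re = ‖f z‖ := by
    rw [hlam]
    split_ifs with h0
    · simp [h0]
    · have : (starRingEnd ℂ) (f z) / (‖f z‖ : ℂ) * f z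
          = ((Complex.normSq (f z) : ℂ)) / (‖f z‖ : ℂ) := by
        rw [div_mul_eq_mul_div, mul_comm, Complex.mul_conj]
      rw [this]
      have hfz : ‖f z‖ ≠ 0 := norm_ne_zero_iff.2 h0
      rw [show ((Complex.normSq (f z) : ℂ)) / (‖f z‖ : ℂ)
          = ((Complex.normSq (f z) / ‖f z‖ : ℝ) : ℂ) by push_cast; ring]
      rw [Complex.ofReal_re, Complex.normSq_eq_norm_sq]
      rw [div_eq_mul_inv, sq, mul_assoc, mul_inv_cancel₀ hfz, mul_one]
  have hre_le : ∀ w : ℂ, (lam * w).re ≤ ‖w‖ := by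
    intro w
    calc (lam * w).re ≤ ‖lam * w‖ := by
          exact Complex.re_le_norm _
      _ = ‖w‖ := by rw [norm_mul, hlam1, one_mul]
  set c : ℂ := lam * A + (starRingEnd ℂ) lam * B with hc
  have hAc : (1 - k) * ‖A‖ ≤ ‖c‖ := by
    have h1 : ‖A‖ - ‖B‖ ≤ ‖c‖ := by
      have : ‖lam * A‖ ≤ ‖c‖ + ‖(starRingEnd ℂ) lam * B‖ := by
        have : lam * A = c - (starRingEnd ℂ) lam * B := by rw [hc]; ring
        rw [this]; exact norm_sub_le _ _
      rw [norm_mul, hlam1, one_mul] at this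
      rw [norm_mul, RCLike.norm_conj, hlam1, one_mul] at this
      linarith
    nlinarith [norm_nonneg A, norm_nonneg B, hkθ]
  rcases eq_or_ne c 0 with hc0 | hc0
  · have : (1 - k) * ‖A‖ ≤ 0 := by rw [hc0] at hAc; simpa using hAc
    linarith
  -- the unit number μ with (μ * c).re = ‖c‖
  set μ : ℂ := (starRingEnd ℂ) c / (‖c‖ : ℂ) with hμ
  have hμ1 : ‖μ‖ = 1 := by
    rw [hμ, norm_div]
    simp [hc0, norm_ne_zero_iff.2 hc0, div_self]
  have hμc : (μ * c).re = ‖c‖ := by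
    have : μ * c = ((Complex.normSq c : ℂ)) / (‖c‖ : ℂ) := by
      rw [hμ, div_mul_eq_mul_div, mul_comm, Complex.mul_conj]
    rw [this]
    have hcne : ‖c‖ ≠ 0 := norm_ne_zero_iff.2 hc0
    rw [show ((Complex.normSq c : ℂ)) / (‖c‖ : ℂ)
        = ((Complex.normSq c / ‖c‖ : ℝ) : ℂ) by push_cast; ring]
    rw [Complex.ofReal_re, Complex.normSq_eq_norm_sq]
    rw [div_eq_mul_inv, sq, mul_assoc, mul_inv_cancel₀ hcne, mul_one]
  -- the direction v and the curve F
  set v : EuclideanSpace ℂ (Fin n) := μ • θ with hv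
  have hv1 : ‖v‖ = 1 := by rw [hv, norm_smul, hμ1, hθ, one_mul]
  set line : ℝ → EuclideanSpace ℂ (Fin n) := fun s => z + s • v with hline
  have hline0 : line 0 = z := by simp [hline]
  have hlineD : HasDerivAt line v 0 := by
    have h1 : HasDerivAt (fun s : ℝ => s • v) ((1:ℝ) • v) 0 := (hasDerivAt_id 0).smul_const v
    have h2 := h1.const_add z
    rw [one_smul] at h2
    exact h2
  have hlinemem : ∀ s : ℝ, |s| < d → line s ∈ G := by
    intro s hs
    apply mem_of_dist_lt_infDist (z := z)
    rw [hline, dist_eq_norm]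
    simpa [norm_smul, hv1] using hs
  set F : ℝ → ℂ := fun s => f (line s) with hF
  -- derivative of F at 0
  have hDF : HasDerivAt F (μ * A + (starRingEnd ℂ) (μ * B)) 0 := by
    have hhz : DifferentiableAt ℂ h z := hh.differentiableAt (hGopen.mem_nhds hz)
    have hgz : DifferentiableAt ℂ g z := hg.differentiableAt (hGopen.mem_nhds hz)
    have hH : HasDerivAt (fun s => h (line s)) (μ * A) 0 := by
      have hH' : HasFDerivAt h ((fderiv ℂ h z).restrictScalars ℝ) (line 0) := by
        rw [hline0]; exact hhz.hasFDerivAt.restrictScalars ℝ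
      have := hH'.comp_hasDerivAt 0 hlineD
      simpa [hv, (fderiv ℂ h z).map_smul, hA, smul_eq_mul, Function.comp_def] using this
    have hG : HasDerivAt (fun s => g (line s)) (μ * B) 0 := by
      have hG' : HasFDerivAt g ((fderiv ℂ g z).restrictScalars ℝ) (line 0) := by
        rw [hline0]; exact hgz.hasFDerivAt.restrictScalars ℝ
      have := hG'.comp_hasDerivAt 0 hlineD
      simpa [hv, (fderiv ℂ g z).map_smul, hB, smul_eq_mul, Function.comp_def] using this
    have hGc : HasDerivAt (fun s => (starRingEnd ℂ) (g (line s)))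
        ((starRingEnd ℂ) (μ * B)) 0 := by
      have hconj : HasFDerivAt (starRingEnd ℂ)
          (Complex.conjCLE.toContinuousLinearMap) (g (line 0)) :=
        Complex.conjCLE.toContinuousLinearMap.hasFDerivAt
      have := hconj.comp_hasDerivAt 0 hG
      simpa [Function.comp_def] using this
    have hsum := hH.add hGc
    apply hsum.congr_of_eventuallyEq
    have : ∀ᶠ s in nhds (0:ℝ), line s ∈ G := by
      have : Continuous line := by
        apply Continuous.add continuous_const
        exact (continuous_id.smul continuous_const)
      exact this.continuousAt.preimage_mem_nhds (hline0 ▸ hGopen.mem_nhds hz)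
    filter_upwards [this] with s hs
    simpa using hf (line s) hs
  -- the real function u
  set u : ℝ → ℝ := fun s => (lam * (F s - F 0)).re with hu
  have hDu : HasDerivAt u ((lam * (μ * A + (starRingEnd ℂ) (μ * B))).re) 0 := by
    have h1 : HasDerivAt (fun s => F s - F 0) (μ * A + (starRingEnd ℂ) (μ * B)) 0 :=
      hDF.sub_const (F 0)
    have h2 : HasDerivAt (fun s => lam * (F s - F 0))
        (lam * (μ * A + (starRingEnd ℂ) (μ * B))) 0 := h1.const_mul lam
    have h3 := (Complex.reCLM.hasFDerivAt.comp_hasDerivAt 0 h2)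
    simpa [Function.comp_def, hu] using h3
  -- the derivative equals ‖c‖
  have hre_eq : (lam * (μ * A + (starRingEnd ℂ) (μ * B))).re = ‖c‖ := by
    have h1 : lam * (μ * A + (starRingEnd ℂ) (μ * B))
        = μ * (lam * A) + lam * (starRingEnd ℂ) (μ * B) := by ring
    have h2 : (lam * (starRingEnd ℂ) (μ * B)).re
        = ((starRingEnd ℂ) lam * (μ * B)).re := by
      have e : (starRingEnd ℂ) ((starRingEnd ℂ) lam * (μ * B))
          = lam * (starRingEnd ℂ) (μ * B) := by
        rw [map_mul, Complex.conj_conj]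
      rw [← e, Complex.conj_re]
    have h3 : (starRingEnd ℂ) lam * (μ * B) = μ * ((starRingEnd ℂ) lam * B) := by ring
    rw [h1, Complex.add_re, h2, h3]
    have h4 : μ * (lam * A) + μ * ((starRingEnd ℂ) lam * B) = μ * c := by rw [hc]; ring
    rw [show (μ * (lam * A)).re + (μ * ((starRingEnd ℂ) lam * B)).re
        = (μ * (lam * A) + μ * ((starRingEnd ℂ) lam * B)).re by rw [Complex.add_re]]
    rw [h4, hμc]
  -- difference quotient bound
  have hquot : ∀ s : ℝ, s ∈ Ioc (0:ℝ) (d/2) → u s ≤ C * (2 * ω d / d) * s := by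
    intro s hs
    have hsd : |s| < d := by
      rw [abs_of_pos hs.1]; linarith [hs.2]
    have hwmem : line s ∈ G := hlinemem s hsd
    have hnorm : ‖line s - z‖ = s := by
      rw [hline]
      simp only [add_sub_cancel_left]
      rw [norm_smul, hv1, mul_one, Real.norm_eq_abs, abs_of_pos hs.1]
    have h5 : u s ≤ ‖F s‖ - ‖F 0‖ := by
      have h6 : (lam * F s).re ≤ ‖F s‖ := hre_le _
      have e0 : F 0 = f z := by simp only [hF, hline0]
      have h7 : (lam * F 0).re = ‖F 0‖ := by rw [e0]; exact hlamre
      have : u s = (lam * F s).re - (lam * F 0).re := by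
        simp only [hu, mul_sub, Complex.sub_re]
      rw [this, h7]; linarith
    have h8 : ‖F s‖ - ‖F 0‖ ≤ |‖f z‖ - ‖f (line s)‖| := by
      have e1 : ‖F s‖ = ‖f (line s)‖ := rfl
      have e2 : ‖F 0‖ = ‖f z‖ := by
        have : F 0 = f z := by simp only [hF, hline0]
        rw [this]
      rw [e1, e2, abs_sub_comm]
      exact le_abs_self _
    have h9 := hC z hz (line s) hwmem
    have h10 : dOmega ω G z (line s) ≤ 2 * ω d / d * s := by
      have := dOmega_segment_le hωcont hωmono hω0 hωdec (G := G) (z := z) (w := line s)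
        hd (by rw [hnorm]; exact hs.2)
      rwa [hnorm] at this
    calc u s ≤ ‖F s‖ - ‖F 0‖ := h5
      _ ≤ |‖f z‖ - ‖f (line s)‖| := h8
      _ ≤ C * dOmega ω G z (line s) := h9
      _ ≤ C * (2 * ω d / d * s) := by
          apply mul_le_mul_of_nonneg_left h10 hC0.le
      _ = C * (2 * ω d / d) * s := by ring
  -- take the limit of the difference quotients from the right
  have hu0 : u 0 = 0 := by simp [hu]
  have htend : Tendsto (fun s => u s / s) (nhdsWithin 0 (Ioi 0)) (nhds ‖c‖) := by
    have h1 : Tendsto (slope u 0) (nhdsWithin 0 {0}ᶜ) (nhds ‖c‖) := by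
      rw [← hre_eq]
      exact hasDerivAt_iff_tendsto_slope.1 hDu
    have h2 : Tendsto (slope u 0) (nhdsWithin 0 (Ioi 0)) (nhds ‖c‖) :=
      h1.mono_left (nhdsWithin_mono 0 (fun x hx => ne_of_gt hx))
    apply h2.congr
    intro s
    rw [slope_def_field, hu0]
    simp [div_eq_mul_inv, mul_comm]
  have hfinal : ‖c‖ ≤ C * (2 * ω d / d) := by
    apply le_of_tendsto htend
    filter_upwards [Ioc_mem_nhdsGT_of_mem (⟨le_refl (0:ℝ), by linarith⟩ : (0:ℝ) ∈ Ico (0:ℝ) (d/2))]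
      with s hs
    rw [div_le_iff₀ hs.1]
    exact hquot s hs
  linarith [hAc]

lemma seg_dist' (z w : EuclideanSpace ℂ (Fin n)) {t : ℝ} (ht : t ∈ Icc (0:ℝ) 1) :
    dist (seg z w t) w ≤ ‖w - z‖ := by
  have : seg z w t - w = (1 - t) • (z - w) := by
    simp only [seg, sub_smul, one_smul, smul_sub]; abel
  rw [dist_eq_norm, this, norm_smul, Real.norm_eq_abs, abs_of_nonneg (by linarith [ht.2])]
  have : ‖z - w‖ = ‖w - z‖ := norm_sub_rev _ _
  rw [this]
  nlinarith [norm_nonneg (w - z), ht.1]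

/-- concatenation of two curves (reparametrized to `[0,1/2]`, `[1/2,1]`). -/
noncomputable def pcat {E : Type*} (γ₁ γ₂ : ℝ → E) : ℝ → E :=
  fun t => if t ≤ 1/2 then γ₁ (2*t) else γ₂ (2*t - 1)

lemma pcat_lipschitz {E : Type*} [NormedAddCommGroup E] {γ₁ γ₂ : ℝ → E}
    {L₁ L₂ : NNReal} (h₁ : LipschitzWith L₁ γ₁) (h₂ : LipschitzWith L₂ γ₂)
    (hjoin : γ₁ 1 = γ₂ 0) : LipschitzWith (2 * max L₁ L₂) (pcat γ₁ γ₂) := by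
  have key : ∀ s t : ℝ, s ≤ t →
      dist (pcat γ₁ γ₂ s) (pcat γ₁ γ₂ t) ≤ (2 * max L₁ L₂ : NNReal) * dist s t := by
    intro s t hst
    have hL₁ : (L₁ : ℝ) ≤ max (L₁:ℝ) (L₂:ℝ) := le_max_left _ _
    have hL₂ : (L₂ : ℝ) ≤ max (L₁:ℝ) (L₂:ℝ) := le_max_right _ _
    have hM : (0:ℝ) ≤ max (L₁:ℝ) (L₂:ℝ) := le_trans (NNReal.coe_nonneg L₁) hL₁
    have hcast : ((2 * max L₁ L₂ : NNReal) : ℝ) = 2 * max (L₁:ℝ) (L₂:ℝ) := by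
      push_cast; rfl
    rw [hcast, Real.dist_eq, abs_of_nonpos (by linarith), neg_sub]
    have hts : 0 ≤ t - s := by linarith
    unfold pcat
    split_ifs with hs ht
    · calc dist (γ₁ (2*s)) (γ₁ (2*t)) ≤ L₁ * dist (2*s) (2*t) := h₁.dist_le_mul _ _
        _ = (L₁ : ℝ) * (2 * (t - s)) := by
            rw [Real.dist_eq, abs_of_nonpos (by linarith)]; ring
        _ ≤ 2 * max (L₁:ℝ) (L₂:ℝ) * (t - s) := by
            nlinarith [mul_nonneg (sub_nonneg.2 hL₁) hts]
    · have ht' : (1:ℝ)/2 < t := lt_of_not_ge ht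
      calc dist (γ₁ (2*s)) (γ₂ (2*t - 1))
          ≤ dist (γ₁ (2*s)) (γ₁ 1) + dist (γ₁ 1) (γ₂ (2*t - 1)) := dist_triangle _ _ _
        _ = dist (γ₁ (2*s)) (γ₁ 1) + dist (γ₂ 0) (γ₂ (2*t - 1)) := by rw [hjoin]
        _ ≤ (L₁:ℝ) * dist (2*s) 1 + (L₂:ℝ) * dist 0 (2*t - 1) := by
            gcongr
            · exact h₁.dist_le_mul _ _
            · exact h₂.dist_le_mul _ _
        _ = (L₁:ℝ) * (1 - 2*s) + (L₂:ℝ) * (2*t - 1) := by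
            rw [Real.dist_eq, Real.dist_eq, abs_of_nonpos (by linarith),
              abs_of_nonpos (by linarith)]; ring
        _ ≤ 2 * max (L₁:ℝ) (L₂:ℝ) * (t - s) := by
            nlinarith [mul_nonneg (sub_nonneg.2 hL₁) (by linarith : (0:ℝ) ≤ 1/2 - s),
              mul_nonneg (sub_nonneg.2 hL₂) (by linarith : (0:ℝ) ≤ t - 1/2)]
    · linarith
    · have hs' : (1:ℝ)/2 < s := lt_of_not_ge hs
      calc dist (γ₂ (2*s - 1)) (γ₂ (2*t - 1)) ≤ L₂ * dist (2*s-1) (2*t-1) :=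
            h₂.dist_le_mul _ _
        _ = (L₂ : ℝ) * (2 * (t - s)) := by
            rw [Real.dist_eq, abs_of_nonpos (by linarith)]; ring
        _ ≤ 2 * max (L₁:ℝ) (L₂:ℝ) * (t - s) := by
            nlinarith [mul_nonneg (sub_nonneg.2 hL₂) hts]
  apply LipschitzWith.of_dist_le_mul
  intro s t
  rcases le_total s t with hst | hst
  · exact key s t hst
  · rw [dist_comm, dist_comm s t]; exact key t s hst

lemma exists_admissible {G : Set (EuclideanSpace ℂ (Fin n))} (hGopen : IsOpen G)
    (hGconn : IsConnected G) {z₁ z₂ : EuclideanSpace ℂ (Fin n)}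
    (hz₁ : z₁ ∈ G) (hz₂ : z₂ ∈ G) :
    ∃ γ : ℝ → EuclideanSpace ℂ (Fin n),
      (∃ L : NNReal, LipschitzWith L γ) ∧ γ 0 = z₁ ∧ γ 1 = z₂ ∧
      (∀ t ∈ Icc (0:ℝ) 1, γ t ∈ G) := by
  set P : EuclideanSpace ℂ (Fin n) → Prop := fun w =>
    ∃ γ : ℝ → EuclideanSpace ℂ (Fin n),
      (∃ L : NNReal, LipschitzWith L γ) ∧ γ 0 = z₁ ∧ γ 1 = w ∧
      (∀ t ∈ Icc (0:ℝ) 1, γ t ∈ G) with hP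
  have hext : ∀ w w', P w → (∀ t ∈ Icc (0:ℝ) 1, seg w w' t ∈ G) → P w' := by
    rintro w w' ⟨γ, ⟨L, hL⟩, hγ0, hγ1, hγG⟩ hseg
    refine ⟨pcat γ (seg w w'), ⟨2 * max L ‖w' - w‖₊, ?_⟩, ?_, ?_, ?_⟩
    · apply pcat_lipschitz hL (seg_lipschitz w w')
      rw [hγ1]; simp [seg]
    · simp only [pcat]
      norm_num
      exact hγ0
    · simp only [pcat]
      norm_num [seg]
    · intro t ht
      simp only [pcat]
      split_ifs with h2
      · exact hγG _ ⟨by linarith [ht.1], by linarith⟩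
      · push_neg at h2
        exact hseg _ ⟨by linarith, by linarith [ht.2]⟩
  have hconst : P z₁ := ⟨fun _ => z₁, ⟨0, LipschitzWith.const' z₁⟩, rfl, rfl,
    fun t _ => hz₁⟩
  -- S and T
  set S := {w | w ∈ G ∧ P w} with hS
  set T := {w | w ∈ G ∧ ¬ P w} with hT
  have hSopen : IsOpen S := by
    rw [isOpen_iff_forall_mem_open]
    rintro w ⟨hwG, hwP⟩
    obtain ⟨r, hr0, hrball⟩ := Metric.isOpen_iff.1 hGopen w hwG
    refine ⟨ball w r, ?_, isOpen_ball, mem_ball_self hr0⟩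
    intro w' hw'
    refine ⟨hrball hw', hext w w' hwP ?_⟩
    intro t ht
    apply hrball
    calc dist (seg w w' t) w ≤ ‖w' - w‖ := seg_dist w w' ht
      _ = dist w' w := (dist_eq_norm w' w).symm
      _ < r := hw'
  have hTopen : IsOpen T := by
    rw [isOpen_iff_forall_mem_open]
    rintro w ⟨hwG, hwP⟩
    obtain ⟨r, hr0, hrball⟩ := Metric.isOpen_iff.1 hGopen w hwG
    refine ⟨ball w r, ?_, isOpen_ball, mem_ball_self hr0⟩
    intro w' hw'
    refine ⟨hrball hw', fun hPw' => hwP ?_⟩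
    apply hext w' w hPw'
    intro t ht
    apply hrball
    calc dist (seg w' w t) w ≤ ‖w - w'‖ := seg_dist' w' w ht
      _ = dist w' w := by rw [dist_eq_norm, norm_sub_rev]
      _ < r := hw'
  by_cases hz₂P : P z₂
  · obtain ⟨γ, hL, h0, h1, hG⟩ := hz₂P
    exact ⟨γ, hL, h0, h1, hG⟩
  · exfalso
    have h1 : G ⊆ S ∪ T := by
      intro w hw
      by_cases hPw : P w
      · exact Or.inl ⟨hw, hPw⟩
      · exact Or.inr ⟨hw, hPw⟩
    have h2 : (G ∩ S).Nonempty := ⟨z₁, hz₁, hz₁, hconst⟩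
    have h3 : (G ∩ T).Nonempty := ⟨z₂, hz₂, hz₂, hz₂P⟩
    obtain ⟨x, -, ⟨⟨-, hxP⟩, ⟨-, hxnP⟩⟩⟩ :=
      hGconn.isPreconnected S T hSopen hTopen h1 h2 h3
    exact hxnP hxP

/-- FTC-type inequality for Lipschitz functions via shifted difference quotients. -/
lemma lipschitz_ftc_ineq {u gbd : ℝ → ℝ} {K : NNReal}
    (hu : LipschitzWith K u) (hu1 : ∀ t : ℝ, 1 ≤ t → u t = u 1)
    (hae : ∀ᵐ t ∂(volume : Measure ℝ), t ∈ Ioo (0:ℝ) 1 →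
      DifferentiableAt ℝ u t ∧ deriv u t ≤ gbd t)
    (hg : IntervalIntegrable gbd volume 0 1) :
    u 1 - u 0 ≤ ∫ t in (0:ℝ)..1, gbd t := by
  set D : ℝ → ℝ := deriv u with hD
  have hDmeas : Measurable D := measurable_deriv u
  have hucont : Continuous u := hu.continuous
  -- derivative bounded by K
  have hDbd : ∀ t, |D t| ≤ K := by
    intro t
    by_cases hdiff : DifferentiableAt ℝ u t
    · have h1 : Filter.Tendsto (slope u t) (nhdsWithin t {t}ᶜ) (nhds (D t)) :=
        hasDerivAt_iff_tendsto_slope.1 hdiff.hasDerivAt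
      have h2 : Filter.Tendsto (fun s => |slope u t s|) (nhdsWithin t {t}ᶜ) (nhds (|D t|)) :=
        h1.abs
      apply le_of_tendsto h2
      filter_upwards with s
      rw [slope_def_field, abs_div]
      rcases eq_or_ne s t with rfl | hst
      · simp
      · rw [div_le_iff₀ (abs_pos.2 (sub_ne_zero.2 hst))]
        calc |u s - u t| = dist (u s) (u t) := (Real.dist_eq _ _).symm
          _ ≤ K * dist s t := hu.dist_le_mul _ _
          _ = K * |s - t| := by rw [Real.dist_eq]
    · rw [hD, deriv_zero_of_not_differentiableAt hdiff]
      simpa using K.coe_nonneg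
  -- the difference quotients
  set c : ℕ → ℝ := fun n => 1 / (n + 1) with hc
  have hc0 : ∀ n, 0 < c n := fun n => by positivity
  have hcmul : ∀ n : ℕ, c n * (n + 1) = 1 := fun n => by
    rw [hc]; field_simp
  set Fn : ℕ → ℝ → ℝ := fun n t => (u (t + c n) - u t) * (n + 1) with hFn
  have hFncont : ∀ n, Continuous (Fn n) := by
    intro n
    exact ((hucont.comp (continuous_id.add continuous_const)).sub hucont).mul
      continuous_const
  -- uniform bound
  have hFnbd : ∀ n t, |Fn n t| ≤ K := by
    intro n t
    have h1 : |u (t + c n) - u t| ≤ K * c n := by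
      calc |u (t + c n) - u t| = dist (u (t + c n)) (u t) := (Real.dist_eq _ _).symm
        _ ≤ K * dist (t + c n) t := hu.dist_le_mul _ _
        _ = K * c n := by
              rw [Real.dist_eq]; congr 1
              rw [show t + c n - t = c n from by ring]
              exact abs_of_pos (hc0 n)
    have : |Fn n t| = |u (t + c n) - u t| * (n + 1) := by
      rw [hFn, abs_mul, abs_of_pos (by positivity : (0:ℝ) < (n:ℝ) + 1)]
    rw [this]
    calc |u (t + c n) - u t| * (n+1) ≤ K * c n * (n+1) := by
          apply mul_le_mul_of_nonneg_right h1 (by positivity)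
      _ = K * (c n * (n+1)) := by ring
      _ = K := by rw [hcmul, mul_one]
  -- pointwise convergence to D
  have hlim : ∀ᵐ t ∂(volume : Measure ℝ), t ∈ Ioo (0:ℝ) 1 →
      Filter.Tendsto (fun n => Fn n t) atTop (nhds (D t)) := by
    filter_upwards [hae] with t ht hmem
    obtain ⟨hdiff, -⟩ := ht hmem
    have h1 : Filter.Tendsto (slope u t) (nhdsWithin t {t}ᶜ) (nhds (D t)) :=
      hasDerivAt_iff_tendsto_slope.1 hdiff.hasDerivAt
    have h2 : Filter.Tendsto (fun n : ℕ => t + c n) atTop (nhdsWithin t {t}ᶜ) := by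
      apply tendsto_nhdsWithin_of_tendsto_nhds_of_eventually_within
      · have : Filter.Tendsto (fun n : ℕ => c n) atTop (nhds 0) := by
          rw [hc]
          exact tendsto_one_div_add_atTop_nhds_zero_nat
        have := this.const_add t
        simpa using this
      · filter_upwards with n
        simp only [mem_compl_iff, mem_singleton_iff]
        have := hc0 n; intro habs; nlinarith [habs]
    have h3 := h1.comp h2
    apply h3.congr
    intro n
    rw [Function.comp_apply, slope_def_field, hFn]
    simp only []
    rw [add_sub_cancel_left, hc]
    field_simp
  -- DCT over Ioo 0 1
  set μ : Measure ℝ := volume.restrict (Ioo (0:ℝ) 1) with hμ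
  have hmeasμ : ∀ n, AEStronglyMeasurable (Fn n) μ :=
    fun n => (hFncont n).aestronglyMeasurable.restrict
  have hbound : ∀ n, ∀ᵐ t ∂μ, ‖Fn n t‖ ≤ (K:ℝ) := by
    intro n; filter_upwards with t; exact hFnbd n t
  have hboundint : Integrable (fun _ => (K:ℝ)) μ := integrable_const _
  have hlimres : ∀ᵐ t ∂μ, Filter.Tendsto (fun n => Fn n t) atTop (nhds (D t)) := by
    rw [hμ, ae_restrict_iff' measurableSet_Ioo]
    filter_upwards [hlim] with t ht hmem
    exact ht hmem
  have hDCT := MeasureTheory.tendsto_integral_of_dominated_convergence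
    (fun _ => (K:ℝ)) hmeasμ hboundint hbound hlimres
  -- identify ∫ Fn with interval integrals and compute the limit
  have huint : ∀ a b : ℝ, IntervalIntegrable u volume a b :=
    fun a b => hucont.intervalIntegrable a b
  have hshiftint : ∀ n a b, IntervalIntegrable (fun t => u (t + c n)) volume a b :=
    fun n a b => (hucont.comp (continuous_id.add continuous_const)).intervalIntegrable a b
  have hFneq : ∀ n, (∫ t, Fn n t ∂μ) = u 1 - (∫ t in (0:ℝ)..(c n), u t) * (n + 1) := by
    intro n
    have e1 : (∫ t, Fn n t ∂μ) = ∫ t in (0:ℝ)..1, Fn n t := by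
      rw [hμ, intervalIntegral.integral_of_le zero_le_one,
        MeasureTheory.integral_Ioc_eq_integral_Ioo]
    have e2 : (∫ t in (0:ℝ)..1, Fn n t)
        = (∫ t in (0:ℝ)..1, (u (t + c n) - u t)) * ((n:ℝ) + 1) := by
      rw [← intervalIntegral.integral_mul_const]
    have e3 : (∫ t in (0:ℝ)..1, (u (t + c n) - u t))
        = (∫ t in (0:ℝ)..1, u (t + c n)) - ∫ t in (0:ℝ)..1, u t :=
      intervalIntegral.integral_sub (hshiftint n 0 1) (huint 0 1)
    have e4 : (∫ t in (0:ℝ)..1, u (t + c n)) = ∫ t in (c n)..(1 + c n), u t := by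
      have := intervalIntegral.integral_comp_add_right (a := (0:ℝ)) (b := 1) (f := u) (c n)
      rw [this, zero_add]
    have e5 : (∫ t in (c n)..(1 + c n), u t)
        = (∫ t in (c n)..1, u t) + ∫ t in (1:ℝ)..(1 + c n), u t :=
      (intervalIntegral.integral_add_adjacent_intervals (huint _ _) (huint _ _)).symm
    have e6 : (∫ t in (0:ℝ)..1, u t) = (∫ t in (0:ℝ)..(c n), u t) + ∫ t in (c n)..1, u t :=
      (intervalIntegral.integral_add_adjacent_intervals (huint _ _) (huint _ _)).symm
    have e7 : (∫ t in (1:ℝ)..(1 + c n), u t) = c n * u 1 := by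
      have hcn := hc0 n
      have : EqOn u (fun _ => u 1) (uIcc (1:ℝ) (1 + c n)) := by
        intro x hx
        rw [uIcc_of_le (by linarith)] at hx
        exact hu1 x hx.1
      rw [intervalIntegral.integral_congr this, intervalIntegral.integral_const, smul_eq_mul]
      ring
    rw [e1, e2, e3, e4, e5, e6, e7]
    have : (c n * u 1 - (∫ t in (0:ℝ)..(c n), u t)) * ((n:ℝ)+1)
        = c n * ((n:ℝ)+1) * u 1 - (∫ t in (0:ℝ)..(c n), u t) * ((n:ℝ)+1) := by ring
    have hcc : c n * ((n:ℝ)+1) = 1 := hcmul n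
    linear_combination (u 1) * hcc
  -- the limit of the integrals is u 1 - u 0
  have hlim2 : Filter.Tendsto (fun n => ∫ t, Fn n t ∂μ) atTop (nhds (u 1 - u 0)) := by
    have key : ∀ n, |(∫ t, Fn n t ∂μ) - (u 1 - u 0)| ≤ K * c n := by
      intro n
      rw [hFneq n]
      have e8 : (∫ t in (0:ℝ)..(c n), u t) * ((n:ℝ)+1) - u 0
          = (∫ t in (0:ℝ)..(c n), (u t - u 0)) * ((n:ℝ)+1) := by
        rw [intervalIntegral.integral_sub (huint _ _) intervalIntegrable_const,
          intervalIntegral.integral_const, smul_eq_mul, sub_mul]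
        linear_combination (u 0) * (hcmul n)
      have e9 : ‖∫ t in (0:ℝ)..(c n), (u t - u 0)‖ ≤ (K * c n) * |c n - 0| := by
        apply intervalIntegral.norm_integral_le_of_norm_le_const
        intro x hx
        rw [uIoc_of_le (hc0 n).le] at hx
        calc ‖u x - u 0‖ = dist (u x) (u 0) := (Real.dist_eq _ _).symm
          _ ≤ K * dist x 0 := hu.dist_le_mul _ _
          _ = K * x := by rw [Real.dist_eq, sub_zero, abs_of_pos hx.1]
          _ ≤ K * c n := by
              apply mul_le_mul_of_nonneg_left hx.2 K.coe_nonneg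
      have e10 : |(∫ t in (0:ℝ)..(c n), (u t - u 0)) * ((n:ℝ)+1)| ≤ K * c n := by
        rw [abs_mul, abs_of_pos (by positivity : (0:ℝ) < (n:ℝ)+1), ← Real.norm_eq_abs]
        calc ‖∫ t in (0:ℝ)..(c n), (u t - u 0)‖ * ((n:ℝ)+1)
            ≤ ((K * c n) * |c n - 0|) * ((n:ℝ)+1) := by
              apply mul_le_mul_of_nonneg_right e9 (by positivity)
          _ = K * c n * (c n * ((n:ℝ)+1)) := by
              rw [sub_zero, abs_of_pos (hc0 n)]; ring
          _ = K * c n := by rw [hcmul n, mul_one]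
      have e11 : u 1 - (∫ t in (0:ℝ)..(c n), u t) * ((n:ℝ)+1) - (u 1 - u 0)
          = -(((∫ t in (0:ℝ)..(c n), (u t - u 0))) * ((n:ℝ)+1)) := by
        rw [← e8]; ring
      rw [e11, abs_neg]
      exact e10
    have hKc : Filter.Tendsto (fun n => (K:ℝ) * c n) atTop (nhds 0) := by
      have h1 : Filter.Tendsto c atTop (nhds 0) := by
        rw [hc]; exact tendsto_one_div_add_atTop_nhds_zero_nat
      have h2 := h1.const_mul (K:ℝ)
      rw [mul_zero] at h2
      exact h2
    have hsq : Filter.Tendsto (fun n => (∫ t, Fn n t ∂μ) - (u 1 - u 0)) atTop (nhds 0) :=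
      squeeze_zero_norm (fun n => by rw [Real.norm_eq_abs]; exact key n) hKc
    have h3 := hsq.add_const (u 1 - u 0)
    simpa using h3
  -- identify the limit
  have hDint : (∫ t, D t ∂μ) = u 1 - u 0 := tendsto_nhds_unique hDCT hlim2
  -- compare with gbd
  have hDintegrable : Integrable D μ := by
    apply hboundint.mono' (hDmeas.aestronglyMeasurable.restrict)
    filter_upwards with t
    exact hDbd t
  have hgint : Integrable gbd μ := by
    have h1 : IntegrableOn gbd (Ioc (0:ℝ) 1) volume := hg.1
    exact h1.mono_set Ioo_subset_Ioc_self
  have hmono : (∫ t, D t ∂μ) ≤ ∫ t, gbd t ∂μ := by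
    apply integral_mono_ae hDintegrable hgint
    rw [hμ, EventuallyLE, ae_restrict_iff' measurableSet_Ioo]
    filter_upwards [hae] with t ht hmem
    exact (ht hmem).2
  have hfin : (∫ t, gbd t ∂μ) = ∫ t in (0:ℝ)..1, gbd t := by
    rw [hμ, intervalIntegral.integral_of_le zero_le_one,
      MeasureTheory.integral_Ioc_eq_integral_Ioo]
  linarith [hDint ▸ hmono, hfin ▸ hmono]

/-- a function which is uniformly locally `Kc`-Lipschitz is globally Lipschitz -/
lemma lipschitz_of_locally {X : Type*} [PseudoMetricSpace X] {σ : ℝ → X} {δ Kc : ℝ}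
    (hδ : 0 < δ) (hKc : 0 ≤ Kc)
    (hloc : ∀ s t : ℝ, s ≤ t → t - s ≤ δ → dist (σ s) (σ t) ≤ Kc * (t - s)) :
    LipschitzWith Kc.toNNReal σ := by
  have key : ∀ m : ℕ, ∀ s t : ℝ, s ≤ t → t - s ≤ m * δ → dist (σ s) (σ t) ≤ Kc * (t - s) := by
    intro m
    induction m with
    | zero =>
      intro s t hst hts
      simp only [Nat.cast_zero, zero_mul] at hts
      have : s = t := le_antisymm hst (by linarith)
      subst this
      simp
    | succ m ih =>
      intro s t hst hts
      by_cases hcase : t - s ≤ δ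
      · exact hloc s t hst hcase
      · push_neg at hcase
        set r := t - δ with hr
        have h1 : s ≤ r := by rw [hr]; linarith
        have h2 : r ≤ t := by rw [hr]; linarith
        have h3 : r - s ≤ m * δ := by
          rw [hr]
          push_cast at hts ⊢
          linarith
        calc dist (σ s) (σ t) ≤ dist (σ s) (σ r) + dist (σ r) (σ t) := dist_triangle _ _ _
          _ ≤ Kc * (r - s) + Kc * (t - r) := by
              gcongr
              · exact ih s r h1 h3
              · exact hloc r t h2 (by rw [hr]; ring_nf; linarith)
          _ = Kc * (t - s) := by ring
  apply LipschitzWith.of_dist_le_mul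
  intro s t
  rcases le_total s t with hst | hst
  · obtain ⟨m, hm⟩ := exists_nat_ge ((t - s) / δ)
    have h4 : t - s ≤ m * δ := by
      rw [div_le_iff₀ hδ] at hm
      linarith
    calc dist (σ s) (σ t) ≤ Kc * (t - s) := key m s t hst h4
      _ = Kc.toNNReal * dist s t := by
          rw [Real.coe_toNNReal _ hKc, Real.dist_eq, abs_of_nonpos (by linarith), neg_sub]
  · obtain ⟨m, hm⟩ := exists_nat_ge ((s - t) / δ)
    have h4 : s - t ≤ m * δ := by
      rw [div_le_iff₀ hδ] at hm
      linarith
    rw [dist_comm]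
    calc dist (σ t) (σ s) ≤ Kc * (s - t) := key m t s hst h4
      _ = Kc.toNNReal * dist s t := by
          rw [Real.coe_toNNReal _ hKc, Real.dist_eq, abs_of_nonneg (by linarith)]

/-- unit rotation picking out the norm of `w` -/
lemma exists_unit_re (w : ℂ) : ∃ lam : ℂ, ‖lam‖ = 1 ∧ (lam * w).re = ‖w‖ ∧
    ∀ y : ℂ, (lam * y).re ≤ ‖y‖ := by
  classical
  refine ⟨if w = 0 then 1 else (starRingEnd ℂ) w / (‖w‖ : ℂ), ?_, ?_, ?_⟩
  · split_ifs with h0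
    · simp
    · rw [norm_div]
      simp [h0, norm_ne_zero_iff.2 h0, div_self]
  · split_ifs with h0
    · simp [h0]
    · have hwne : ‖w‖ ≠ 0 := norm_ne_zero_iff.2 h0
      have : (starRingEnd ℂ) w / (‖w‖ : ℂ) * w = ((Complex.normSq w : ℂ)) / (‖w‖ : ℂ) := by
        rw [div_mul_eq_mul_div, mul_comm, Complex.mul_conj]
      rw [this]
      rw [show ((Complex.normSq w : ℂ)) / (‖w‖ : ℂ)
          = ((Complex.normSq w / ‖w‖ : ℝ) : ℂ) by push_cast; ring]
      rw [Complex.ofReal_re, Complex.normSq_eq_norm_sq]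
      rw [div_eq_mul_inv, sq, mul_assoc, mul_inv_cancel₀ hwne, mul_one]
  · intro y
    have h1 : ‖(if w = 0 then 1 else (starRingEnd ℂ) w / (‖w‖ : ℂ))‖ = 1 := by
      split_ifs with h0
      · simp
      · rw [norm_div]
        simp [h0, norm_ne_zero_iff.2 h0, div_self]
    calc ((if w = 0 then 1 else (starRingEnd ℂ) w / (‖w‖ : ℂ)) * y).re
        ≤ ‖(if w = 0 then 1 else (starRingEnd ℂ) w / (‖w‖ : ℂ)) * y‖ := by
          exact Complex.re_le_norm _
      _ = ‖y‖ := by rw [norm_mul, h1, one_mul]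

/-- the clamp function to [0,1] -/
noncomputable def clamp01 : ℝ → ℝ := fun t => min 1 (max 0 t)

lemma clamp01_lipschitz : LipschitzWith 1 clamp01 :=
  (LipschitzWith.const_max LipschitzWith.id 0).const_min 1

lemma clamp01_mem (t : ℝ) : clamp01 t ∈ Icc (0:ℝ) 1 := by
  constructor
  · exact le_min zero_le_one (le_max_left 0 t)
  · exact min_le_left 1 _

lemma clamp01_of_mem {t : ℝ} (ht : t ∈ Icc (0:ℝ) 1) : clamp01 t = t := by
  rw [clamp01, max_eq_right ht.1, min_eq_right ht.2]

lemma clamp01_of_ge {t : ℝ} (ht : 1 ≤ t) : clamp01 t = 1 := by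
  rw [clamp01, max_eq_right (by linarith), min_eq_left ht]

set_option maxHeartbeats 1000000 in
lemma curve_bound {G : Set (EuclideanSpace ℂ (Fin n))} (hGopen : IsOpen G)
    (hGproper : Gᶜ.Nonempty) {ω : ℝ → ℝ}
    (hωcont : ContinuousOn ω (Ici 0)) (hωmono : MonotoneOn ω (Ici 0)) (hω0 : ω 0 = 0)
    (hωdec : ∀ s t : ℝ, 0 < s → s ≤ t → ω t / t ≤ ω s / s)
    {k : ℝ} (hk0 : 0 < k) (hk1 : k < 1)
    {f h g : EuclideanSpace ℂ (Fin n) → ℂ}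
    (hh : DifferentiableOn ℂ h G) (hg : DifferentiableOn ℂ g G)
    (hf : ∀ z ∈ G, f z = h z + (starRingEnd ℂ) (g z))
    (hHk : ∀ z ∈ G, ∀ θ : EuclideanSpace ℂ (Fin n), ‖θ‖ = 1 →
      ‖fderiv ℂ g z θ‖ ≤ k * ‖fderiv ℂ h z θ‖)
    {C : ℝ} (hC0 : 0 < C)
    (hC : ∀ z₁ ∈ G, ∀ z₂ ∈ G, |‖f z₁‖ - ‖f z₂‖| ≤ C * dOmega ω G z₁ z₂)
    {z₁ z₂ : EuclideanSpace ℂ (Fin n)} (hz₁ : z₁ ∈ G) (hz₂ : z₂ ∈ G)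
    {γ : ℝ → EuclideanSpace ℂ (Fin n)} {L : NNReal} (hγL : LipschitzWith L γ)
    (hγ0 : γ 0 = z₁) (hγ1 : γ 1 = z₂) (hγG : ∀ t ∈ Icc (0:ℝ) 1, γ t ∈ G) :
    ‖f z₁ - f z₂‖ ≤ (2*C*(1+k)/(1-k)) * curveOmegaIntegral ω G γ := by
  classical
  letI : MeasurableSpace (EuclideanSpace ℂ (Fin n)) := borel _
  haveI : BorelSpace (EuclideanSpace ℂ (Fin n)) := ⟨rfl⟩
  have hk1' : (0:ℝ) < 1 - k := by linarith
  set M0 : ℝ := 2*C*(1+k)/(1-k) with hM0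
  have hM0pos : 0 < M0 := by
    apply div_pos (by nlinarith) hk1'
  -- the real Fréchet derivative of f
  set conjL : ℂ →L[ℝ] ℂ := Complex.conjCLE.toContinuousLinearMap with hconjL
  set Phi : EuclideanSpace ℂ (Fin n) → (EuclideanSpace ℂ (Fin n) →L[ℝ] ℂ) := fun x =>
    ((fderiv ℂ h x).restrictScalars ℝ) + (conjL.comp ((fderiv ℂ g x).restrictScalars ℝ))
    with hPhi
  have hfD : ∀ x ∈ G, HasFDerivAt f (Phi x) x := by
    intro x hx
    have hhx : HasFDerivAt h ((fderiv ℂ h x).restrictScalars ℝ) x :=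
      (hh.differentiableAt (hGopen.mem_nhds hx)).hasFDerivAt.restrictScalars ℝ
    have hgx : HasFDerivAt g ((fderiv ℂ g x).restrictScalars ℝ) x :=
      (hg.differentiableAt (hGopen.mem_nhds hx)).hasFDerivAt.restrictScalars ℝ
    have hconj : HasFDerivAt (fun y => (starRingEnd ℂ) (g y))
        (conjL.comp ((fderiv ℂ g x).restrictScalars ℝ)) x := by
      have := (conjL.hasFDerivAt (x := g x)).comp x hgx
      exact this
    have hsum := hhx.add hconj
    apply hsum.congr_of_eventuallyEq
    filter_upwards [hGopen.mem_nhds hx] with y hy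
    exact hf y hy
  -- pointwise bound on Phi
  have hΦv : ∀ x ∈ G, ∀ v : EuclideanSpace ℂ (Fin n),
      ‖Phi x v‖ ≤ M0 * (ω (infDist x Gᶜ) / infDist x Gᶜ) * ‖v‖ := by
    intro x hx v
    rcases eq_or_ne v 0 with rfl | hv0
    · simp
    · set θ : EuclideanSpace ℂ (Fin n) := ‖v‖⁻¹ • v with hθdef
      have hθ : ‖θ‖ = 1 := norm_smul_inv_norm hv0
      have hvθ : v = ‖v‖ • θ := by
        rw [hθdef, smul_inv_smul₀ (norm_ne_zero_iff.2 hv0)]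
      have hdh : ‖(fderiv ℂ h x) v‖ = ‖v‖ * ‖(fderiv ℂ h x) θ‖ := by
        conv_lhs => rw [hvθ]
        rw [ContinuousLinearMap.map_smul_of_tower, norm_smul, Real.norm_eq_abs,
          abs_of_nonneg (norm_nonneg v)]
      have hdg : ‖(fderiv ℂ g x) v‖ = ‖v‖ * ‖(fderiv ℂ g x) θ‖ := by
        conv_lhs => rw [hvθ]
        rw [ContinuousLinearMap.map_smul_of_tower, norm_smul, Real.norm_eq_abs,
          abs_of_nonneg (norm_nonneg v)]
      have hk := hHk x hx θ hθ
      have hge := grad_estimate hGopen hGproper hωcont hωmono hω0 hωdec hk1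
        hh hg hf hC0 hC hx hθ hk
      have hθb : ‖(fderiv ℂ h x) θ‖ ≤ C * (2 * ω (infDist x Gᶜ) / infDist x Gᶜ) / (1-k) := by
        rw [le_div_iff₀ hk1']
        linarith [hge]
      have h1 : ‖Phi x v‖ ≤ ‖(fderiv ℂ h x) v‖ + ‖(fderiv ℂ g x) v‖ := by
        have e : Phi x v = (fderiv ℂ h x) v + conjL ((fderiv ℂ g x) v) := by
          rw [hPhi]; rfl
        rw [e]
        refine (norm_add_le _ _).trans ?_
        have econj : ‖conjL ((fderiv ℂ g x) v)‖ = ‖(fderiv ℂ g x) v‖ := by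
          rw [hconjL]
          simp [Complex.conjCLE_apply]
        rw [econj]
      calc ‖Phi x v‖ ≤ ‖(fderiv ℂ h x) v‖ + ‖(fderiv ℂ g x) v‖ := h1
        _ = ‖v‖ * ‖(fderiv ℂ h x) θ‖ + ‖v‖ * ‖(fderiv ℂ g x) θ‖ := by rw [hdh, hdg]
        _ ≤ ‖v‖ * ‖(fderiv ℂ h x) θ‖ + ‖v‖ * (k * ‖(fderiv ℂ h x) θ‖) := by
            gcongr
        _ = (1 + k) * ‖(fderiv ℂ h x) θ‖ * ‖v‖ := by ring
        _ ≤ (1 + k) * (C * (2 * ω (infDist x Gᶜ) / infDist x Gᶜ) / (1-k)) * ‖v‖ := by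
            gcongr
        _ = M0 * (ω (infDist x Gᶜ) / infDist x Gᶜ) * ‖v‖ := by
            rw [hM0]; field_simp
  -- compact image and distance bounds
  set K : Set (EuclideanSpace ℂ (Fin n)) := γ '' (Icc 0 1) with hK
  have hKcomp : IsCompact K := (isCompact_Icc).image hγL.continuous
  have hKne : K.Nonempty := ⟨z₁, ⟨0, by simp, hγ0⟩⟩
  have hKG : K ⊆ G := by rintro x ⟨t, ht, rfl⟩; exact hγG t ht
  obtain ⟨x₀, hx₀K, hmin'⟩ := hKcomp.exists_isMinOn hKne
    ((continuous_infDist_pt Gᶜ).continuousOn)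
  obtain ⟨x₁, hx₁K, hmax'⟩ := hKcomp.exists_isMaxOn hKne
    ((continuous_infDist_pt Gᶜ).continuousOn)
  have hmin : ∀ y ∈ K, infDist x₀ Gᶜ ≤ infDist y Gᶜ := fun y hy => hmin' hy
  have hmax : ∀ y ∈ K, infDist y Gᶜ ≤ infDist x₁ Gᶜ := fun y hy => hmax' hy
  set dmin : ℝ := infDist x₀ Gᶜ with hdmindef
  set dmax : ℝ := infDist x₁ Gᶜ with hdmaxdef
  have hdmin : 0 < dmin := infDist_pos_of_mem hGopen hGproper (hKG hx₀K)
  have hdminmax : dmin ≤ dmax := hmin x₁ hx₁K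
  -- local Lipschitz bound for f near K
  set ε : ℝ := dmin / 2 with hε
  have hεpos : 0 < ε := by rw [hε]; linarith
  set Mf : ℝ := M0 * (ω (dmax + dmin) / (dmin/2)) with hMf
  have hωnn : ∀ {t : ℝ}, 0 ≤ t → 0 ≤ ω t := fun ht => omega_nonneg hωmono hω0 ht
  have hMfnn : 0 ≤ Mf := by
    apply mul_nonneg hM0pos.le
    apply div_nonneg (hωnn (by linarith)) (by linarith)
  have hfLoc : ∀ a ∈ K, ∀ b ∈ K, ‖b - a‖ ≤ ε → ‖f b - f a‖ ≤ Mf * ‖b - a‖ := by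
    intro a haK b hbK hab
    have hseg : ∀ x ∈ segment ℝ a b, ‖x - a‖ ≤ ε := by
      intro x hx
      rw [segment_eq_image'] at hx
      obtain ⟨t, ht, rfl⟩ := hx
      rw [add_sub_cancel_left, norm_smul, Real.norm_eq_abs, abs_of_nonneg ht.1]
      calc t * ‖b - a‖ ≤ 1 * ‖b - a‖ := by
            apply mul_le_mul_of_nonneg_right ht.2 (norm_nonneg _)
        _ = ‖b - a‖ := one_mul _
        _ ≤ ε := hab
    have hsegd : ∀ x ∈ segment ℝ a b,
        dmin/2 ≤ infDist x Gᶜ ∧ infDist x Gᶜ ≤ dmax + dmin := by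
      intro x hx
      have h1 : infDist a Gᶜ ≤ infDist x Gᶜ + dist a x := infDist_le_infDist_add_dist
      have h2 : infDist x Gᶜ ≤ infDist a Gᶜ + dist x a := infDist_le_infDist_add_dist
      have h3 : dist a x ≤ ε := by
        rw [dist_eq_norm, norm_sub_rev]; exact hseg x hx
      have h4 : dmin ≤ infDist a Gᶜ := hmin a haK
      have h5 : infDist a Gᶜ ≤ dmax := hmax a haK
      rw [dist_comm] at h3
      constructor
      · have := h3
        rw [dist_comm] at this
        linarith [h1, h4, this]
      · linarith [h2, h5, h3]
    have hsegG : ∀ x ∈ segment ℝ a b, x ∈ G := by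
      intro x hx
      by_contra hxG
      have : infDist x Gᶜ = 0 := infDist_zero_of_mem hxG
      have := (hsegd x hx).1
      rw [‹infDist x Gᶜ = 0›] at this
      linarith
    have hbound : ∀ x ∈ segment ℝ a b, ‖fderiv ℝ f x‖ ≤ Mf := by
      intro x hx
      have hxG := hsegG x hx
      have hfd := (hfD x hxG).fderiv
      rw [hfd]
      apply ContinuousLinearMap.opNorm_le_bound _ hMfnn
      intro v
      calc ‖Phi x v‖ ≤ M0 * (ω (infDist x Gᶜ) / infDist x Gᶜ) * ‖v‖ := hΦv x hxG v
        _ ≤ Mf * ‖v‖ := by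
            apply mul_le_mul_of_nonneg_right _ (norm_nonneg v)
            rw [hMf]
            apply mul_le_mul_of_nonneg_left _ hM0pos.le
            apply div_le_div₀ (hωnn (by linarith))
            · apply hωmono (mem_Ici.2 infDist_nonneg) (mem_Ici.2 (by linarith))
              exact (hsegd x hx).2
            · linarith
            · exact (hsegd x hx).1
    have hdiff : ∀ x ∈ segment ℝ a b, DifferentiableAt ℝ f x := fun x hx =>
      (hfD x (hsegG x hx)).differentiableAt
    exact (convex_segment a b).norm_image_sub_le_of_norm_fderiv_le hdiff hbound
      (left_mem_segment ℝ a b) (right_mem_segment ℝ a b)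
  -- the clamped curve and σ
  set γ' : ℝ → EuclideanSpace ℂ (Fin n) := fun t => γ (clamp01 t) with hγ'
  have hγ'L : LipschitzWith (L * 1) γ' := hγL.comp clamp01_lipschitz
  have hγ'K : ∀ t, γ' t ∈ K := fun t => ⟨clamp01 t, clamp01_mem t, rfl⟩
  have hγ'eq : ∀ t ∈ Icc (0:ℝ) 1, γ' t = γ t := fun t ht => by
    rw [hγ']; simp only []; rw [clamp01_of_mem ht]
  set σ : ℝ → ℂ := fun t => f (γ' t) with hσ
  -- σ is Lipschitz
  have hσloc : ∀ s t : ℝ, s ≤ t → t - s ≤ ε / ((L:ℝ) + 1) →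
      dist (σ s) (σ t) ≤ (Mf * ((L:ℝ)+1)) * (t - s) := by
    intro s t hst hd
    have hLnn : (0:ℝ) ≤ L := L.coe_nonneg
    have h1 : ‖γ' t - γ' s‖ ≤ (L:ℝ) * (t - s) := by
      have := hγ'L.dist_le_mul t s
      rw [dist_eq_norm] at this
      calc ‖γ' t - γ' s‖ ≤ (L * 1 : NNReal) * dist t s := this
        _ = (L:ℝ) * (t - s) := by
            push_cast
            rw [Real.dist_eq, abs_of_nonneg (by linarith)]
            ring
    have h2 : ‖γ' t - γ' s‖ ≤ ε := by
      calc ‖γ' t - γ' s‖ ≤ (L:ℝ) * (t - s) := h1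
        _ ≤ ((L:ℝ)+1) * (ε / ((L:ℝ)+1)) := by
            apply mul_le_mul (by linarith) hd (by linarith) (by linarith)
        _ = ε := by field_simp
    have h3 := hfLoc (γ' s) (hγ'K s) (γ' t) (hγ'K t) h2
    calc dist (σ s) (σ t) = ‖f (γ' t) - f (γ' s)‖ := by
          rw [hσ]; simp only []; rw [dist_eq_norm, norm_sub_rev]
      _ ≤ Mf * ‖γ' t - γ' s‖ := h3
      _ ≤ Mf * ((L:ℝ) * (t - s)) := mul_le_mul_of_nonneg_left h1 hMfnn
      _ ≤ (Mf * ((L:ℝ)+1)) * (t - s) := by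
          have hts : 0 ≤ t - s := by linarith
          have e : Mf * ((L:ℝ) * (t - s)) = (Mf * (L:ℝ)) * (t - s) := by ring
          rw [e]
          apply mul_le_mul_of_nonneg_right _ hts
          exact mul_le_mul_of_nonneg_left (by linarith) hMfnn
  have hσL : LipschitzWith (Mf * ((L:ℝ)+1)).toNNReal σ :=
    lipschitz_of_locally (by positivity) (by positivity) hσloc
  -- the auxiliary real function u
  obtain ⟨lam, hlam1, hlamre, hlamle⟩ := exists_unit_re (σ 1 - σ 0)
  set u : ℝ → ℝ := fun t => (lam * (σ t - σ 0)).re with hu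
  have huL : LipschitzWith (Mf * ((L:ℝ)+1)).toNNReal u := by
    apply LipschitzWith.of_dist_le_mul
    intro s t
    have h1 : dist (u s) (u t) = |(lam * (σ s - σ t)).re| := by
      rw [Real.dist_eq, hu]
      congr 1
      simp only []
      rw [← Complex.sub_re, ← mul_sub]
      congr 2
      ring
    rw [h1]
    calc |(lam * (σ s - σ t)).re| ≤ ‖lam * (σ s - σ t)‖ :=
          Complex.abs_re_le_norm _
      _ = ‖lam * (σ s - σ t)‖ := rfl
      _ = ‖σ s - σ t‖ := by rw [norm_mul, hlam1, one_mul]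
      _ = dist (σ s) (σ t) := (dist_eq_norm _ _).symm
      _ ≤ (Mf * ((L:ℝ)+1)).toNNReal * dist s t := hσL.dist_le_mul s t
  have hu1 : ∀ t : ℝ, 1 ≤ t → u t = u 1 := by
    intro t ht
    have hcl : clamp01 t = clamp01 1 := by rw [clamp01_of_ge ht, clamp01_of_ge le_rfl]
    rw [hu]
    simp only []
    rw [hσ]
    simp only []
    rw [hγ']
    simp only []
    rw [hcl]
  -- the a.e. derivative bound
  set gbd : ℝ → ℝ := fun t =>
    M0 * (ω (infDist (γ t) Gᶜ) / infDist (γ t) Gᶜ * ‖deriv γ t‖) with hgbd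
  have hae : ∀ᵐ t ∂(volume : Measure ℝ), t ∈ Ioo (0:ℝ) 1 →
      DifferentiableAt ℝ u t ∧ deriv u t ≤ gbd t := by
    filter_upwards [hγL.ae_differentiableAt] with t hdiff hmem
    have htIcc : t ∈ Icc (0:ℝ) 1 := Ioo_subset_Icc_self hmem
    have hxG : γ t ∈ G := hγG t htIcc
    have hγ'd : HasDerivAt γ' (deriv γ t) t := by
      apply hdiff.hasDerivAt.congr_of_eventuallyEq
      filter_upwards [isOpen_Ioo.mem_nhds hmem] with s hs
      exact hγ'eq s (Ioo_subset_Icc_self hs)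
    have hγ't : γ' t = γ t := hγ'eq t htIcc
    have hfx : HasFDerivAt f (Phi (γ t)) (γ' t) := by rw [hγ't]; exact hfD _ hxG
    have hσD : HasDerivAt σ (Phi (γ t) (deriv γ t)) t := hfx.comp_hasDerivAt t hγ'd
    have huD : HasDerivAt u ((lam * (Phi (γ t) (deriv γ t))).re) t := by
      have h1 := (hσD.sub_const (σ 0)).const_mul lam
      have h2 := Complex.reCLM.hasFDerivAt.comp_hasDerivAt t h1
      simpa [Function.comp_def, hu] using h2
    refine ⟨huD.differentiableAt, ?_⟩
    rw [huD.deriv]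
    calc (lam * (Phi (γ t) (deriv γ t))).re ≤ ‖Phi (γ t) (deriv γ t)‖ := hlamle _
      _ ≤ M0 * (ω (infDist (γ t) Gᶜ) / infDist (γ t) Gᶜ) * ‖deriv γ t‖ := hΦv _ hxG _
      _ = gbd t := by rw [hgbd]; ring
  -- integrability of gbd
  have hγcont : Continuous γ := hγL.continuous
  have hφcont : ContinuousOn (fun t => ω (infDist (γ t) Gᶜ) / infDist (γ t) Gᶜ)
      (Icc (0:ℝ) 1) := by
    have hdd' : ContinuousOn (fun t => infDist (γ t) Gᶜ) (Icc (0:ℝ) 1) :=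
      ((continuous_infDist_pt Gᶜ).comp hγcont).continuousOn
    have hnum : ContinuousOn (fun t => ω (infDist (γ t) Gᶜ)) (Icc (0:ℝ) 1) :=
      hωcont.comp hdd' (fun t _ => infDist_nonneg)
    apply hnum.div hdd'
    intro t ht
    have : dmin ≤ infDist (γ t) Gᶜ := hmin _ ⟨t, ht, rfl⟩
    linarith
  have hgint : IntervalIntegrable gbd volume 0 1 := by
    apply IntervalIntegrable.const_mul
    rw [intervalIntegrable_iff_integrableOn_Ioc_of_le zero_le_one]
    have hmeas : AEStronglyMeasurable
        (fun t => ω (infDist (γ t) Gᶜ) / infDist (γ t) Gᶜ * ‖deriv γ t‖)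
        (volume.restrict (Ioc (0:ℝ) 1)) := by
      apply AEStronglyMeasurable.mul
      · exact (hφcont.mono Ioc_subset_Icc_self).aestronglyMeasurable measurableSet_Ioc
      · exact ((measurable_deriv γ).norm).aestronglyMeasurable.restrict
    apply Integrable.mono' (g := fun _ => (ω dmax / dmin) * (L:ℝ))
      (integrable_const _) hmeas
    rw [ae_restrict_iff' measurableSet_Ioc]
    filter_upwards with t ht
    have htK : γ t ∈ K := ⟨t, Ioc_subset_Icc_self ht, rfl⟩
    have hd1 : dmin ≤ infDist (γ t) Gᶜ := hmin _ htK
    have hd2 : infDist (γ t) Gᶜ ≤ dmax := hmax _ htK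
    have hφle : ω (infDist (γ t) Gᶜ) / infDist (γ t) Gᶜ ≤ ω dmax / dmin := by
      apply div_le_div₀ (hωnn (by linarith))
      · exact hωmono (mem_Ici.2 infDist_nonneg) (mem_Ici.2 (by linarith)) hd2
      · exact hdmin
      · exact hd1
    have hφnn : 0 ≤ ω (infDist (γ t) Gᶜ) / infDist (γ t) Gᶜ :=
      integrand_nonneg hωmono hω0 G _
    have hψle : ‖deriv γ t‖ ≤ (L:ℝ) := norm_deriv_le_of_lipschitz hγL
    rw [Real.norm_eq_abs, abs_of_nonneg (mul_nonneg hφnn (norm_nonneg _))]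
    apply mul_le_mul hφle hψle (norm_nonneg _)
    apply div_nonneg (hωnn (by linarith)) hdmin.le
  -- apply the FTC inequality
  have hftc := lipschitz_ftc_ineq huL hu1 hae hgint
  have hInt : (∫ t in (0:ℝ)..1, gbd t) = M0 * curveOmegaIntegral ω G γ := by
    rw [hgbd, curveOmegaIntegral, intervalIntegral.integral_const_mul]
  have hu0 : u 0 = 0 := by rw [hu]; simp
  have hu1v : u 1 = ‖σ 1 - σ 0‖ := hlamre
  have hσ1 : σ 1 = f z₂ := by
    rw [hσ]; simp only []
    rw [hγ']; simp only []
    rw [clamp01_of_ge le_rfl, hγ1]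
  have hσ0 : σ 0 = f z₁ := by
    rw [hσ]; simp only []
    rw [hγ']; simp only []
    rw [clamp01_of_mem (by constructor <;> norm_num), hγ0]
  have : ‖f z₁ - f z₂‖ = ‖σ 1 - σ 0‖ := by
    rw [hσ1, hσ0, norm_sub_rev]
  rw [this]
  calc ‖σ 1 - σ 0‖ = u 1 - u 0 := by rw [hu1v, hu0]; ring
    _ ≤ ∫ t in (0:ℝ)..1, gbd t := hftc
    _ = M0 * curveOmegaIntegral ω G γ := hInt

end Helpers

/-- For `f = h + conj g ∈ H_k(G)` and a majorant `ω` satisfying the regularity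
condition, `f ∈ Λ_{ω,inf}(G)` if and only if `|f| ∈ Λ_{ω,inf}(G)`. -/
theorem equivalent_moduli_inf
    (n : ℕ) (hn : 1 ≤ n) (k C₀ δ₀ : ℝ) (hk0 : 0 < k) (hk1 : k < 1)
    (hC₀ : 0 < C₀) (hδ₀ : 0 < δ₀)
    (G : Set (EuclideanSpace ℂ (Fin n))) (hGopen : IsOpen G) (hGconn : IsConnected G)
    (hGproper : Gᶜ.Nonempty)
    (ω : ℝ → ℝ) (hωcont : ContinuousOn ω (Ici 0)) (hωmono : MonotoneOn ω (Ici 0))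
    (hω0 : ω 0 = 0) (hωdec : ∀ s t : ℝ, 0 < s → s ≤ t → ω t / t ≤ ω s / s)
    (hωreg : ∀ δ : ℝ, 0 < δ → δ < δ₀ → (∫ t in (0:ℝ)..δ, ω t / t) ≤ C₀ * ω δ)
    (f h g : EuclideanSpace ℂ (Fin n) → ℂ)
    (hh : DifferentiableOn ℂ h G) (hg : DifferentiableOn ℂ g G)
    (hf : ∀ z ∈ G, f z = h z + (starRingEnd ℂ) (g z))
    (hHk : ∀ z ∈ G, ∀ θ : EuclideanSpace ℂ (Fin n), ‖θ‖ = 1 →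
      ‖fderiv ℂ g z θ‖ ≤ k * ‖fderiv ℂ h z θ‖) :
    (∃ C > (0:ℝ), ∀ z₁ ∈ G, ∀ z₂ ∈ G,
        ‖f z₁ - f z₂‖ ≤ C * dOmega ω G z₁ z₂) ↔
    (∃ C > (0:ℝ), ∀ z₁ ∈ G, ∀ z₂ ∈ G,
        |‖f z₁‖ - ‖f z₂‖| ≤ C * dOmega ω G z₁ z₂) := by
  constructor
  · rintro ⟨C, hC0, hC⟩
    refine ⟨C, hC0, fun z₁ hz₁ z₂ hz₂ => ?_⟩
    exact le_trans (abs_norm_sub_norm_le _ _) (hC z₁ hz₁ z₂ hz₂)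
  · rintro ⟨C, hC0, hC⟩
    have hk1' : (0:ℝ) < 1 - k := by linarith
    have hM0pos : (0:ℝ) < 2*C*(1+k)/(1-k) := div_pos (by nlinarith) hk1'
    refine ⟨2*C*(1+k)/(1-k), hM0pos, fun z₁ hz₁ z₂ hz₂ => ?_⟩
    obtain ⟨γ₀, hL₀, h00, h01, h0G⟩ := exists_admissible hGopen hGconn hz₁ hz₂
    have hSne : { I : ℝ | ∃ γ : ℝ → EuclideanSpace ℂ (Fin n),
        (∃ L : NNReal, LipschitzWith L γ) ∧ γ 0 = z₁ ∧ γ 1 = z₂ ∧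
        (∀ t ∈ Icc (0:ℝ) 1, γ t ∈ G) ∧ I = curveOmegaIntegral ω G γ }.Nonempty :=
      ⟨curveOmegaIntegral ω G γ₀, γ₀, hL₀, h00, h01, h0G, rfl⟩
    have hlb : ∀ I ∈ { I : ℝ | ∃ γ : ℝ → EuclideanSpace ℂ (Fin n),
        (∃ L : NNReal, LipschitzWith L γ) ∧ γ 0 = z₁ ∧ γ 1 = z₂ ∧
        (∀ t ∈ Icc (0:ℝ) 1, γ t ∈ G) ∧ I = curveOmegaIntegral ω G γ },
        ‖f z₁ - f z₂‖ / (2*C*(1+k)/(1-k)) ≤ I := by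
      rintro I ⟨γ, ⟨L, hL⟩, hγ0, hγ1, hγG, rfl⟩
      rw [div_le_iff₀ hM0pos]
      have := curve_bound hGopen hGproper hωcont hωmono hω0 hωdec hk0 hk1
        hh hg hf hHk hC0 hC hz₁ hz₂ hL hγ0 hγ1 hγG
      linarith [this]
    have h2 : ‖f z₁ - f z₂‖ / (2*C*(1+k)/(1-k)) ≤ dOmega ω G z₁ z₂ :=
      le_csInf hSne hlb
    rw [div_le_iff₀ hM0pos] at h2
    linarith [h2]
end

section
/- Let f : B^n → ℂ^n be a (K,K₁)-quasiregular pluriharmonic mapping, i.e., |f_z(z)|^n ≤ K|det f_z(z)| and K₁|f_{z̄}(z)θ| ≤ |f_z(z)θ̄| for all z ∈ B^n and unit θ, with K ≥ 1, K₁ > 1. If |det f_ζ(ζ)| ≤ 1/(1-t|ζ|)^n on B^n for some t ∈ (0,1) and f(0) = 0, then |f(ζ)| ≤ (M*/t) log(1/(1-t)) for all ζ ∈ B^n, where M* = K^{1/n}(1+K₁)/K₁. -/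
open Metric Set

/-- Radial integration lemma: if `‖fderiv ℂ φ z‖ ≤ C/(1 - t‖z‖)` on the unit ball,
then `‖φ ζ - φ 0‖ ≤ (C/t) log (1/(1 - t‖ζ‖))`. -/
lemma radial_growth_aux {n : ℕ} (φ : EuclideanSpace ℂ (Fin n) → EuclideanSpace ℂ (Fin n))
    (hφ : DifferentiableOn ℂ φ (ball (0 : EuclideanSpace ℂ (Fin n)) 1))
    {t C : ℝ} (ht0 : 0 < t) (ht1 : t < 1) (hC : 0 ≤ C)
    (hbound : ∀ z ∈ ball (0 : EuclideanSpace ℂ (Fin n)) 1,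
      ‖fderiv ℂ φ z‖ ≤ C / (1 - t * ‖z‖))
    {ζ : EuclideanSpace ℂ (Fin n)} (hζ : ζ ∈ ball (0 : EuclideanSpace ℂ (Fin n)) 1) :
    ‖φ ζ - φ 0‖ ≤ C / t * Real.log (1 / (1 - t * ‖ζ‖)) := by
  set r : ℝ := ‖ζ‖ with hrdef
  have hr0 : 0 ≤ r := norm_nonneg _
  have hr1 : r < 1 := by simpa [hrdef] using mem_ball_zero_iff.mp hζ
  have hden : ∀ s ∈ Icc (0:ℝ) 1, 0 < 1 - t * (s * r) := by
    intro s hs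
    have h1 : s * r ≤ r := by
      nlinarith [hs.1, hs.2, hr0]
    have : t * (s * r) ≤ t * r := by nlinarith
    have htr : t * r < 1 := by nlinarith
    linarith
  have hmem : ∀ s ∈ Icc (0:ℝ) 1, s • ζ ∈ ball (0 : EuclideanSpace ℂ (Fin n)) 1 := by
    intro s hs
    rw [mem_ball_zero_iff, norm_smul, Real.norm_of_nonneg hs.1]
    calc s * r ≤ 1 * r := by nlinarith [hs.2, hr0]
    _ = r := one_mul r
    _ < 1 := hr1
  set F : ℝ → EuclideanSpace ℂ (Fin n) := fun s => φ (s • ζ) - φ 0 with hFdef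
  have hF' : ∀ s ∈ Ico (0:ℝ) 1,
      HasDerivWithinAt F ((fderiv ℂ φ (s • ζ)) ζ) (Ici s) s := by
    intro s hs
    have hsIcc : s ∈ Icc (0:ℝ) 1 := ⟨hs.1, hs.2.le⟩
    have hdiff : DifferentiableAt ℂ φ (s • ζ) :=
      hφ.differentiableAt (isOpen_ball.mem_nhds (hmem s hsIcc))
    have h1 : HasFDerivAt φ ((fderiv ℂ φ (s • ζ)).restrictScalars ℝ) (s • ζ) :=
      (hdiff.hasFDerivAt).restrictScalars ℝ
    have h2 : HasDerivAt (fun u : ℝ => u • ζ) ζ s := by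
      simpa using (hasDerivAt_id s).smul_const ζ
    have h3 : HasDerivAt (fun u : ℝ => φ (u • ζ))
        (((fderiv ℂ φ (s • ζ)).restrictScalars ℝ) ζ) s :=
      h1.comp_hasDerivAt s h2
    have h4 : HasDerivAt F (((fderiv ℂ φ (s • ζ)).restrictScalars ℝ) ζ) s := by
      simpa [hFdef] using h3.sub_const (φ 0)
    exact h4.hasDerivWithinAt
  have hFcont : ContinuousOn F (Icc (0:ℝ) 1) := by
    have hc : ContinuousOn (fun s : ℝ => φ (s • ζ)) (Icc 0 1) := by
      apply hφ.continuousOn.comp (Continuous.continuousOn (continuous_id.smul continuous_const))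
      intro s hs; exact hmem s hs
    exact hc.sub continuousOn_const
  set B : ℝ → ℝ := fun s => -(C / t) * Real.log (1 - t * (s * r)) with hBdef
  set B' : ℝ → ℝ := fun s => C * r / (1 - t * (s * r)) with hB'def
  have hBcont : ContinuousOn B (Icc (0:ℝ) 1) := by
    apply ContinuousOn.mul continuousOn_const
    apply ContinuousOn.log
    · exact (continuousOn_const.sub (continuousOn_const.mul
        (continuousOn_id.mul continuousOn_const)))
    · intro s hs; exact (hden s hs).ne'
  have hB' : ∀ s ∈ Ico (0:ℝ) 1, HasDerivWithinAt B (B' s) (Ici s) s := by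
    intro s hs
    have hsIcc : s ∈ Icc (0:ℝ) 1 := ⟨hs.1, hs.2.le⟩
    have hu : HasDerivAt (fun u : ℝ => 1 - t * (u * r)) (-(t * r)) s := by
      have : HasDerivAt (fun u : ℝ => t * (u * r)) (t * r) s := by
        simpa [mul_comm, mul_assoc] using ((hasDerivAt_id s).mul_const r).const_mul t
      have h := (hasDerivAt_const s (1:ℝ)).sub this
      rw [zero_sub] at h
      exact h
    have hlog : HasDerivAt (fun u : ℝ => Real.log (1 - t * (u * r)))
        (-(t * r) / (1 - t * (s * r))) s := hu.log (hden s hsIcc).ne'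
    have hBd : HasDerivAt B (B' s) s := by
      have := hlog.const_mul (-(C / t))
      refine this.congr_deriv ?_
      rw [hB'def]
      field_simp [ht0.ne', (hden s hsIcc).ne']
    exact hBd.hasDerivWithinAt
  have hbound' : ∀ s ∈ Ico (0:ℝ) 1, ‖(fderiv ℂ φ (s • ζ)) ζ‖ ≤ B' s := by
    intro s hs
    have hsIcc : s ∈ Icc (0:ℝ) 1 := ⟨hs.1, hs.2.le⟩
    have hnorm : ‖s • ζ‖ = s * r := by
      rw [norm_smul, Real.norm_of_nonneg hs.1]
    have h1 : ‖(fderiv ℂ φ (s • ζ)) ζ‖ ≤ ‖fderiv ℂ φ (s • ζ)‖ * r :=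
      (fderiv ℂ φ (s • ζ)).le_opNorm ζ
    have h2 : ‖fderiv ℂ φ (s • ζ)‖ ≤ C / (1 - t * (s * r)) := by
      have := hbound (s • ζ) (hmem s hsIcc)
      rwa [hnorm] at this
    calc ‖(fderiv ℂ φ (s • ζ)) ζ‖ ≤ (C / (1 - t * (s * r))) * r := by
          calc ‖(fderiv ℂ φ (s • ζ)) ζ‖ ≤ ‖fderiv ℂ φ (s • ζ)‖ * r := h1
          _ ≤ (C / (1 - t * (s * r))) * r := by
              apply mul_le_mul_of_nonneg_right h2 hr0
    _ = B' s := by rw [hB'def]; ring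
  have hB0 : ‖F 0‖ ≤ B 0 := by
    simp [hFdef, hBdef]
  have key := image_norm_le_of_norm_deriv_right_le_deriv_boundary' hFcont hF' hB0 hBcont hB' hbound'
  have h1 : ‖F 1‖ ≤ B 1 := key (by norm_num : (1:ℝ) ∈ Icc (0:ℝ) 1)
  have hF1 : F 1 = φ ζ - φ 0 := by simp [hFdef]
  have hB1 : B 1 = C / t * Real.log (1 / (1 - t * r)) := by
    rw [hBdef]
    have hpos : (0:ℝ) < 1 - t * (1 * r) := hden 1 (by norm_num)
    rw [one_div, Real.log_inv]
    ring_nf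
  rw [hF1, hB1] at h1
  simpa [hrdef] using h1
/-- Growth estimate for `(K,K₁)`-quasiregular pluriharmonic mappings `f = h + conj g`:
if `|det f_z(ζ)| ≤ 1/(1-t|ζ|)ⁿ` on `B^n` and `f(0) = 0`, then
`|f(ζ)| ≤ (M*/t) log(1/(1-t))` with `M* = K^{1/n}(1+K₁)/K₁`.
Here `f_z(ζ) = fderiv ℂ h ζ` and the operator norm of `f_{z̄}` equals `‖fderiv ℂ g ζ‖`. -/
theorem quasiregular_pluriharmonic_growth
    (n : ℕ) (hn : 1 ≤ n) (K K₁ t : ℝ) (hK : 1 ≤ K) (hK₁ : 1 < K₁)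
    (ht0 : 0 < t) (ht1 : t < 1)
    (f h g : EuclideanSpace ℂ (Fin n) → EuclideanSpace ℂ (Fin n))
    (hh : DifferentiableOn ℂ h (ball (0 : EuclideanSpace ℂ (Fin n)) 1))
    (hg : DifferentiableOn ℂ g (ball (0 : EuclideanSpace ℂ (Fin n)) 1))
    (hf : ∀ z ∈ ball (0 : EuclideanSpace ℂ (Fin n)) 1, ∀ i,
      f z i = h z i + (starRingEnd ℂ) (g z i))
    (hKreg : ∀ z ∈ ball (0 : EuclideanSpace ℂ (Fin n)) 1,
      ‖fderiv ℂ h z‖ ^ n ≤ K * ‖LinearMap.det (fderiv ℂ h z).toLinearMap‖)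
    (hK₁reg : ∀ z ∈ ball (0 : EuclideanSpace ℂ (Fin n)) 1,
      ∀ θ : EuclideanSpace ℂ (Fin n), ‖θ‖ = 1 →
      K₁ * ‖fderiv ℂ g z θ‖ ≤ ‖fderiv ℂ h z θ‖)
    (hdet : ∀ ζ ∈ ball (0 : EuclideanSpace ℂ (Fin n)) 1,
      ‖LinearMap.det (fderiv ℂ h ζ).toLinearMap‖ ≤ 1 / (1 - t * ‖ζ‖) ^ n)
    (hf0 : f 0 = 0) :
    ∀ ζ ∈ ball (0 : EuclideanSpace ℂ (Fin n)) 1,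
      ‖f ζ‖ ≤ (K ^ ((1:ℝ)/n) * (1 + K₁) / K₁) / t * Real.log (1 / (1 - t)) := by
  intro ζ hζ
  have hn0 : (n:ℝ) ≠ 0 := Nat.cast_ne_zero.mpr (by omega)
  have hK0 : (0:ℝ) < K := lt_of_lt_of_le one_pos hK
  have hK₁0 : (0:ℝ) < K₁ := lt_trans one_pos hK₁
  set C : ℝ := K ^ ((1:ℝ)/n) with hCdef
  have hC1 : (1:ℝ) ≤ C := Real.one_le_rpow hK (by positivity)
  have hC0 : (0:ℝ) ≤ C := le_trans zero_le_one hC1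
  have hCn : C ^ n = K := by
    rw [hCdef, ← Real.rpow_natCast (K ^ ((1:ℝ)/n)) n, ← Real.rpow_mul hK0.le]
    rw [one_div, inv_mul_cancel₀ hn0, Real.rpow_one]
  -- denominator positivity on the ball
  have hdpos : ∀ z ∈ ball (0 : EuclideanSpace ℂ (Fin n)) 1, (0:ℝ) < 1 - t * ‖z‖ := by
    intro z hz
    have hz1 : ‖z‖ < 1 := mem_ball_zero_iff.mp hz
    nlinarith [norm_nonneg z]
  -- bound on ‖fderiv h‖
  have hhb : ∀ z ∈ ball (0 : EuclideanSpace ℂ (Fin n)) 1,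
      ‖fderiv ℂ h z‖ ≤ C / (1 - t * ‖z‖) := by
    intro z hz
    have hd := hdpos z hz
    have h1 : ‖fderiv ℂ h z‖ ^ n ≤ K * (1 / (1 - t * ‖z‖) ^ n) := by
      calc ‖fderiv ℂ h z‖ ^ n ≤ K * ‖LinearMap.det (fderiv ℂ h z).toLinearMap‖ :=
            hKreg z hz
      _ ≤ K * (1 / (1 - t * ‖z‖) ^ n) := by
            apply mul_le_mul_of_nonneg_left (hdet z hz) hK0.le
    have h2 : (C / (1 - t * ‖z‖)) ^ n = K * (1 / (1 - t * ‖z‖) ^ n) := by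
      rw [div_pow, hCn]; field_simp
    have h3 : ‖fderiv ℂ h z‖ ^ n ≤ (C / (1 - t * ‖z‖)) ^ n := by rw [h2]; exact h1
    exact (pow_le_pow_iff_left₀ (norm_nonneg _) (by positivity) (by omega)).mp h3
  -- bound on ‖fderiv g‖
  have hgb : ∀ z ∈ ball (0 : EuclideanSpace ℂ (Fin n)) 1,
      ‖fderiv ℂ g z‖ ≤ (C / K₁) / (1 - t * ‖z‖) := by
    intro z hz
    have hop : ‖fderiv ℂ g z‖ ≤ ‖fderiv ℂ h z‖ / K₁ := by
      apply ContinuousLinearMap.opNorm_le_bound _ (by positivity)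
      intro x
      rcases eq_or_ne x 0 with rfl | hx
      · rw [map_zero, norm_zero]; positivity
      · have hxn : (0:ℝ) < ‖x‖ := norm_pos_iff.mpr hx
        set θ : EuclideanSpace ℂ (Fin n) := ‖x‖⁻¹ • x with hθdef
        have hθ1 : ‖θ‖ = 1 := by
          rw [hθdef, norm_smul, Real.norm_of_nonneg (by positivity), inv_mul_cancel₀ hxn.ne']
        have hxθ : x = ‖x‖ • θ := by
          rw [hθdef, smul_smul, mul_inv_cancel₀ hxn.ne', one_smul]
        have key := hK₁reg z hz θ hθ1
        have hgθ : ‖fderiv ℂ g z θ‖ ≤ ‖fderiv ℂ h z θ‖ / K₁ := by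
          rw [le_div_iff₀ hK₁0, mul_comm]; exact key
        calc ‖fderiv ℂ g z x‖ = ‖(fderiv ℂ g z) (‖x‖ • θ)‖ := by rw [← hxθ]
        _ = ‖x‖ * ‖fderiv ℂ g z θ‖ := by
              rw [ContinuousLinearMap.map_smul_of_tower, norm_smul,
                Real.norm_of_nonneg hxn.le]
        _ ≤ ‖x‖ * (‖fderiv ℂ h z θ‖ / K₁) := by
              apply mul_le_mul_of_nonneg_left hgθ hxn.le
        _ ≤ ‖x‖ * (‖fderiv ℂ h z‖ / K₁) := by
              apply mul_le_mul_of_nonneg_left _ hxn.le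
              apply div_le_div_of_nonneg_right _ hK₁0.le
              calc ‖fderiv ℂ h z θ‖ ≤ ‖fderiv ℂ h z‖ * ‖θ‖ :=
                    (fderiv ℂ h z).le_opNorm θ
              _ = ‖fderiv ℂ h z‖ := by rw [hθ1, mul_one]
        _ = ‖fderiv ℂ h z‖ / K₁ * ‖x‖ := by ring
    calc ‖fderiv ℂ g z‖ ≤ ‖fderiv ℂ h z‖ / K₁ := hop
    _ ≤ (C / (1 - t * ‖z‖)) / K₁ := by
          apply div_le_div_of_nonneg_right (hhb z hz) hK₁0.le
    _ = (C / K₁) / (1 - t * ‖z‖) := by ring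
  -- radial growth estimates
  have hhgrow := radial_growth_aux h hh ht0 ht1 hC0 hhb hζ
  have hggrow := radial_growth_aux g hg ht0 ht1 (by positivity) hgb hζ
  -- decompose f ζ
  have h0ball : (0 : EuclideanSpace ℂ (Fin n)) ∈ ball (0 : EuclideanSpace ℂ (Fin n)) 1 :=
    mem_ball_self one_pos
  set u : EuclideanSpace ℂ (Fin n) := h ζ - h 0 with hudef
  set v : EuclideanSpace ℂ (Fin n) := WithLp.toLp 2 (fun i => (starRingEnd ℂ) ((g ζ - g 0) i)) with hvdef
  have hfdecomp : f ζ = u + v := by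
    ext i
    have e1 := hf ζ hζ i
    have e2 := hf 0 h0ball i
    have e3 : (0 : EuclideanSpace ℂ (Fin n)) i = 0 := rfl
    have e4 : f 0 i = 0 := by rw [hf0]; rfl
    have : h 0 i + (starRingEnd ℂ) (g 0 i) = 0 := by rw [← e2, e4]
    show f ζ i = u i + v i
    rw [e1, hudef, hvdef]
    simp only [PiLp.sub_apply, PiLp.toLp_apply, map_sub]
    linear_combination this
  have hvnorm : ‖v‖ = ‖g ζ - g 0‖ := by
    rw [hvdef]
    rw [EuclideanSpace.norm_eq, EuclideanSpace.norm_eq]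
    congr 1
    apply Finset.sum_congr rfl
    intro i _
    rw [PiLp.toLp_apply, Complex.norm_conj]
  have hnormle : ‖f ζ‖ ≤ ‖h ζ - h 0‖ + ‖g ζ - g 0‖ := by
    rw [hfdecomp]
    calc ‖u + v‖ ≤ ‖u‖ + ‖v‖ := norm_add_le u v
    _ = ‖h ζ - h 0‖ + ‖g ζ - g 0‖ := by rw [hudef, hvnorm]
  -- log monotonicity
  have hr1 : ‖ζ‖ < 1 := mem_ball_zero_iff.mp hζ
  have hd1 : (0:ℝ) < 1 - t * ‖ζ‖ := hdpos ζ hζ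
  have hd2 : (0:ℝ) < 1 - t := by linarith
  have hlogle : Real.log (1 / (1 - t * ‖ζ‖)) ≤ Real.log (1 / (1 - t)) := by
    apply Real.log_le_log (by positivity)
    apply div_le_div_of_nonneg_left one_pos.le hd2
    nlinarith [norm_nonneg ζ]
  have hlognn : (0:ℝ) ≤ Real.log (1 / (1 - t * ‖ζ‖)) := by
    apply Real.log_nonneg
    rw [le_div_iff₀ hd1]
    nlinarith [norm_nonneg ζ, mul_nonneg ht0.le (norm_nonneg ζ)]
  calc ‖f ζ‖ ≤ ‖h ζ - h 0‖ + ‖g ζ - g 0‖ := hnormle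
  _ ≤ C / t * Real.log (1 / (1 - t * ‖ζ‖)) +
      (C / K₁) / t * Real.log (1 / (1 - t * ‖ζ‖)) := add_le_add hhgrow hggrow
  _ = (C * (1 + K₁) / K₁) / t * Real.log (1 / (1 - t * ‖ζ‖)) := by
      field_simp [hK₁0.ne', ht0.ne']; ring
  _ ≤ (C * (1 + K₁) / K₁) / t * Real.log (1 / (1 - t)) := by
      apply mul_le_mul_of_nonneg_left hlogle (by positivity)
end

section
/- Let D ⊂ ℂ be the unit disk and F : D → ℂ a harmonic function (F = h + ḡ, h,g holomorphic) with |F| < 1 and satisfying Λ_F ≤ K λ_F pointwise, i.e., F is K-quasiregular, where Λ_F = |F_ζ| + |F_{ζ̄}| and λ_F = |F_ζ| - |F_{ζ̄}| > 0. Then Λ_F(0) ≤ K(1 - |F(0)|²). -/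
open Metric Set Complex intervalIntegral
noncomputable section

private lemma diffContOnCl_aux {f : ℂ → ℂ} (hf : DifferentiableOn ℂ f (ball 0 1))
    {ρ : ℝ} (h0 : 0 < ρ) (h1 : ρ < 1) : DiffContOnCl ℂ f (ball (0:ℂ) ρ) := by
  refine ⟨hf.mono (ball_subset_ball h1.le), ?_⟩
  rw [closure_ball (0:ℂ) h0.ne']
  exact hf.continuousOn.mono (closedBall_subset_ball h1)

private lemma int_circle_const {f : ℂ → ℂ} (hf : DifferentiableOn ℂ f (ball 0 1))
    {ρ : ℝ} (h0 : 0 < ρ) (h1 : ρ < 1) :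
    ∫ t in (0:ℝ)..(2*Real.pi), f (circleMap 0 ρ t) = 2*Real.pi*f 0 := by
  have h := (diffContOnCl_aux hf h0 h1).circleIntegral_sub_inv_smul (mem_ball_self h0)
  rw [circleIntegral] at h
  simp only [smul_eq_mul] at h
  have key : ∀ θ : ℝ, deriv (circleMap 0 ρ) θ * ((circleMap 0 ρ θ - 0)⁻¹ * f (circleMap 0 ρ θ))
      = I * f (circleMap 0 ρ θ) := by
    intro θ
    have hne : circleMap 0 ρ θ ≠ 0 := circleMap_ne_center h0.ne'
    simp only [deriv_circleMap, smul_eq_mul, sub_zero]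
    field_simp
  simp only [key] at h
  rw [intervalIntegral.integral_const_mul] at h
  apply mul_left_cancel₀ Complex.I_ne_zero
  rw [h]; ring

private lemma int_circle_inv {f : ℂ → ℂ} (hf : DifferentiableOn ℂ f (ball 0 1))
    {ρ : ℝ} (h0 : 0 < ρ) (h1 : ρ < 1) :
    ∫ t in (0:ℝ)..(2*Real.pi), (circleMap 0 ρ t)⁻¹ * f (circleMap 0 ρ t)
      = 2*Real.pi*deriv f 0 := by
  have h := (diffContOnCl_aux hf h0 h1).deriv_eq_smul_circleIntegral h0
  rw [circleIntegral] at h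
  simp only [smul_eq_mul] at h
  have key : ∀ θ : ℝ, deriv (circleMap 0 ρ) θ * (1 / (circleMap 0 ρ θ - 0) ^ 2 * f (circleMap 0 ρ θ))
      = I * ((circleMap 0 ρ θ)⁻¹ * f (circleMap 0 ρ θ)) := by
    intro θ
    have hne : circleMap 0 ρ θ ≠ 0 := circleMap_ne_center h0.ne'
    simp only [deriv_circleMap, smul_eq_mul, sub_zero, zpow_neg, zpow_two]
    field_simp
  simp only [key] at h
  rw [intervalIntegral.integral_const_mul] at h
  have hπ : (Real.pi : ℂ) ≠ 0 := Complex.ofReal_ne_zero.2 Real.pi_ne_zero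
  apply mul_left_cancel₀ Complex.I_ne_zero
  rw [h]
  ring

private lemma int_circle_id {f : ℂ → ℂ} (hf : DifferentiableOn ℂ f (ball 0 1))
    {ρ : ℝ} (h0 : 0 < ρ) (h1 : ρ < 1) :
    ∫ t in (0:ℝ)..(2*Real.pi), circleMap 0 ρ t * f (circleMap 0 ρ t) = 0 := by
  have h := Complex.circleIntegral_eq_zero_of_differentiable_on_off_countable h0.le
    (countable_empty) (hf.continuousOn.mono (closedBall_subset_ball h1))
    (fun z hz => hf.differentiableAt (isOpen_ball.mem_nhds (ball_subset_ball h1.le hz.1)))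
  rw [circleIntegral] at h
  simp only [smul_eq_mul, deriv_circleMap] at h
  have key : ∀ θ : ℝ, circleMap 0 ρ θ * I * f (circleMap 0 ρ θ)
      = I * (circleMap 0 ρ θ * f (circleMap 0 ρ θ)) := fun θ => by ring
  simp only [key] at h
  rw [intervalIntegral.integral_const_mul] at h
  exact (mul_eq_zero.1 h).resolve_left Complex.I_ne_zero

private lemma int_conj {f : ℝ → ℂ} (hf : Continuous f) (a b : ℝ) :
    ∫ t in a..b, (starRingEnd ℂ) (f t) = (starRingEnd ℂ) (∫ t in a..b, f t) := by
  have := (Complex.conjCLE.toContinuousLinearMap).intervalIntegral_comp_comm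
    (μ := MeasureTheory.volume) (a := a) (b := b) (hf.intervalIntegrable a b)
  simpa using this

private lemma int_re {f : ℝ → ℂ} (hf : Continuous f) (a b : ℝ) :
    ∫ t in a..b, (f t).re = (∫ t in a..b, f t).re := by
  have := Complex.reCLM.intervalIntegral_comp_comm
    (μ := MeasureTheory.volume) (a := a) (b := b) (hf.intervalIntegrable a b)
  simpa using this

private lemma exists_unit (z : ℂ) :
    ∃ u : ℂ, ‖u‖ = 1 ∧ u * z = (‖z‖ : ℝ) := by
  rcases eq_or_ne z 0 with rfl | hz
  · exact ⟨1, by simp, by simp⟩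
  · have hz' : (‖z‖ : ℝ) ≠ 0 := norm_ne_zero_iff.mpr hz
    refine ⟨(starRingEnd ℂ) z / ‖z‖, ?_, ?_⟩
    · rw [norm_div, Complex.norm_conj, Complex.norm_real, Real.norm_eq_abs,
        _root_.abs_of_nonneg (norm_nonneg z), div_self hz']
    · rw [div_mul_eq_mul_div, mul_comm, Complex.mul_conj, Complex.normSq_eq_norm_sq]
      rw [div_eq_iff (by exact_mod_cast hz')]
      push_cast
      ring

private lemma absM {w : ℂ} (hw : ‖w‖ = 1) (r : ℝ) :
    ‖w + 2*r + r^2 * (starRingEnd ℂ) w‖ = 1 + r^2 + 2*r*w.re := by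
  have hww : w * (starRingEnd ℂ) w = 1 := by
    rw [Complex.mul_conj, Complex.normSq_eq_norm_sq, hw]; norm_num
  have hsq : w.re^2 + w.im^2 = 1 := by
    have := Complex.normSq_eq_norm_sq w
    rw [hw] at this
    simpa [Complex.normSq_apply, sq] using this
  have factor : w + 2*r + r^2 * (starRingEnd ℂ) w = (w + r) * (1 + r * (starRingEnd ℂ) w) := by
    linear_combination (-(r:ℂ)) * hww
  have h2 : ‖w + r‖ = ‖1 + r * (starRingEnd ℂ) w‖ := by
    have hww2 : w * (1 + r * (starRingEnd ℂ) w) = w + r := by linear_combination (r:ℂ)*hww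
    calc ‖w + r‖ = ‖w * (1 + r * (starRingEnd ℂ) w)‖ := by rw [hww2]
    _ = ‖1 + r * (starRingEnd ℂ) w‖ := by rw [norm_mul, hw, one_mul]
  have h3 : (‖1 + r * (starRingEnd ℂ) w‖)^2 = 1 + r^2 + 2*r*w.re := by
    rw [Complex.sq_norm, Complex.normSq_apply]
    simp only [Complex.add_re, Complex.add_im, Complex.one_re, Complex.one_im,
      Complex.mul_re, Complex.mul_im, Complex.ofReal_re, Complex.ofReal_im,
      Complex.conj_re, Complex.conj_im]
    nlinarith [hsq]
  rw [factor, norm_mul, h2, ← sq, h3]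

private lemma core {F h g : ℂ → ℂ} (hh : DifferentiableOn ℂ h (ball 0 1))
    (hg : DifferentiableOn ℂ g (ball 0 1))
    (hF : ∀ z ∈ ball (0:ℂ) 1, F z = h z + (starRingEnd ℂ) (g z))
    (hmap : ∀ z ∈ ball (0:ℂ) 1, ‖F z‖ < 1)
    {ρ : ℝ} (h0 : 0 < ρ) (h1 : ρ < 1) :
    ρ * (‖deriv h 0‖ - ‖deriv g 0‖)
      ≤ 1 - (‖F 0‖)^2 := by
  have hπ : (0:ℝ) < Real.pi := Real.pi_pos
  have hρC : (ρ:ℂ) ≠ 0 := Complex.ofReal_ne_zero.2 h0.ne'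
  have hcne : ∀ t : ℝ, circleMap 0 ρ t ≠ 0 := fun t => circleMap_ne_center h0.ne'
  have hmem : ∀ t : ℝ, circleMap 0 ρ t ∈ ball (0:ℂ) 1 := by
    intro t
    rw [mem_ball_zero_iff, norm_circleMap_zero, _root_.abs_of_pos h0]
    exact h1
  have habs_c : ∀ t : ℝ, ‖circleMap 0 ρ t‖ = ρ := by
    intro t; rw [norm_circleMap_zero, _root_.abs_of_pos h0]
  have hcc : ∀ t : ℝ, circleMap 0 ρ t * (starRingEnd ℂ) (circleMap 0 ρ t) = (ρ:ℂ)^2 := by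
    intro t
    rw [Complex.mul_conj, Complex.normSq_eq_norm_sq, habs_c t]
    push_cast; ring
  have hinvc : ∀ t : ℝ, (circleMap 0 ρ t)⁻¹
      = ((ρ:ℂ)^2)⁻¹ * (starRingEnd ℂ) (circleMap 0 ρ t) := by
    intro t
    refine inv_eq_of_mul_eq_one_right ?_
    calc circleMap 0 ρ t * (((ρ:ℂ)^2)⁻¹ * (starRingEnd ℂ) (circleMap 0 ρ t))
        = (circleMap 0 ρ t * (starRingEnd ℂ) (circleMap 0 ρ t)) * ((ρ:ℂ)^2)⁻¹ := by ring
      _ = 1 := by rw [hcc t]; exact mul_inv_cancel₀ (pow_ne_zero 2 hρC)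
  have hconjc : ∀ t : ℝ, (starRingEnd ℂ) (circleMap 0 ρ t)
      = (ρ:ℂ)^2 * (circleMap 0 ρ t)⁻¹ := by
    intro t
    rw [hinvc t, ← mul_assoc, mul_inv_cancel₀ (pow_ne_zero 2 hρC), one_mul]
  -- continuity
  have cont_c : Continuous (circleMap 0 ρ) := continuous_circleMap 0 ρ
  have cont_inv : Continuous (fun t => (circleMap 0 ρ t)⁻¹) := cont_c.inv₀ hcne
  have cont_h : Continuous (fun t => h (circleMap 0 ρ t)) :=
    hh.continuousOn.comp_continuous cont_c hmem
  have cont_g : Continuous (fun t => g (circleMap 0 ρ t)) :=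
    hg.continuousOn.comp_continuous cont_c hmem
  have cont_conj_g : Continuous (fun t => (starRingEnd ℂ) (g (circleMap 0 ρ t))) :=
    Complex.continuous_conj.comp cont_g
  have cont_F : Continuous (fun t => F (circleMap 0 ρ t)) := by
    have e : (fun t => F (circleMap 0 ρ t))
        = fun t => h (circleMap 0 ρ t) + (starRingEnd ℂ) (g (circleMap 0 ρ t)) :=
      funext fun t => hF _ (hmem t)
    rw [e]; exact cont_h.add cont_conj_g
  -- the three integrals of F over the circle
  have A1 : ∫ t in (0:ℝ)..(2*Real.pi), (circleMap 0 ρ t)⁻¹ * F (circleMap 0 ρ t)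
      = 2*Real.pi * deriv h 0 := by
    have e : ∀ t : ℝ, (circleMap 0 ρ t)⁻¹ * F (circleMap 0 ρ t)
        = (circleMap 0 ρ t)⁻¹ * h (circleMap 0 ρ t)
          + ((ρ:ℂ)^2)⁻¹ * (starRingEnd ℂ) (circleMap 0 ρ t * g (circleMap 0 ρ t)) := by
      intro t
      rw [hF _ (hmem t), map_mul, mul_add, hinvc t]
      ring
    have cont_k2 : Continuous fun t : ℝ =>
        ((ρ:ℂ)^2)⁻¹ * (starRingEnd ℂ) (circleMap 0 ρ t * g (circleMap 0 ρ t)) :=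
      continuous_const.mul (Complex.continuous_conj.comp (cont_c.mul cont_g))
    simp only [e]
    rw [intervalIntegral.integral_add (f := fun t => (circleMap 0 ρ t)⁻¹ * h (circleMap 0 ρ t)) ((cont_inv.mul cont_h).intervalIntegrable _ _)
      (cont_k2.intervalIntegrable _ _)]
    rw [intervalIntegral.integral_const_mul, int_conj (f := fun t => circleMap 0 ρ t * g (circleMap 0 ρ t)) (cont_c.mul cont_g),
      int_circle_id hg h0 h1, int_circle_inv hh h0 h1]
    simp
  have A0 : ∫ t in (0:ℝ)..(2*Real.pi), F (circleMap 0 ρ t) = 2*Real.pi * F 0 := by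
    have e : ∀ t : ℝ, F (circleMap 0 ρ t)
        = h (circleMap 0 ρ t) + (starRingEnd ℂ) (g (circleMap 0 ρ t)) :=
      fun t => hF _ (hmem t)
    simp only [e]
    rw [intervalIntegral.integral_add (cont_h.intervalIntegrable _ _)
      (cont_conj_g.intervalIntegrable _ _), int_conj cont_g,
      int_circle_const hh h0 h1, int_circle_const hg h0 h1,
      hF 0 (mem_ball_self one_pos)]
    simp only [map_mul, Complex.conj_ofReal, map_ofNat]
    ring
  have Am1 : ∫ t in (0:ℝ)..(2*Real.pi), circleMap 0 ρ t * F (circleMap 0 ρ t)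
      = 2*Real.pi * (ρ:ℂ)^2 * (starRingEnd ℂ) (deriv g 0) := by
    have e : ∀ t : ℝ, circleMap 0 ρ t * F (circleMap 0 ρ t)
        = circleMap 0 ρ t * h (circleMap 0 ρ t)
          + (ρ:ℂ)^2 * (starRingEnd ℂ) ((circleMap 0 ρ t)⁻¹ * g (circleMap 0 ρ t)) := by
      intro t
      rw [hF _ (hmem t), mul_add, map_mul, map_inv₀, hconjc t, mul_inv, inv_inv]
      congr 1
      field_simp
    have cont_k2 : Continuous fun t : ℝ =>
        (ρ:ℂ)^2 * (starRingEnd ℂ) ((circleMap 0 ρ t)⁻¹ * g (circleMap 0 ρ t)) :=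
      continuous_const.mul (Complex.continuous_conj.comp (cont_inv.mul cont_g))
    simp only [e]
    rw [intervalIntegral.integral_add (f := fun t => circleMap 0 ρ t * h (circleMap 0 ρ t)) ((cont_c.mul cont_h).intervalIntegrable _ _)
      (cont_k2.intervalIntegrable _ _)]
    rw [intervalIntegral.integral_const_mul, int_conj (f := fun t => (circleMap 0 ρ t)⁻¹ * g (circleMap 0 ρ t)) (cont_inv.mul cont_g),
      int_circle_id hh h0 h1, int_circle_inv hg h0 h1]
    simp only [map_mul, Complex.conj_ofReal, map_ofNat]
    ring
    -- unimodular constants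
  obtain ⟨α, hα1, hα2⟩ := exists_unit (F 0)
  obtain ⟨β, hβ1, hβ2⟩ := exists_unit (α * deriv h 0)
  have hβ2' : β * (α * deriv h 0) = ((‖deriv h 0‖ : ℝ) : ℂ) := by
    rw [hβ2, norm_mul, hα1, one_mul]
  set r : ℝ := ‖F 0‖ with hr
  set w : ℝ → ℂ := fun t => β * (ρ:ℂ) * (circleMap 0 ρ t)⁻¹ with hw
  have hw_abs : ∀ t, ‖w t‖ = 1 := by
    intro t
    simp only [hw]
    rw [norm_mul, norm_mul, norm_inv, hβ1, habs_c t, Complex.norm_real, Real.norm_eq_abs, _root_.abs_of_pos h0]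
    field_simp
  have hw_conj : ∀ t, (starRingEnd ℂ) (w t)
      = (starRingEnd ℂ) β * (ρ:ℂ)⁻¹ * circleMap 0 ρ t := by
    intro t
    simp only [hw]
    rw [map_mul, map_mul, Complex.conj_ofReal, map_inv₀, hconjc t, mul_inv, inv_inv]
    field_simp
  have cont_w : Continuous w := continuous_const.mul cont_inv
  set M : ℝ → ℂ := fun t => w t + 2*(r:ℂ) + (r:ℂ)^2 * (starRingEnd ℂ) (w t) with hM
  have cont_M : Continuous M :=
    (cont_w.add continuous_const).add
      (continuous_const.mul (Complex.continuous_conj.comp cont_w))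
  set J : ℂ := ∫ t in (0:ℝ)..(2*Real.pi), M t * F (circleMap 0 ρ t) with hJdef
  have Jval : J = 2*Real.pi * ((ρ:ℂ) * (β * deriv h 0) + 2*(r:ℂ)*(F 0)
      + (r:ℂ)^2*(ρ:ℂ)*((starRingEnd ℂ) β * (starRingEnd ℂ) (deriv g 0))) := by
    have e : ∀ t : ℝ, M t * F (circleMap 0 ρ t)
        = (β * (ρ:ℂ)) * ((circleMap 0 ρ t)⁻¹ * F (circleMap 0 ρ t))
          + (2*(r:ℂ)) * F (circleMap 0 ρ t)
          + ((r:ℂ)^2 * ((starRingEnd ℂ) β * (ρ:ℂ)⁻¹))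
              * (circleMap 0 ρ t * F (circleMap 0 ρ t)) := by
      intro t
      simp only [hM]
      rw [hw_conj t]
      simp only [hw]
      ring
    rw [hJdef]
    simp only [e]
    erw [intervalIntegral.integral_add
      (((continuous_const.mul (cont_inv.mul cont_F)).add
        (continuous_const.mul cont_F)).intervalIntegrable _ _)
      ((continuous_const.mul (cont_c.mul cont_F)).intervalIntegrable _ _),
      intervalIntegral.integral_add
        ((continuous_const.mul (cont_inv.mul cont_F)).intervalIntegrable _ _)
        ((continuous_const.mul cont_F).intervalIntegrable _ _),
      intervalIntegral.integral_const_mul, intervalIntegral.integral_const_mul,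
      intervalIntegral.integral_const_mul, A1, A0, Am1]
    field_simp
  have intw : ∫ t in (0:ℝ)..(2*Real.pi), w t = 0 := by
    have e : ∀ t : ℝ, w t
        = (β * (ρ:ℂ)) * ((circleMap 0 ρ t)⁻¹ * (fun _ : ℂ => (1:ℂ)) (circleMap 0 ρ t)) := by
      intro t; simp [hw]
    simp only [e]
    rw [intervalIntegral.integral_const_mul,
      int_circle_inv (differentiableOn_const 1) h0 h1]
    simp
  have normM : ∀ t : ℝ, ‖M t‖ = 1 + r^2 + 2*r*(w t).re := by
    intro t
    have := absM (hw_abs t) r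
    simpa [hM] using this
  have intMnorm : ∫ t in (0:ℝ)..(2*Real.pi), ‖M t‖ = 2*Real.pi*(1+r^2) := by
    have cwre : Continuous fun t : ℝ => (w t).re := Complex.continuous_re.comp cont_w
    simp only [normM]
    erw [intervalIntegral.integral_add (intervalIntegrable_const)
      ((continuous_const.mul cwre).intervalIntegrable _ _),
      intervalIntegral.integral_const_mul, int_re cont_w, intw]
    simp [intervalIntegral.integral_const]
    ring
  have Jbound : ‖J‖ ≤ 2*Real.pi*(1+r^2) := by
    rw [hJdef]
    have hb : ∀ᵐ t ∂MeasureTheory.volume, t ∈ Ioc (0:ℝ) (2*Real.pi) →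
        ‖M t * F (circleMap 0 ρ t)‖ ≤ ‖M t‖ := by
      refine MeasureTheory.ae_of_all _ (fun t _ => ?_)
      rw [norm_mul]
      exact mul_le_of_le_one_right (norm_nonneg _) (hmap _ (hmem t)).le
    have cabsM : Continuous fun t : ℝ => ‖M t‖ := continuous_norm.comp cont_M
    refine le_trans (intervalIntegral.norm_integral_le_of_norm_le (by positivity) hb
      (cabsM.intervalIntegrable _ _)) ?_
    exact le_of_eq intMnorm
  -- putting it together
  have hr0 : (0:ℝ) ≤ r := norm_nonneg _
  have hr1 : r < 1 := by
    have := hmap 0 (mem_ball_self one_pos)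
    rw [hr]; exact this
  have hb0 : (0:ℝ) ≤ ‖deriv g 0‖ := norm_nonneg _
  have E : α * J = ((2*Real.pi*(ρ*‖deriv h 0‖ + 2*r^2) : ℝ) : ℂ)
      + ((2*Real.pi*r^2*ρ : ℝ) : ℂ)
        * (α * (starRingEnd ℂ) β * (starRingEnd ℂ) (deriv g 0)) := by
    rw [Jval]
    push_cast
    linear_combination (2*(Real.pi:ℂ)*(ρ:ℂ)) * hβ2' + (4*(Real.pi:ℂ)*(r:ℂ)) * hα2
  have Ere : (α * J).re = 2*Real.pi*(ρ*‖deriv h 0‖ + 2*r^2)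
      + (2*Real.pi*r^2*ρ) * (α * (starRingEnd ℂ) β * (starRingEnd ℂ) (deriv g 0)).re := by
    rw [E, Complex.add_re, Complex.ofReal_re, Complex.re_ofReal_mul]
  have hzre : -(‖deriv g 0‖)
      ≤ (α * (starRingEnd ℂ) β * (starRingEnd ℂ) (deriv g 0)).re := by
    have habsz : ‖α * (starRingEnd ℂ) β * (starRingEnd ℂ) (deriv g 0)‖
        = ‖deriv g 0‖ := by
      rw [norm_mul, norm_mul, hα1, Complex.norm_conj, Complex.norm_conj, hβ1, one_mul, one_mul]
    calc -(‖deriv g 0‖)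
        = -(‖α * (starRingEnd ℂ) β * (starRingEnd ℂ) (deriv g 0)‖) := by rw [habsz]
      _ ≤ _ := le_trans (neg_le_neg (Complex.abs_re_le_norm _)) (neg_abs_le _)
  have hReJ : (α * J).re ≤ 2*Real.pi*(1+r^2) := by
    refine le_trans (Complex.re_le_norm _) ?_
    rw [norm_mul, hα1, one_mul]
    exact Jbound
  have lin : 2*Real.pi*(ρ*‖deriv h 0‖ + 2*r^2)
      - (2*Real.pi*r^2*ρ) * ‖deriv g 0‖ ≤ 2*Real.pi*(1+r^2) := by
    have hc : (0:ℝ) ≤ 2*Real.pi*r^2*ρ := by positivity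
    nlinarith [mul_le_mul_of_nonneg_left hzre hc, Ere ▸ hReJ]
  have main : ρ*‖deriv h 0‖ + 2*r^2 - r^2*ρ*‖deriv g 0‖ ≤ 1+r^2 := by
    have h2π : (0:ℝ) < 2*Real.pi := by positivity
    rw [← mul_le_mul_iff_right₀ h2π]
    nlinarith [lin]
  nlinarith [main, mul_nonneg (mul_nonneg h0.le hb0) (by nlinarith : (0:ℝ) ≤ 1 - r^2)]

end

open Metric Set

/-- Schwarz–Pick type inequality at the origin for a `K`-quasiregular
harmonic self-map `F = h + conj g` of the unit disk. -/
theorem quasiregular_harmonic_bound_at_origin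
    (K : ℝ) (hK : 1 ≤ K) (F h g : ℂ → ℂ)
    (hh : DifferentiableOn ℂ h (ball (0:ℂ) 1))
    (hg : DifferentiableOn ℂ g (ball (0:ℂ) 1))
    (hF : ∀ z ∈ ball (0:ℂ) 1, F z = h z + (starRingEnd ℂ) (g z))
    (hmap : ∀ z ∈ ball (0:ℂ) 1, ‖F z‖ < 1)
    (hsense : ∀ z ∈ ball (0:ℂ) 1,
      0 < ‖deriv h z‖ - ‖deriv g z‖)
    (hqr : ∀ z ∈ ball (0:ℂ) 1,
      ‖deriv h z‖ + ‖deriv g z‖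
        ≤ K * (‖deriv h z‖ - ‖deriv g z‖)) :
    ‖deriv h 0‖ + ‖deriv g 0‖ ≤ K * (1 - (‖F 0‖)^2) := by
  have h0mem : (0:ℂ) ∈ ball (0:ℂ) 1 := mem_ball_self one_pos
  set a : ℝ := ‖deriv h 0‖ - ‖deriv g 0‖ with ha
  have lim : a ≤ 1 - (‖F 0‖)^2 := by
    have t1 : Filter.Tendsto (fun ρ : ℝ => ρ * a) (nhdsWithin 1 (Iio 1)) (nhds a) := by
      have t0 : Filter.Tendsto (fun ρ : ℝ => ρ * a) (nhds 1) (nhds (1 * a)) :=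
        (continuous_id.mul continuous_const).tendsto 1
      rw [one_mul] at t0
      exact t0.mono_left nhdsWithin_le_nhds
    refine le_of_tendsto t1 ?_
    have hIoo : Ioo (0:ℝ) 1 ∈ nhdsWithin (1:ℝ) (Iio 1) :=
      Ioo_mem_nhdsLT_of_mem ⟨one_pos, le_refl 1⟩
    exact Filter.eventually_of_mem hIoo (fun ρ hρ => core hh hg hF hmap hρ.1 hρ.2)
  have hK0 : (0:ℝ) ≤ K := le_trans zero_le_one hK
  calc ‖deriv h 0‖ + ‖deriv g 0‖ ≤ K * a := hqr 0 h0mem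
    _ ≤ K * (1 - (‖F 0‖)^2) := mul_le_mul_of_nonneg_left lim hK0
end
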